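/- arXiv:1608.06810 — 14 statements merged into one kernel-verified Lean document; each statement's English description precedes it below -/
import Mathlib

section
/- Every generalized pentagonal number c ≥ 5 can be written as c = 2a + b where a and b are generalized pentagonal numbers with a < c and b < c. -/
def IsGenPentagonal (c : ℤ) : Prop := ∃ n : ℤ, 2 * c = n * (3 * n - 1)

/-!
Write `c = n(3n - 1)/2` and `Z = 6n - 1`, so that `Z² = 24c + 1`. For `y` prime to 6, `y² - 1` is
`24x` with `x` generalized pentagonal, so it suffices to write `Z² + 2 = s² + 2t²` with `s, t` prime
to 6 and `t² ≠ 1`, and to take `24a + 1 = t²`, `24b + 1 = s²`.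

In `ℤ[√-2]` we have `3 = ρ ρ̄` with `ρ = 1 + √-2`. Write `Z + √-2 = ρ̄ᵏ e` with `ρ̄ ∤ e`. Then
`s + t√-2 = ρᵏ e` has the same norm, and `ρ̄ ∤ ρᵏ e` makes `s` and `t` prime to 3. As `ρ̄` divides
`±(Z + √-2)`, the case `t = ±1` means `ρᵏ e = ±(Z - √-2) = ±ρᵏ ē`, so `e = ±ē`: either `Z` is
even, or `e = ±1` and `Z² + 2 = 3ᵏ`. The last equation forces `k ≤ 3`: for odd `k = 2j + 1`,
`(|Z|, 3ʲ)` solves `x² - 3y² = -2`, so `2ⁱ 3ʲ = Im (1 + √3)²ⁱ⁺¹` for some `i`, and lifting the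
exponent gives `3ʲ ∣ 2i + 1`, which the growth of the Pell solutions only allows for `j ≤ 1`.
-/

open Zsqrtd

theorem exists_isGenPentagonal_of_odd_of_not_three_dvd {x : ℤ} (h2 : Odd x) (h3 : ¬ 3 ∣ x) :
    ∃ a, IsGenPentagonal a ∧ 24 * a + 1 = x ^ 2 := by
  obtain ⟨m, hm⟩ : ∃ m, x = 6 * m - 1 ∨ x = 1 - 6 * m := by
    rw [Int.odd_iff] at h2
    rcases (by omega : x % 6 = 1 ∨ x % 6 = 5) with h | h
    · exact ⟨(1 - x) / 6, by omega⟩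
    · exact ⟨(x + 1) / 6, by omega⟩
  obtain ⟨u, hu⟩ := Int.even_mul_pred_self m
  refine ⟨u + m ^ 2, ⟨m, by linear_combination -hu⟩, ?_⟩
  rcases hm with rfl | rfl <;> linear_combination -12 * hu

theorem odd_of_sq_add_two_mul_sq_eq {s t Z : ℤ} (hZ : Odd Z) (h : s ^ 2 + 2 * t ^ 2 = Z ^ 2 + 2) :
    Odd s ∧ Odd t := by
  have hs : Odd s := by
    have : Odd (s ^ 2 + 2 * t ^ 2) := h ▸ hZ.pow.add_even even_two
    simpa [parity_simps] using this
  refine ⟨hs, Int.not_even_iff_odd.1 fun ⟨v, hv⟩ => ?_⟩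
  have := Int.eight_dvd_sq_sub_one_of_odd hs
  have := Int.eight_dvd_sq_sub_one_of_odd hZ
  rw [hv, show 2 * (v + v) ^ 2 = 8 * v ^ 2 by ring] at h
  omega

def oneAddSqrtThree : ℤ√3 := ⟨1, 1⟩

lemma cast_oneAddSqrtThree_pow (n : ℕ) :
    ((oneAddSqrtThree ^ n).re : ZMod 3) = 1 ∧ ((oneAddSqrtThree ^ n).im : ZMod 3) = n := by
  induction n with
  | zero => simp
  | succ n ih =>
    rw [pow_succ, re_mul, im_mul]
    push_cast [ih.1, ih.2]
    simp only [oneAddSqrtThree, Int.cast_one, show (3 : ZMod 3) = 0 from rfl]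
    exact ⟨by ring, by ring⟩

lemma im_pow_three {d : ℤ} (x : ℤ√d) : (x ^ 3).im = x.im * (3 * x.re ^ 2 + d * x.im ^ 2) := by
  simp only [pow_succ, pow_zero, one_mul, re_mul, im_mul]
  ring

theorem three_pow_dvd_of_three_pow_dvd_im (m : ℕ) {n : ℕ}
    (h : (3 : ℤ) ^ m ∣ (oneAddSqrtThree ^ n).im) : (3 : ℤ) ^ m ∣ n := by
  induction m generalizing n with
  | zero => exact one_dvd _
  | succ m ih =>
    have h3 : (3 : ℤ) ∣ (oneAddSqrtThree ^ n).im := (dvd_pow_self 3 m.succ_ne_zero).trans h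
    obtain ⟨n, rfl⟩ : 3 ∣ n := by
      rw [← ZMod.natCast_eq_zero_iff, ← (cast_oneAddSqrtThree_pow n).2,
        ZMod.intCast_zmod_eq_zero_iff_dvd]
      exact_mod_cast h3
    set x := oneAddSqrtThree ^ n
    have hx : ¬ (3 : ℤ) ∣ x.re ^ 2 + x.im ^ 2 := by
      intro h
      have := (ZMod.intCast_zmod_eq_zero_iff_dvd _ 3).2 h
      push_cast at this
      rw [(cast_oneAddSqrtThree_pow n).1] at this
      generalize (x.im : ZMod 3) = y at this
      revert y; decide
    have hcube : (oneAddSqrtThree ^ (3 * n)).im = 3 * (x.im * (x.re ^ 2 + x.im ^ 2)) := by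
      rw [pow_mul', im_pow_three]
      ring
    rw [hcube, pow_succ', mul_dvd_mul_iff_left three_ne_zero] at h
    have := ih (((Int.prime_three.coprime_iff_not_dvd.2 hx).pow_left).dvd_of_dvd_mul_right h)
    rw [Nat.cast_mul, pow_succ']
    exact mul_dvd_mul_left 3 this

def pellNegTwo (i : ℕ) : ℤ√3 := oneAddSqrtThree * ⟨2, 1⟩ ^ i

lemma pellNegTwo_succ (i : ℕ) : pellNegTwo (i + 1) =
    ⟨2 * (pellNegTwo i).re + 3 * (pellNegTwo i).im, (pellNegTwo i).re + 2 * (pellNegTwo i).im⟩ := by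
  rw [pellNegTwo, pow_succ, ← mul_assoc, ← pellNegTwo]
  ext <;> simp only [re_mul, im_mul] <;> ring

lemma pellNegTwo_pos (i : ℕ) : 0 < (pellNegTwo i).re ∧ 0 < (pellNegTwo i).im := by
  induction i with
  | zero => simp [pellNegTwo, oneAddSqrtThree]
  | succ i ih =>
    rw [pellNegTwo_succ]
    exact ⟨by dsimp only; omega, by dsimp only; omega⟩

lemma three_mul_le_im_pellNegTwo (i : ℕ) : 3 * (i : ℤ) ≤ (pellNegTwo i).im := by
  induction i with
  | zero => simp [pellNegTwo, oneAddSqrtThree]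
  | succ i ih =>
    have := pellNegTwo_pos i
    rw [pellNegTwo_succ]
    dsimp only
    omega

lemma oneAddSqrtThree_pow_two_mul_add_one (i : ℕ) :
    oneAddSqrtThree ^ (2 * i + 1) = ((2 ^ i : ℤ) : ℤ√3) * pellNegTwo i := by
  have hsq : oneAddSqrtThree ^ 2 = ((2 : ℤ) : ℤ√3) * ⟨2, 1⟩ := by
    ext <;> simp [oneAddSqrtThree, pow_two]
  rw [pow_succ, pow_mul, hsq, mul_pow, pellNegTwo]
  push_cast
  ring

theorem exists_pellNegTwo_eq {x y : ℤ} (h : x ^ 2 - 3 * y ^ 2 = -2) (hx : 0 < x) (hy : 0 < y) :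
    ∃ i, pellNegTwo i = ⟨x, y⟩ := by
  rcases (show y = 1 ∨ 1 < y by omega) with rfl | hy2
  · obtain rfl : x = 1 := by nlinarith
    exact ⟨0, by simp [pellNegTwo, oneAddSqrtThree]⟩
  · have hyx : y < x := by nlinarith
    have hx2y : x < 2 * y := by nlinarith
    obtain ⟨i, hi⟩ := exists_pellNegTwo_eq (x := 2 * x - 3 * y) (y := 2 * y - x)
      (by linear_combination h) (by nlinarith) (by omega)
    refine ⟨i + 1, ?_⟩
    rw [pellNegTwo_succ, hi]
    ext <;> dsimp only <;> ring
termination_by y.toNat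
decreasing_by omega

theorem le_three_of_sq_add_two_eq_three_pow {x : ℤ} {k : ℕ} (h : x ^ 2 + 2 = 3 ^ k) : k ≤ 3 := by
  have hx : Odd x := by
    have : Odd (x ^ 2 + 2) := h ▸ Odd.pow (by decide)
    simpa [parity_simps] using this
  obtain ⟨j, rfl⟩ : Odd k := by
    refine Nat.not_even_iff_odd.1 fun ⟨j, hj⟩ => ?_
    have h9 : (3 : ℤ) ^ k ≡ 1 [ZMOD 8] := by
      simpa [hj, ← two_mul, pow_mul] using (show (9 : ℤ) ≡ 1 [ZMOD 8] by decide).pow j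
    have := Int.eight_dvd_sq_sub_one_of_odd hx
    rw [← h, Int.ModEq] at h9
    omega
  have hpell : |x| ^ 2 - 3 * (3 ^ j) ^ 2 = -2 := by rw [sq_abs]; linear_combination h
  obtain ⟨i, hi⟩ := exists_pellNegTwo_eq hpell (abs_pos.2 (by rintro rfl; simp at hx))
    (by positivity)
  have h3j : (3 : ℤ) ^ j ≤ 2 * i + 1 := by
    have : (3 : ℤ) ^ j ∣ (oneAddSqrtThree ^ (2 * i + 1)).im := by
      rw [oneAddSqrtThree_pow_two_mul_add_one, im_mul, hi, re_intCast, im_intCast, zero_mul,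
        add_zero]
      exact dvd_mul_left _ _
    exact Int.le_of_dvd (by positivity) (by exact_mod_cast three_pow_dvd_of_three_pow_dvd_im j this)
  have hi3 := three_mul_le_im_pellNegTwo i
  rw [hi] at hi3
  have : (3 : ℤ) ^ j ≤ 3 ^ 1 := by dsimp only at hi3; omega
  have := (pow_le_pow_iff_right₀ (by norm_num : (1 : ℤ) < 3)).1 this
  omega

lemma norm_eq_one_of_eq_mul_of_star_eq {d Z : ℤ} {x e : ℤ√d} (h : ⟨Z, 1⟩ = x * e)
    (he : star e = e) : e.norm = 1 := by
  have him : e.im = 0 := by have := congrArg im he; rw [im_star] at this; omega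
  have hre : x.im * e.re = 1 := by simpa [him] using (congrArg im h).symm
  rcases Int.eq_one_or_neg_one_of_mul_eq_one' hre with ⟨-, h1⟩ | ⟨-, h1⟩ <;>
    simp [norm_def, him, h1]

lemma dvd_norm_of_star_eq_neg {d : ℤ} {e : ℤ√d} (he : star e = -e) : d ∣ e.norm := by
  have hre : e.re = 0 := by have := congrArg re he; rw [re_star, re_neg] at this; omega
  exact ⟨-(e.im * e.im), by rw [norm_def, hre]; ring⟩

lemma not_three_dvd_of_three_dvd_sq_add_two_mul_sq {s t : ℤ} (h : 3 ∣ s ^ 2 + 2 * t ^ 2)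
    (hst : ¬ 3 ∣ s + t) : ¬ 3 ∣ s ∧ ¬ 3 ∣ t := by
  have : 3 ∣ (s + t) * (s - t) := by
    have h' : s ^ 2 + 2 * t ^ 2 = (s + t) * (s - t) + 3 * t ^ 2 := by ring
    rw [h'] at h
    exact (Int.dvd_add_left (dvd_mul_right 3 _)).1 h
  have := (Int.prime_three.dvd_or_dvd this).resolve_left hst
  omega

instance : NoZeroDivisors (ℤ√(-2)) where
  eq_zero_or_eq_zero_of_mul_eq_zero {x y} h := by
    have := congrArg norm h
    rwa [Zsqrtd.norm_mul, norm_zero, mul_eq_zero, norm_eq_zero_iff (by norm_num),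
      norm_eq_zero_iff (by norm_num)] at this

def oneAddSqrtNegTwo : ℤ√(-2) := ⟨1, 1⟩

lemma norm_oneAddSqrtNegTwo_pow (k : ℕ) : (oneAddSqrtNegTwo ^ k).norm = 3 ^ k := by
  induction k with
  | zero => rfl
  | succ k ih => rw [pow_succ, Zsqrtd.norm_mul, ih]; rfl

lemma star_oneAddSqrtNegTwo_dvd_iff (x : ℤ√(-2)) :
    star oneAddSqrtNegTwo ∣ x ↔ 3 ∣ x.re + x.im := by
  constructor
  · rintro ⟨y, rfl⟩
    exact ⟨y.im, by simp [oneAddSqrtNegTwo, star_mk]; ring⟩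
  · rintro ⟨b, hb⟩
    exact ⟨⟨b - x.im, b⟩, by ext <;> simp [oneAddSqrtNegTwo, star_mk]; linarith⟩

lemma star_oneAddSqrtNegTwo_dvd_mul_iff (x : ℤ√(-2)) :
    star oneAddSqrtNegTwo ∣ oneAddSqrtNegTwo * x ↔ star oneAddSqrtNegTwo ∣ x := by
  rw [star_oneAddSqrtNegTwo_dvd_iff, star_oneAddSqrtNegTwo_dvd_iff]
  simp only [re_mul, im_mul, oneAddSqrtNegTwo]
  omega

lemma not_star_oneAddSqrtNegTwo_dvd_pow_mul {e : ℤ√(-2)} (he : ¬ star oneAddSqrtNegTwo ∣ e)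
    (k : ℕ) : ¬ star oneAddSqrtNegTwo ∣ oneAddSqrtNegTwo ^ k * e := by
  induction k with
  | zero => simpa using he
  | succ k ih => rwa [pow_succ', mul_assoc, star_oneAddSqrtNegTwo_dvd_mul_iff]

theorem exists_eq_star_oneAddSqrtNegTwo_pow_mul {x : ℤ√(-2)} (hx : x ≠ 0) :
    ∃ (k : ℕ) (e : ℤ√(-2)), ¬ star oneAddSqrtNegTwo ∣ e ∧ x = star oneAddSqrtNegTwo ^ k * e := by
  by_cases hd : star oneAddSqrtNegTwo ∣ x
  · obtain ⟨y, hxy⟩ := hd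
    have hy : y ≠ 0 := right_ne_zero_of_mul (hxy ▸ hx)
    have hlt : y.norm.toNat < x.norm.toNat := by
      have := (norm_eq_zero_iff (by norm_num) y).not.2 hy
      have := norm_nonneg (by norm_num) y
      rw [hxy, Zsqrtd.norm_mul, norm_conj, show oneAddSqrtNegTwo.norm = 3 from rfl]
      omega
    obtain ⟨k, e, he, rfl⟩ := exists_eq_star_oneAddSqrtNegTwo_pow_mul hy
    exact ⟨k + 1, e, he, by rw [hxy]; ring⟩
  · exact ⟨0, x, hd, by simp⟩
termination_by x.norm.toNat
decreasing_by exact hlt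

lemma oneAddSqrtNegTwo_pow_mul_ne_star {Z : ℤ} {k : ℕ} {e : ℤ√(-2)} (hZ : Odd Z)
    (hZk : Z ^ 2 + 2 ≠ 3 ^ k) (hα : ⟨Z, 1⟩ = star oneAddSqrtNegTwo ^ k * e) :
    oneAddSqrtNegTwo ^ k * e ≠ star ⟨Z, 1⟩ ∧ oneAddSqrtNegTwo ^ k * e ≠ -star ⟨Z, 1⟩ := by
  have hnorm : Z ^ 2 + 2 = 3 ^ k * e.norm := by
    rw [show Z ^ 2 + 2 = (⟨Z, 1⟩ : ℤ√(-2)).norm by simp [norm_def]; ring, hα,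
      Zsqrtd.norm_mul, ← star_pow, norm_conj, norm_oneAddSqrtNegTwo_pow]
  have hstar : star (⟨Z, 1⟩ : ℤ√(-2)) = oneAddSqrtNegTwo ^ k * star e := by
    rw [hα, star_mul, star_pow, star_star, mul_comm]
  have hρk : oneAddSqrtNegTwo ^ k ≠ 0 := pow_ne_zero _ (by decide)
  constructor
  · intro h
    rw [hstar] at h
    rw [norm_eq_one_of_eq_mul_of_star_eq hα (mul_left_cancel₀ hρk h).symm, mul_one] at hnorm
    exact hZk hnorm
  · intro h
    rw [hstar, ← mul_neg] at h
    obtain ⟨m, hm⟩ := dvd_norm_of_star_eq_neg (neg_eq_iff_eq_neg.2 (mul_left_cancel₀ hρk h)).symm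
    have h2 : (2 : ℤ) ∣ Z ^ 2 + 2 := ⟨-(3 ^ k * m), by rw [hnorm, hm]; ring⟩
    obtain ⟨z, rfl⟩ := hZ
    rw [show (2 * z + 1) ^ 2 + 2 = 2 * (2 * z ^ 2 + 2 * z + 1) + 1 by ring] at h2
    omega

theorem exists_sq_add_two_mul_sq_eq {Z : ℤ} (hZ : Odd Z) (h3 : 3 ∣ Z + 1) (h25 : 25 < Z ^ 2) :
    ∃ s t : ℤ, s ^ 2 + 2 * t ^ 2 = Z ^ 2 + 2 ∧ ¬ 3 ∣ s ∧ ¬ 3 ∣ t ∧ t ^ 2 ≠ 1 := by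
  have hα0 : (⟨Z, 1⟩ : ℤ√(-2)) ≠ 0 := fun h => by simpa using congrArg im h
  obtain ⟨k, e, he, hα⟩ := exists_eq_star_oneAddSqrtNegTwo_pow_mul hα0
  have hZk : Z ^ 2 + 2 ≠ 3 ^ k := fun h => by
    have := pow_le_pow_right₀ (by norm_num : (1 : ℤ) ≤ 3) (le_three_of_sq_add_two_eq_three_pow h)
    omega
  set β := oneAddSqrtNegTwo ^ k * e
  have hβ : ¬ 3 ∣ β.re + β.im :=
    (star_oneAddSqrtNegTwo_dvd_iff β).not.1 (not_star_oneAddSqrtNegTwo_dvd_pow_mul he k)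
  have hnormβ : β.re ^ 2 + 2 * β.im ^ 2 = Z ^ 2 + 2 := by
    have : β.norm = (⟨Z, 1⟩ : ℤ√(-2)).norm := by
      rw [hα, Zsqrtd.norm_mul, Zsqrtd.norm_mul, ← star_pow, norm_conj]
    simp only [norm_def] at this
    linear_combination this
  have h3β : 3 ∣ β.re ^ 2 + 2 * β.im ^ 2 := by
    obtain ⟨q, hq⟩ := h3
    exact ⟨3 * q ^ 2 - 2 * q + 1, by rw [hnormβ, show Z = 3 * q - 1 by omega]; ring⟩
  obtain ⟨hs3, ht3⟩ := not_three_dvd_of_three_dvd_sq_add_two_mul_sq h3β hβ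
  refine ⟨β.re, β.im, hnormβ, hs3, ht3, fun ht => ?_⟩
  have hre : β.re ^ 2 = Z ^ 2 := by linarith
  obtain ⟨hβ₁, hβ₂⟩ := oneAddSqrtNegTwo_pow_mul_ne_star hZ hZk hα
  -- `β = ±⟨Z, 1⟩` is ruled out by `3 ∣ Z + 1` and `3 ∤ β.re + β.im`
  rcases sq_eq_sq_iff_eq_or_eq_neg.1 hre with hr | hr <;>
    rcases sq_eq_sq_iff_eq_or_eq_neg.1 (ht.trans (one_pow 2).symm) with hi | hi
  · omega
  · exact hβ₁ (Zsqrtd.ext hr hi)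
  · exact hβ₂ (Zsqrtd.ext hr (hi.trans (by simp)))
  · omega

theorem genPentagonal_two_a_plus_b (c : ℤ) (hc : IsGenPentagonal c) (h5 : 5 ≤ c) :
    ∃ a b : ℤ, IsGenPentagonal a ∧ IsGenPentagonal b ∧ a < c ∧ b < c ∧ c = 2 * a + b := by
  obtain ⟨n, hn⟩ := hc
  have hZ : (6 * n - 1) ^ 2 = 24 * c + 1 := by linear_combination -12 * hn
  have hZ_odd : Odd (6 * n - 1) := ⟨3 * n - 1, by ring⟩
  obtain ⟨s, t, hst, hs3, ht3, ht1⟩ :=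
    exists_sq_add_two_mul_sq_eq hZ_odd ⟨2 * n, by ring⟩ (by omega)
  obtain ⟨hs2, ht2⟩ := odd_of_sq_add_two_mul_sq_eq hZ_odd hst
  obtain ⟨a, ha, hat⟩ := exists_isGenPentagonal_of_odd_of_not_three_dvd ht2 ht3
  obtain ⟨b, hb, hbs⟩ := exists_isGenPentagonal_of_odd_of_not_three_dvd hs2 hs3
  have hs0 : 0 < s ^ 2 := sq_pos_of_ne_zero (by omega)
  have ht0 : 0 < t ^ 2 := sq_pos_of_ne_zero (by omega)
  refine ⟨a, b, ha, hb, by linarith, by omega, by linarith⟩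
end

section
/- A generalized pentagonal number c ≥ 2 is the sum of two smaller generalized pentagonal numbers if and only if 12c + 1 is not prime. -/
lemma sq_uniq (p A B C D : ℤ) (hp : Prime p) (h1 : A^2+B^2 = p) (h2 : C^2+D^2 = p) :
    (A^2-C^2)*(A^2-D^2) = 0 := by
  have hp0 : p ≠ 0 := hp.ne_zero
  have hpp : 0 < p^2 := by positivity
  have hdvd : p ∣ (A*D-B*C)*(A*D+B*C) :=
    ⟨A^2 - C^2, by linear_combination A^2*h2 - C^2*h1⟩
  have key : ∀ E F : ℤ, E^2 + F^2 = p → p ∣ A*F - B*E → (A^2-E^2)*(A^2-F^2) = 0 := by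
    intro E F hEF hdv
    obtain ⟨k, hk⟩ := hdv
    have hb0 : p^2 = (A*E+B*F)^2 + (A*F-B*E)^2 := by
      linear_combination -(E^2+F^2)*h1 - p*hEF
    have hb : p^2 = (A*E+B*F)^2 + p^2*k^2 := by
      rw [hk] at hb0; linear_combination hb0
    have hk2 : k^2 = 0 ∨ k^2 = 1 := by
      have htri : k ≤ -2 ∨ k = -1 ∨ k = 0 ∨ k = 1 ∨ 2 ≤ k := by omega
      rcases htri with h | h | h | h | h
      · exfalso; nlinarith [sq_nonneg (A*E+B*F), sq_nonneg (k+2), sq_nonneg (k-2), hpp]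
      · right; rw [h]; ring
      · left; rw [h]; ring
      · right; rw [h]; ring
      · exfalso; nlinarith [sq_nonneg (A*E+B*F), sq_nonneg (k+2), sq_nonneg (k-2), hpp]
    rcases hk2 with hk0 | hk1
    · have hkz : k = 0 := by
        have := sq_eq_zero_iff.mp hk0; exact this
      rw [hkz, mul_zero] at hk
      have hAF : A*F = B*E := by linarith
      have h' : A^2*F^2 = B^2*E^2 := by linear_combination (A*F+B*E)*hAF
      apply mul_eq_zero.mpr; left
      have hz : p*(A^2-E^2) = 0 := by
        linear_combination E^2*h1 - A^2*hEF + h'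
      rcases mul_eq_zero.mp hz with h' | h'
      · exact absurd h' hp0
      · exact h'
    · have hsq : (A*F - B*E)^2 = p^2 := by rw [hk]; linear_combination p^2*hk1
      have hz2 : (A*E+B*F)^2 = 0 := by linarith
      have hAE : A*E + B*F = 0 := by
        exact pow_eq_zero_iff (two_ne_zero) |>.mp hz2
      have h' : A^2*E^2 = B^2*F^2 := by linear_combination (A*E - B*F)*hAE
      apply mul_eq_zero.mpr; right
      have hz : p*(A^2-F^2) = 0 := by
        linear_combination F^2*h1 - A^2*hEF + h'
      rcases mul_eq_zero.mp hz with h' | h'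
      · exact absurd h' hp0
      · exact h'
  rcases hp.dvd_mul.mp hdvd with h | h
  · exact key C D h2 h
  · have h' : p ∣ A*D - B*(-C) := by
      have : A*D - B*(-C) = A*D + B*C := by ring
      rw [this]; exact h
    have := key (-C) D (by linear_combination h2) h'
    calc (A^2-C^2)*(A^2-D^2) = (A^2-(-C)^2)*(A^2-D^2) := by ring
    _ = 0 := this

lemma nat_sum_sq : ∀ k : ℕ, (∀ q : ℕ, q.Prime → q ∣ k → ∃ a b : ℤ, a^2+b^2 = q) →
    ∃ a b : ℤ, a^2+b^2 = k := by
  intro k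
  induction k using Nat.strong_induction_on with
  | _ k ih =>
    intro hq
    rcases Nat.lt_or_ge k 2 with hk | hk
    · interval_cases k
      · exact ⟨0, 0, by norm_num⟩
      · exact ⟨1, 0, by norm_num⟩
    · set q := k.minFac with hqdef
      have hqp : q.Prime := Nat.minFac_prime (by omega)
      have hqd : q ∣ k := Nat.minFac_dvd k
      obtain ⟨a, b, hab⟩ := hq q hqp hqd
      have hlt : k / q < k := Nat.div_lt_self (by omega) hqp.two_le
      obtain ⟨cc, dd, hcd⟩ := ih (k/q) hlt (fun r hr hrd => hq r hr (hrd.trans (Nat.div_dvd_of_dvd hqd)))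
      refine ⟨a*cc - b*dd, a*dd + b*cc, ?_⟩
      have : ((k:ℤ)) = (q : ℤ) * ((k/q : ℕ) : ℤ) := by
        rw [← Nat.cast_mul, Nat.mul_div_cancel' hqd]
      rw [this, ← hab, ← hcd]; ring

lemma odd3 (u v w : ℤ) (h : u^2+v^2 = 24*w+2) : u % 2 = 1 ∧ ¬ (3:ℤ) ∣ u := by
  constructor
  · rcases Int.even_or_odd u with ⟨t, ht⟩ | ⟨t, ht⟩
    · rcases Int.even_or_odd v with ⟨s, hs⟩ | ⟨s, hs⟩
      · exfalso
        have h4 : (4:ℤ) ∣ 24*w+2 := ⟨t^2+s^2, by rw [ht, hs] at h; linarith⟩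
        omega
      · exfalso
        have h4 : (4:ℤ) ∣ 24*w+1 := ⟨t^2+s^2+s, by rw [ht, hs] at h; linarith⟩
        omega
    · omega
  · rintro ⟨t, ht⟩
    obtain ⟨s, hs⟩ : ∃ s, v = 3*s ∨ v = 3*s+1 ∨ v = 3*s+2 := ⟨v/3, by omega⟩
    rcases hs with hs | hs | hs
    · have h3 : (3:ℤ) ∣ 24*w+2 := ⟨3*t^2+3*s^2, by rw [ht, hs] at h; linarith⟩
      omega
    · have h3 : (3:ℤ) ∣ 24*w+1 := ⟨3*t^2+3*s^2+2*s, by rw [ht, hs] at h; linarith⟩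
      omega
    · have h3 : (3:ℤ) ∣ 24*w-2 := ⟨3*t^2+3*s^2+4*s, by rw [ht, hs] at h; linarith⟩
      omega

lemma param_of (u : ℤ) (h2 : u % 2 = 1) (h3 : ¬ (3:ℤ) ∣ u) : ∃ m : ℤ, u^2 = (6*m-1)^2 := by
  have h6 : u % 6 = 1 ∨ u % 6 = 5 := by omega
  rcases h6 with h | h
  · obtain ⟨t, ht⟩ : ∃ t, u = 1-6*t := ⟨(1-u)/6, by omega⟩
    exact ⟨t, by rw [ht]; ring⟩
  · obtain ⟨t, ht⟩ : ∃ t, u = 6*t-1 := ⟨(u+1)/6, by omega⟩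
    exact ⟨t, by rw [ht]⟩

lemma half_pent (m : ℤ) : ∃ b, 2*b = m*(3*m-1) := by
  rcases Int.even_or_odd m with ⟨t, ht⟩ | ⟨t, ht⟩
  · exact ⟨t*(6*t-1), by rw [ht]; ring⟩
  · exact ⟨(2*t+1)*(3*t+1), by rw [ht]; ring⟩

set_option maxHeartbeats 1600000 in
theorem genPentagonal_a_plus_b (c : ℤ) (hc : IsGenPentagonal c) (h2 : 2 ≤ c) :
    (∃ a b : ℤ, IsGenPentagonal a ∧ IsGenPentagonal b ∧ a < c ∧ b < c ∧ c = a + b)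
      ↔ ¬ Prime (12 * c + 1) := by
  obtain ⟨n, hn⟩ := hc
  have hx : (6*n-1)^2 + 1 = 2*(12*c+1) := by linear_combination -12*hn
  constructor
  · rintro ⟨a, b, ⟨m, hm⟩, ⟨k, hk⟩, hac, hbc, hab⟩ hNp
    have ha1 : 1 ≤ a := by omega
    have hb1 : 1 ≤ b := by omega
    have hv : (6*m-1)^2 = 24*a+1 := by linear_combination -12*hm
    have hu : (6*k-1)^2 = 24*b+1 := by linear_combination -12*hk
    have h1 : (3*n)^2 + (3*n-1)^2 = 12*c+1 := by linear_combination -6*hn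
    have h2' : (3*(k+m)-1)^2 + (3*(k-m))^2 = 12*c+1 := by
      linear_combination -6*hm - 6*hk - 12*hab
    have key := sq_uniq (12*c+1) (3*n) (3*n-1) (3*(k+m)-1) (3*(k-m)) hNp h1 h2'
    have h3 : ((3*(k+m)-1)^2 - (3*(k-m))^2)^2 = ((3*n)^2 - (3*n-1)^2)^2 := by
      rcases mul_eq_zero.mp key with hAC | hAD
      · have hC : (3*(k+m)-1)^2 = (3*n)^2 := by linarith
        have hD : (3*(k-m))^2 = (3*n-1)^2 := by linarith
        rw [hC, hD]
      · have hD : (3*(k-m))^2 = (3*n)^2 := by linarith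
        have hC : (3*(k+m)-1)^2 = (3*n-1)^2 := by linarith
        rw [hC, hD]; ring
    have huv : (6*k-1)^2 * (6*m-1)^2 = (6*n-1)^2 := by linear_combination h3
    have hzero : ((6*k-1)^2 - 1) * ((6*m-1)^2 - 1) = 0 := by
      linear_combination huv - hu - hv + hx + 24*hab
    have h576 : (24*b)*(24*a) = 0 := by
      linear_combination hzero - ((6*m-1)^2-1)*hu - 24*b*hv
    nlinarith [h576, ha1, hb1]
  · intro hNp
    obtain ⟨M, hMN⟩ : ∃ M : ℕ, (M:ℤ) = 12*c+1 := ⟨(12*c+1).toNat, Int.toNat_of_nonneg (by linarith)⟩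
    have hM : ¬ Nat.Prime M := by
      intro h
      exact hNp (by rw [← hMN]; exact Nat.prime_iff_prime_int.mp h)
    have hM2 : 2 ≤ M := by omega
    obtain ⟨d, hd, hd2, hdlt⟩ := Nat.exists_dvd_of_not_prime2 hM2 hM
    obtain ⟨e, he⟩ := hd
    have he2 : 2 ≤ e := by
      rcases Nat.lt_or_ge e 2 with h | h
      · interval_cases e <;> omega
      · exact h
    have hde : (d:ℤ)*(e:ℤ) = 12*c+1 := by rw [← hMN, he]; push_cast; ring
    have hModd : ¬ (2:ℤ) ∣ 12*c+1 := by omega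
    have hdodd : ¬ (2:ℤ) ∣ (d:ℤ) := by
      rintro ⟨t, ht⟩
      exact hModd ⟨t*(e:ℤ), by rw [← hde, ht]; ring⟩
    have heodd : ¬ (2:ℤ) ∣ (e:ℤ) := by
      rintro ⟨t, ht⟩
      exact hModd ⟨(d:ℤ)*t, by rw [← hde, ht]; ring⟩
    have hqss : ∀ q : ℕ, q.Prime → q ∣ M → ∃ a b : ℤ, a^2+b^2 = q := by
      intro q hq hqd
      have h2d : (q:ℤ) ∣ 12*c+1 := hMN ▸ Int.natCast_dvd_natCast.mpr hqd
      have hx2 : (q:ℤ) ∣ (6*n-1)^2+1 := by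
        rw [hx]; exact Dvd.dvd.mul_left h2d 2
      haveI : Fact q.Prime := ⟨hq⟩
      have hsq : IsSquare (-1 : ZMod q) := by
        have h0 : (((6*n-1)^2+1 : ℤ) : ZMod q) = 0 :=
          (ZMod.intCast_zmod_eq_zero_iff_dvd _ _).mpr hx2
        push_cast at h0
        refine ⟨((6*n-1 : ℤ) : ZMod q), ?_⟩
        push_cast
        linear_combination -h0
      have h43 : q % 4 ≠ 3 := ZMod.exists_sq_eq_neg_one_iff.mp hsq
      obtain ⟨a, b, hab⟩ := Nat.Prime.sq_add_sq (p := q) h43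
      exact ⟨a, b, by exact_mod_cast hab⟩
    obtain ⟨p, q, hpq⟩ := nat_sum_sq d (fun r hr hrd => hqss r hr (hrd.trans ⟨e, he⟩))
    obtain ⟨r, s, hrs⟩ := nat_sum_sq e (fun t ht htd => hqss t ht (htd.trans ⟨d, by rw [he]; ring⟩))
    obtain ⟨P, Q, hPQ, hQ0, hQP⟩ : ∃ P Q : ℤ, P^2+Q^2 = (d:ℤ) ∧ 0 ≤ Q ∧ Q ≤ P := by
      rcases le_total |p| |q| with h | h
      · exact ⟨|q|, |p|, by rw [sq_abs, sq_abs]; linarith, abs_nonneg _, h⟩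
      · exact ⟨|p|, |q|, by rw [sq_abs, sq_abs]; exact hpq, abs_nonneg _, h⟩
    obtain ⟨R, S, hRS, hS0, hSR⟩ : ∃ R S : ℤ, R^2+S^2 = (e:ℤ) ∧ 0 ≤ S ∧ S ≤ R := by
      rcases le_total |r| |s| with h | h
      · exact ⟨|s|, |r|, by rw [sq_abs, sq_abs]; linarith, abs_nonneg _, h⟩
      · exact ⟨|r|, |s|, by rw [sq_abs, sq_abs]; exact hrs, abs_nonneg _, h⟩
    have hPneQ : Q < P := by
      rcases lt_or_eq_of_le hQP with h | h
      · exact h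
      · exact absurd ⟨Q^2, by rw [← hPQ, h]; ring⟩ hdodd
    have hRneS : S < R := by
      rcases lt_or_eq_of_le hSR with h | h
      · exact h
      · exact absurd ⟨S^2, by rw [← hRS, h]; ring⟩ heodd
    have hd3 : 3 ≤ (d:ℤ) := by
      have h4 : d ≠ 2 := by rintro rfl; exact hdodd ⟨1, by norm_num⟩
      omega
    have he3 : 3 ≤ (e:ℤ) := by
      have h4 : e ≠ 2 := by rintro rfl; exact heodd ⟨1, by norm_num⟩
      omega
    have hP2 : 2 ≤ P := by
      by_contra h
      push_neg at h
      have hP1 : P = 1 := by omega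
      have hQ1 : Q = 0 := by omega
      rw [hP1, hQ1] at hPQ
      norm_num at hPQ
      omega
    have hR2 : 2 ≤ R := by
      by_contra h
      push_neg at h
      have hR1 : R = 1 := by omega
      have hS1 : S = 0 := by omega
      rw [hR1, hS1] at hRS
      norm_num at hRS
      omega
    have hgood : ∃ A B : ℤ, A^2+B^2 = 12*c+1 ∧ (A^2-B^2)^2 ≠ (6*n-1)^2 := by
      by_contra hbad
      push_neg at hbad
      have hfin : ∀ G H I : ℤ, 2 ≤ G → G^2 * (H^2 + I^2) = 12*c+1 →
          ((G*H)^2 - (G*I)^2)^2 = (6*n-1)^2 → False := by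
        intro G H I hG hGHI hbad3
        have hdvd1 : G^2 ∣ (6*n-1)^2 := ⟨G^2*(H^2-I^2)^2, by linear_combination -hbad3⟩
        have hdvd2 : G^2 ∣ (6*n-1)^2+1 := ⟨2*(H^2+I^2), by linear_combination hx - 2*hGHI⟩
        have hone : G^2 ∣ 1 := by
          have := dvd_sub hdvd2 hdvd1
          simpa using this
        have h5 := Int.le_of_dvd one_pos hone
        nlinarith [h5, hG, sq_nonneg (G-2)]
      have hr1 : (P*R+Q*S)^2 + (P*S-Q*R)^2 = 12*c+1 := by
        linear_combination (R^2+S^2)*hPQ + (d:ℤ)*hRS + hde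
      have hr2 : (P*R-Q*S)^2 + (P*S+Q*R)^2 = 12*c+1 := by
        linear_combination (R^2+S^2)*hPQ + (d:ℤ)*hRS + hde
      have hb1 := hbad _ _ hr1
      have hb2 := hbad _ _ hr2
      have hXY : (4*P*R)*(Q*S) * (4*((P^2-Q^2)*(R^2-S^2))) = 0 := by
        linear_combination hb1 - hb2
      clear hb1 hb2
      have hQS : Q*S = 0 := by
        clear hbad hr1 hr2
        rcases mul_eq_zero.mp hXY with h' | h'
        · rcases mul_eq_zero.mp h' with h'' | h''
          · exfalso
            have hPR : 0 < P*R := mul_pos (by linarith) (by linarith)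
            linarith
          · exact h''
        · exfalso
          have h1 : 0 < P^2-Q^2 := by
            have h := mul_self_lt_mul_self hQ0 hPneQ
            rw [← pow_two, ← pow_two] at h
            linarith
          have h2' : 0 < R^2-S^2 := by
            have h := mul_self_lt_mul_self hS0 hRneS
            rw [← pow_two, ← pow_two] at h
            linarith
          have hXpos : 0 < (P^2-Q^2)*(R^2-S^2) := mul_pos h1 h2'
          linarith
      rcases mul_eq_zero.mp hQS with hQ | hS
      · have hGHI : P^2*(R^2+S^2) = 12*c+1 := by
          linear_combination (R^2+S^2)*hPQ + (d:ℤ)*hRS + hde - (R^2+S^2)*Q*hQ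
        exact hfin P R S hP2 hGHI (hbad (P*R) (P*S) (by linear_combination hGHI))
      · have hGHI : R^2*(P^2+Q^2) = 12*c+1 := by
          linear_combination (P^2+Q^2)*hRS + (e:ℤ)*hPQ + hde - (P^2+Q^2)*S*hS
        exact hfin R P Q hR2 hGHI (hbad (R*P) (R*Q) (by linear_combination hGHI))
    obtain ⟨A, B, hAB, hABx⟩ := hgood
    have huv2 : (A+B)^2 + (A-B)^2 = 24*c+2 := by linear_combination 2*hAB
    have hx2 : (6*n-1)^2 = 24*c+1 := by linear_combination hx
    have hune : (A+B)^2 ≠ 1 := by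
      intro h
      exact hABx (by linear_combination (A-B)^2*h + huv2 - hx2 - h)
    have hvne : (A-B)^2 ≠ 1 := by
      intro h
      exact hABx (by linear_combination (A+B)^2*h + huv2 - hx2 - h)
    have hmod1 := odd3 (A+B) (A-B) c huv2
    have hmod2 := odd3 (A-B) (A+B) c (by linear_combination huv2)
    obtain ⟨m1, hm1⟩ := param_of (A+B) hmod1.1 hmod1.2
    obtain ⟨m2, hm2⟩ := param_of (A-B) hmod2.1 hmod2.2
    obtain ⟨b, hb⟩ := half_pent m1
    obtain ⟨a, ha⟩ := half_pent m2
    have hub : (A+B)^2 = 24*b+1 := by rw [hm1]; linear_combination -12*hb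
    have hva : (A-B)^2 = 24*a+1 := by rw [hm2]; linear_combination -12*ha
    have ha0 : 1 ≤ a := by
      have h0 : 0 ≤ 24*a+1 := by rw [← hva]; positivity
      have h1 : a ≠ 0 := by
        rintro rfl
        exact hvne (by rw [hva]; norm_num)
      omega
    have hb0 : 1 ≤ b := by
      have h0 : 0 ≤ 24*b+1 := by rw [← hub]; positivity
      have h1 : b ≠ 0 := by
        rintro rfl
        exact hune (by rw [hub]; norm_num)
      omega
    have hsum : c = a + b := by linarith
    exact ⟨a, b, ⟨m2, ha⟩, ⟨m1, hb⟩, by linarith, by linarith, hsum⟩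
end

section
/- The only solutions in nonnegative integers (x, n) to x² + 2 = 3ⁿ are (x, n) = (1, 1) and (x, n) = (5, 3). -/
namespace SqAddTwo

abbrev R := Zsqrtd (-2)

def al : R := ⟨1, 1⟩
def ga : R := ⟨2, 7⟩

lemma icast_mul_im (m : ℤ) (z : R) : ((m : R) * z).im = m * z.im := by
  simp [Zsqrtd.im_mul]

lemma pow_succ_re (m : ℕ) :
    (al ^ (m+1)).re = (al ^ m).re - 2 * (al ^ m).im := by
  rw [pow_succ]
  simp [Zsqrtd.re_mul, al]
  ring

lemma pow_succ_im (m : ℕ) :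
    (al ^ (m+1)).im = (al ^ m).re + (al ^ m).im := by
  rw [pow_succ]
  simp [Zsqrtd.im_mul, al]

lemma unit_case (a b : ℤ) (h : a^2 + 2*b^2 = 1) : b = 0 ∧ (a = 1 ∨ a = -1) := by
  have h0 : 0 ≤ b^2 := sq_nonneg b
  have h1 : b^2 ≤ 0 := by nlinarith [sq_nonneg a]
  have hb : b = 0 := by
    have : b^2 = 0 := le_antisymm h1 h0
    exact pow_eq_zero_iff (by norm_num) |>.mp this
  subst hb
  refine ⟨rfl, ?_⟩
  have h2 : (a - 1) * (a + 1) = 0 := by ring_nf; linarith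
  rcases mul_eq_zero.mp h2 with h | h
  · left; linarith
  · right; linarith

lemma three_dvd_b (m : ℕ) (hm : 0 < m) (a b : ℤ)
    (h : a^2 + 2*b^2 = 3^m) (ha : (3:ℤ) ∣ a) : (3:ℤ) ∣ b := by
  have h2 : (3:ℤ) ∣ 2*b^2 := by
    have he : 2*b^2 = 3^m - a^2 := by linarith
    rw [he]
    exact dvd_sub (dvd_pow_self 3 hm.ne') (dvd_pow ha (by norm_num))
  have hp : Prime (3:ℤ) := Int.prime_three
  rcases hp.2.2 _ _ h2 with h' | h'
  · norm_num at h'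
  · exact hp.dvd_of_dvd_pow h'

lemma descent : ∀ m : ℕ, ∀ a b : ℤ, a^2 + 2*b^2 = 3^m →
    (3 ∣ a) ∨ ∃ ε η : ℤ, (ε = 1 ∨ ε = -1) ∧ (η = 1 ∨ η = -1) ∧
      a = ε * (al ^ m).re ∧ b = ε * η * (al ^ m).im := by
  intro m
  induction m with
  | zero =>
    intro a b h
    simp only [pow_zero] at h
    obtain ⟨hb, ha⟩ := unit_case a b h
    right
    exact ⟨a, 1, ha, Or.inl rfl, by simp [hb], by simp [hb]⟩
  | succ m IH =>
    intro a b h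
    have h3 : (3:ℤ) ∣ (a - b) * (a + b) := by
      refine ⟨3^m - b^2, ?_⟩
      have : (a-b)*(a+b) = a^2 + 2*b^2 - 3*b^2 := by ring
      rw [this, h]; ring
    have hprime : Prime (3:ℤ) := Int.prime_three
    rcases hprime.2.2 _ _ h3 with hd | hd
    · obtain ⟨w, hw⟩ := hd
      set a' := b + w with ha'
      set b' := -w with hb'
      have hab1 : a = a' - 2*b' := by rw [ha', hb']; linarith
      have hab2 : b = a' + b' := by rw [ha', hb']; ring
      have hnorm : a'^2 + 2*b'^2 = 3^m := by
        have h9 : 3*(a'^2 + 2*b'^2) = 3*3^m := by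
          rw [show (3:ℤ)*3^m = 3^(m+1) by ring, ← h, hab1, hab2]; ring
        linarith
      rcases IH a' b' hnorm with h3' | ⟨ε, η, hε, hη, hA, hB⟩
      · rcases Nat.eq_zero_or_pos m with rfl | hm
        · simp only [pow_zero] at hnorm
          obtain ⟨_, ha1⟩ := unit_case a' b' hnorm
          exfalso; rcases ha1 with h1 | h1 <;> rw [h1] at h3' <;> norm_num at h3'
        · left
          have hb'd : (3:ℤ) ∣ b' := three_dvd_b m hm a' b' hnorm h3'
          obtain ⟨u, hu⟩ := h3'
          obtain ⟨v, hv⟩ := hb'd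
          exact ⟨u - 2*v, by rw [hab1, hu, hv]; ring⟩
      · rcases hη with rfl | rfl
        · right
          refine ⟨ε, 1, hε, Or.inl rfl, ?_, ?_⟩
          · rw [hab1, hA, hB, pow_succ_re]; ring
          · rw [hab2, hA, hB, pow_succ_im]; ring
        · rcases Nat.eq_zero_or_pos m with rfl | hm
          · have him : (al ^ 0).im = 0 := by simp
            right
            refine ⟨ε, 1, hε, Or.inl rfl, ?_, ?_⟩
            · rw [hab1, hA, hB, pow_succ_re, him]; ring
            · rw [hab2, hA, hB, pow_succ_im, him]; ring
          · left
            obtain ⟨j, rfl⟩ := Nat.exists_eq_add_of_lt hm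
            have hkey : (al ^ (0+j+1)).re + 2 * (al ^ (0+j+1)).im = 3 * (al ^ (0+j)).re := by
              rw [pow_succ_re, pow_succ_im]; ring
            refine ⟨ε * (al ^ (0+j)).re, ?_⟩
            rw [hab1, hA, hB]
            rw [show ε * (al ^ (0+j+1)).re - 2*(ε * -1 * (al ^ (0+j+1)).im)
                = ε * ((al ^ (0+j+1)).re + 2 * (al ^ (0+j+1)).im) by ring, hkey]
            ring
    · obtain ⟨w, hw⟩ := hd
      set a' := w - b with ha'
      set b' := w with hb'
      have hab1 : a = a' + 2*b' := by rw [ha', hb']; linarith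
      have hab2 : b = b' - a' := by rw [ha', hb']; ring
      have hnorm : a'^2 + 2*b'^2 = 3^m := by
        have h9 : 3*(a'^2 + 2*b'^2) = 3*3^m := by
          rw [show (3:ℤ)*3^m = 3^(m+1) by ring, ← h, hab1, hab2]; ring
        linarith
      rcases IH a' b' hnorm with h3' | ⟨ε, η, hε, hη, hA, hB⟩
      · rcases Nat.eq_zero_or_pos m with rfl | hm
        · simp only [pow_zero] at hnorm
          obtain ⟨_, ha1⟩ := unit_case a' b' hnorm
          exfalso; rcases ha1 with h1 | h1 <;> rw [h1] at h3' <;> norm_num at h3'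
        · left
          have hb'd : (3:ℤ) ∣ b' := three_dvd_b m hm a' b' hnorm h3'
          obtain ⟨u, hu⟩ := h3'
          obtain ⟨v, hv⟩ := hb'd
          exact ⟨u + 2*v, by rw [hab1, hu, hv]; ring⟩
      · rcases hη with rfl | rfl
        · rcases Nat.eq_zero_or_pos m with rfl | hm
          · have him : (al ^ 0).im = 0 := by simp
            right
            refine ⟨ε, -1, hε, Or.inr rfl, ?_, ?_⟩
            · rw [hab1, hA, hB, pow_succ_re, him]; ring
            · rw [hab2, hA, hB, pow_succ_im, him]; ring
          · left
            obtain ⟨j, rfl⟩ := Nat.exists_eq_add_of_lt hm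
            have hkey : (al ^ (0+j+1)).re + 2 * (al ^ (0+j+1)).im = 3 * (al ^ (0+j)).re := by
              rw [pow_succ_re, pow_succ_im]; ring
            refine ⟨ε * (al ^ (0+j)).re, ?_⟩
            rw [hab1, hA, hB]
            rw [show ε * (al ^ (0+j+1)).re + 2*(ε * 1 * (al ^ (0+j+1)).im)
                = ε * ((al ^ (0+j+1)).re + 2 * (al ^ (0+j+1)).im) by ring, hkey]
            ring
        · right
          refine ⟨ε, -1, hε, Or.inr rfl, ?_, ?_⟩
          · rw [hab1, hA, hB, pow_succ_re]; ring
          · rw [hab2, hA, hB, pow_succ_im]; ring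

lemma expand (c : R) (k : ℕ) : ∃ T : R, (1 + c)^k = 1 + (k : R)*c + c^2*T := by
  induction k with
  | zero => exact ⟨0, by push_cast; ring⟩
  | succ k IH =>
    obtain ⟨T, hT⟩ := IH
    refine ⟨(k:R) + T + c*T, ?_⟩
    rw [pow_succ, hT]
    push_cast
    ring

lemma im_decomp (w g T : R) (k u : ℕ) :
    (w * (1 + (k : R) * ((2:R)^(u+3) * g) + ((2:R)^(u+3) * g)^2 * T)).im
      = w.im + (k:ℤ) * 2^(u+3) * (w*g).im + 2^(2*u+6) * (g^2*(w*T)).im := by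
  have h1 : w * (1 + (k : R) * ((2:R)^(u+3) * g) + ((2:R)^(u+3) * g)^2 * T)
      = w + (((k:ℤ) * 2^(u+3) : ℤ) : R) * (w*g) + ((2^(2*u+6) : ℤ) : R) * (g^2*(w*T)) := by
    push_cast
    ring
  rw [h1]
  simp only [Zsqrtd.im_add, icast_mul_im]

lemma key (w : R) (hw : w.im = 1) (hwg : ¬ ((2:ℤ) ∣ (w*ga).im)) :
    ∀ k : ℕ, ∀ (u : ℕ) (g h : R), g = ga + 2*h →
      (w * (1 + (2:R)^(u+3) * g)^k).im = 1 → k = 0 := by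
  intro k
  induction k using Nat.strong_induction_on with
  | _ k IH =>
  intro u g h hg him
  by_cases hk : k = 0
  · exact hk
  exfalso
  obtain ⟨T, hT⟩ := expand ((2:R)^(u+3) * g) k
  have him0 := him
  rw [hT, im_decomp] at him
  rw [hw] at him
  set cg : ℤ := (w*g).im with hcg
  set t : ℤ := (g^2*(w*T)).im with ht
  have hodd : ¬ ((2:ℤ) ∣ cg) := by
    rw [hcg, hg]
    intro ⟨v, hv⟩
    apply hwg
    refine ⟨v - (w*h).im, ?_⟩
    have : (w * (ga + 2*h)).im = (w*ga).im + 2*(w*h).im := by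
      have : w * (ga + 2*h) = w*ga + ((2:ℤ):R)*(w*h) := by push_cast; ring
      rw [this]
      simp [Zsqrtd.im_add, icast_mul_im]
    rw [this] at hv
    linarith
  have heq : (k:ℤ) * 2^(u+3) * cg + 2^(2*u+6) * t = 0 := by linarith
  have hdvd : (2:ℤ)^(u+3) * 2 ∣ (2:ℤ)^(u+3) * ((k:ℤ) * cg) := by
    refine ⟨-(2^(u+2) * t), ?_⟩
    linear_combination heq
  have h2k : (2:ℤ) ∣ (k:ℤ) * cg :=
    (mul_dvd_mul_iff_left (a := (2:ℤ)^(u+3)) (by positivity)).mp hdvd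
  have hk2 : (2:ℤ) ∣ (k:ℤ) := by
    rcases (Int.prime_two.2.2 _ _ h2k) with h' | h'
    · exact h'
    · exact absurd h' hodd
  obtain ⟨k1, hk1⟩ : ∃ k1, k = 2 * k1 := by
    obtain ⟨j, hj⟩ := hk2
    exact ⟨j.toNat, by omega⟩
  have hsq : (1 + (2:R)^(u+3) * g)^2 = 1 + (2:R)^((u+1)+3) * (g + (2:R)^(u+2) * g^2) := by
    ring
  have hpow : (w * (1 + (2:R)^((u+1)+3) * (g + (2:R)^(u+2) * g^2))^k1).im = 1 := by
    have hre : (1 + (2:R)^((u+1)+3) * (g + (2:R)^(u+2) * g^2))^k1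
        = (1 + (2:R)^(u+3) * g)^k := by
      rw [← hsq, ← pow_mul, ← hk1]
    rw [hre]
    exact him0
  have : k1 = 0 := by
    refine IH k1 (by omega) (u+1) _ (h + (2:R)^(u+1) * g^2) ?_ hpow
    rw [hg]
    have h2 : (2:R)^(u+2) = 2 * (2:R)^(u+1) := by ring
    rw [h2]
    ring
  omega

lemma p0 : al^0 = (⟨1,0⟩ : R) := by ext <;> simp
lemma p1 : al^1 = (⟨1,1⟩ : R) := by ext <;> simp [al]
lemma p2 : al^2 = (⟨-1,2⟩ : R) := by ext <;> simp [al, pow_succ, Zsqrtd.re_mul, Zsqrtd.im_mul]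
lemma p3 : al^3 = (⟨-5,1⟩ : R) := by ext <;> simp [al, pow_succ, Zsqrtd.re_mul, Zsqrtd.im_mul]
lemma p4 : al^4 = (⟨-7,-4⟩ : R) := by ext <;> simp [al, pow_succ, Zsqrtd.re_mul, Zsqrtd.im_mul]
lemma p5 : al^5 = (⟨1,-11⟩ : R) := by ext <;> simp [al, pow_succ, Zsqrtd.re_mul, Zsqrtd.im_mul]
lemma p6 : al^6 = (⟨23,-10⟩ : R) := by ext <;> simp [al, pow_succ, Zsqrtd.re_mul, Zsqrtd.im_mul]
lemma p7 : al^7 = (⟨43,13⟩ : R) := by ext <;> simp [al, pow_succ, Zsqrtd.re_mul, Zsqrtd.im_mul]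
lemma p8 : al^8 = 1 + (2:R)^(0+3) * ga := by
  ext <;> simp [al, ga, pow_succ, Zsqrtd.re_mul, Zsqrtd.im_mul]
lemma g1 : (al^1 * ga).im = 9 := by rw [p1]; simp [ga, Zsqrtd.im_mul]
lemma g3 : (al^3 * ga).im = -33 := by rw [p3]; simp [ga, Zsqrtd.im_mul]

lemma imValues (n : ℕ) (him : (al^n).im = 1 ∨ (al^n).im = -1) : n = 1 ∨ n = 3 := by
  obtain ⟨q, r, hr, rfl⟩ : ∃ q r, r < 8 ∧ n = 8*q + r :=
    ⟨n/8, n%8, Nat.mod_lt _ (by norm_num), by omega⟩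
  have hsplit : al^(8*q+r) = al^r * (1 + (2:R)^(0+3)*ga)^q := by
    rw [pow_add, pow_mul, p8, mul_comm]
  rw [hsplit] at him
  obtain ⟨T, hT⟩ := expand ((2:R)^(0+3)*ga) q
  obtain ⟨A, B, hE⟩ : ∃ A B : ℤ,
      (al^r * (1 + (2:R)^(0+3)*ga)^q).im = (al^r).im + 8*A + 64*B := by
    refine ⟨(q:ℤ) * (al^r * ga).im, (ga^2*((al^r)*T)).im, ?_⟩
    rw [hT, im_decomp]
    ring
  interval_cases r
  · exfalso
    rcases him with h | h <;> rw [hE] at h <;> rw [p0] at h <;> simp at h <;> omega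
  · rcases him with h | h
    · have hq : q = 0 := by
        refine key (al^1) (by rw [p1]) (by rw [g1]; norm_num) q 0 ga 0 (by ring) h
      omega
    · exfalso; rw [hE, p1] at h; simp at h; omega
  · exfalso
    rcases him with h | h <;> rw [hE, p2] at h <;> simp at h <;> omega
  · rcases him with h | h
    · have hq : q = 0 := by
        refine key (al^3) (by rw [p3]) (by rw [g3]; norm_num) q 0 ga 0 (by ring) h
      omega
    · exfalso; rw [hE, p3] at h; simp at h; omega
  · exfalso
    rcases him with h | h <;> rw [hE, p4] at h <;> simp at h <;> omega
  · exfalso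
    rcases him with h | h <;> rw [hE, p5] at h <;> simp at h <;> omega
  · exfalso
    rcases him with h | h <;> rw [hE, p6] at h <;> simp at h <;> omega
  · exfalso
    rcases him with h | h <;> rw [hE, p7] at h <;> simp at h <;> omega

end SqAddTwo

open SqAddTwo in
theorem sq_add_two_eq_three_pow (x n : ℕ) :
    x ^ 2 + 2 = 3 ^ n ↔ (x = 1 ∧ n = 1) ∨ (x = 5 ∧ n = 3) := by
  constructor
  · intro h
    have hz : (x:ℤ)^2 + 2*(1:ℤ)^2 = 3^n := by
      have := congrArg (Nat.cast : ℕ → ℤ) h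
      push_cast at this
      linarith
    have hn0 : n ≠ 0 := by
      intro h0
      subst h0
      rw [pow_zero] at h
      have := Nat.zero_le (x^2)
      linarith
    rcases descent n (x:ℤ) 1 hz with h3 | ⟨ε, η, hε, hη, hx, hb⟩
    · exfalso
      obtain ⟨c, hc⟩ := h3
      obtain ⟨d, hd⟩ : (3:ℤ) ∣ 3^n := dvd_pow_self 3 hn0
      rw [hc, hd] at hz
      have h32 : (3:ℤ) ∣ 2 := ⟨d - 3*c^2, by linarith⟩
      norm_num at h32
    · have him : (al^n).im = 1 ∨ (al^n).im = -1 := by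
        rcases hε with rfl | rfl <;> rcases hη with rfl | rfl
        · left; linarith
        · right; linarith
        · right; linarith
        · left; linarith
      rcases imValues n him with rfl | rfl
      · left
        refine ⟨?_, rfl⟩
        rw [p1] at hx
        simp at hx
        rcases hε with rfl | rfl <;> omega
      · right
        refine ⟨?_, rfl⟩
        rw [p3] at hx
        simp at hx
        rcases hε with rfl | rfl <;> omega
  · rintro (⟨rfl, rfl⟩ | ⟨rfl, rfl⟩) <;> norm_num
end

section
/- A positive integer k not divisible by 4 and all of whose odd prime divisors are congruent to 1 or 3 modulo 8 is primitively represented by the quadratic form 2X² + Y², i.e., there exist coprime integers x, y with k = 2x² + y². -/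
/-!
Write `Q(x, y) = x² + 2y²`. For a prime `p ≡ 1, 3 (mod 8)`, `-2` is a square mod `p`, so
`a² + 2 = m p` with `0 < m < p` once `|a| ≤ p / 2`; Fermat's descent (reduce `a, b` modulo `m` and
divide the composed representation by `m²`) lowers `m` to `1`, and `p = Q(x, y)` is primitive
because `p` is squarefree. Composing `m = Q(a, b)` with `p = Q(c, d)` gives
`m p = Q(ac + 2bd, ad - bc) = Q(ac - 2bd, ad + bc)`; a prime dividing both entries of either
representation must be `p`, and an odd `p` cannot divide all four entries, so one of them is
primitive. This handles odd `k`; for `k = 2n` use `2 Q(a, b) = Q(2b, a)` with `a` odd.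
-/

def IsPrimitiveSqAddTwoSq (n : ℤ) : Prop :=
  ∃ x y : ℤ, IsCoprime x y ∧ x ^ 2 + 2 * y ^ 2 = n

theorem ZMod.four_mul_valMinAbs_sq_le {n : ℕ} [NeZero n] (x : ZMod n) :
    4 * x.valMinAbs ^ 2 ≤ (n : ℤ) ^ 2 := by
  obtain ⟨h₁, h₂⟩ := x.valMinAbs_mem_Ioc
  nlinarith

theorem mul_self_dvd_sq_add_two_mul_sq {R : Type*} [CommSemiring R] {z x y : R} (hx : z ∣ x)
    (hy : z ∣ y) : z * z ∣ x ^ 2 + 2 * y ^ 2 := by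
  rw [sq, sq]
  exact dvd_add (mul_dvd_mul hx hx) (dvd_mul_of_dvd_right (mul_dvd_mul hy hy) 2)

theorem isCoprime_of_squarefree_sq_add_two_mul_sq {x y : ℤ}
    (h : Squarefree (x ^ 2 + 2 * y ^ 2)) : IsCoprime x y := by
  refine isCoprime_of_prime_dvd ?_ fun z hz hzx hzy =>
    hz.not_isUnit (h z (mul_self_dvd_sq_add_two_mul_sq hzx hzy))
  rintro ⟨rfl, rfl⟩
  simp at h

theorem exists_lt_sq_add_two_mul_sq_eq_mul {p m : ℕ} (hp : p.Prime) (hm : 1 < m) (hmp : m < p)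
    {a b : ℤ} (hab : a ^ 2 + 2 * b ^ 2 = m * p) :
    ∃ m' : ℕ, 0 < m' ∧ m' < m ∧ ∃ e f : ℤ, e ^ 2 + 2 * f ^ 2 = m' * p := by
  have : NeZero m := ⟨by omega⟩
  set c := (a : ZMod m).valMinAbs
  set d := (b : ZMod m).valMinAbs
  have hc : (c : ZMod m) = a := ZMod.coe_valMinAbs _
  have hd : (d : ZMod m) = b := ZMod.coe_valMinAbs _
  have hab' : (a : ZMod m) ^ 2 + 2 * (b : ZMod m) ^ 2 = 0 := by
    have := congrArg (Int.cast : ℤ → ZMod m) hab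
    push_cast at this
    simpa using this
  have dvd_of_cast {x : ℤ} (hx : (x : ZMod m) = 0) : (m : ℤ) ∣ x :=
    (ZMod.intCast_zmod_eq_zero_iff_dvd x m).1 hx
  obtain ⟨m', hm'⟩ := dvd_of_cast (x := c ^ 2 + 2 * d ^ 2) (by push_cast [hc, hd]; exact hab')
  obtain ⟨e, he⟩ := dvd_of_cast (x := a * c + 2 * b * d) (by
    push_cast [hc, hd]; linear_combination hab')
  obtain ⟨f, hf⟩ := dvd_of_cast (x := a * d - b * c) (by push_cast [hc, hd]; ring)
  have hm0 : (0 : ℤ) < m := by exact_mod_cast (by omega : 0 < m)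
  have hm'_nonneg : 0 ≤ m' := by nlinarith [sq_nonneg c, sq_nonneg d]
  have hm'_lt : m' < m := by
    nlinarith [ZMod.four_mul_valMinAbs_sq_le (a : ZMod m),
      ZMod.four_mul_valMinAbs_sq_le (b : ZMod m)]
  have hm'_ne : m' ≠ 0 := by
    rintro rfl
    have hc0 : c = 0 := by nlinarith [sq_nonneg c, sq_nonneg d]
    have hd0 : d = 0 := by nlinarith [sq_nonneg c, sq_nonneg d]
    have hma : (m : ℤ) ∣ a := dvd_of_cast (by rw [← hc, hc0, Int.cast_zero])
    have hmb : (m : ℤ) ∣ b := dvd_of_cast (by rw [← hd, hd0, Int.cast_zero])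
    have hmm : (m : ℤ) * m ∣ m * p := hab ▸ mul_self_dvd_sq_add_two_mul_sq hma hmb
    have hmp' : m ∣ p := by exact_mod_cast (mul_dvd_mul_iff_left hm0.ne').1 hmm
    rcases hp.eq_one_or_self_of_dvd m hmp' with h | h <;> omega
  -- `(ac + 2bd)² + 2(ad - bc)² = (a² + 2b²)(c² + 2d²)`, divided by `m²`
  have hef : e ^ 2 + 2 * f ^ 2 = m' * p := by
    have : (m : ℤ) ^ 2 * (e ^ 2 + 2 * f ^ 2) = m ^ 2 * (m' * p) := by
      linear_combination (-(a * c + 2 * b * d) - m * e) * he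
        + (-2 * (a * d - b * c) - 2 * m * f) * hf + (c ^ 2 + 2 * d ^ 2) * hab + m * p * hm'
    exact mul_left_cancel₀ (pow_ne_zero 2 hm0.ne') this
  lift m' to ℕ using hm'_nonneg
  exact ⟨m', by omega, by omega, e, f, hef⟩

theorem exists_sq_add_two_mul_sq_eq_of_mul {p m : ℕ} (hp : p.Prime) (hm : 0 < m) (hmp : m < p)
    {a b : ℤ} (hab : a ^ 2 + 2 * b ^ 2 = m * p) : ∃ x y : ℤ, x ^ 2 + 2 * y ^ 2 = p := by
  induction m using Nat.strong_induction_on generalizing a b with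
  | _ m ih =>
    rcases (by omega : m = 1 ∨ 1 < m) with rfl | hm1
    · exact ⟨a, b, by simpa using hab⟩
    · obtain ⟨m', hm', hm'm, e, f, hef⟩ := exists_lt_sq_add_two_mul_sq_eq_mul hp hm1 hmp hab
      exact ih m' hm'm hm' (hm'm.trans hmp) hef

theorem isPrimitiveSqAddTwoSq_of_prime {p : ℕ} (hp : p.Prime) (h8 : p % 8 = 1 ∨ p % 8 = 3) :
    IsPrimitiveSqAddTwoSq p := by
  have := Fact.mk hp
  obtain ⟨r, hr⟩ := (ZMod.exists_sq_eq_neg_two_iff (by omega)).2 h8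
  obtain ⟨m, hm⟩ : (p : ℤ) ∣ r.valMinAbs ^ 2 + 2 * 1 ^ 2 := by
    rw [← ZMod.intCast_zmod_eq_zero_iff_dvd]
    push_cast
    rw [sq, ← hr]
    ring
  have hp2 : (2 : ℤ) ≤ p := by exact_mod_cast hp.two_le
  have hm0 : 0 < m := by nlinarith [sq_nonneg r.valMinAbs]
  have hmp : m < p := by nlinarith [ZMod.four_mul_valMinAbs_sq_le r]
  lift m to ℕ using hm0.le
  obtain ⟨x, y, hxy⟩ := exists_sq_add_two_mul_sq_eq_of_mul hp (by omega) (by omega)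
    (hm.trans (mul_comm _ _))
  refine ⟨x, y, isCoprime_of_squarefree_sq_add_two_mul_sq ?_, hxy⟩
  rw [hxy]
  exact (Nat.prime_iff_prime_int.1 hp).squarefree

theorem dvd_of_not_isCoprime_sq_add_two_mul_sq {a b c d p : ℤ} (hab : IsCoprime a b)
    (hp : Prime p) (hcd : c ^ 2 + 2 * d ^ 2 = p)
    (h : ¬IsCoprime (a * c + 2 * b * d) (a * d - b * c)) :
    p ∣ a * c + 2 * b * d ∧ p ∣ a * d - b * c := by
  by_contra hnot
  refine h (isCoprime_of_prime_dvd ?_ fun z hz hzu hzv => ?_)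
  · rintro ⟨hu, hv⟩
    exact hnot ⟨hu ▸ dvd_zero p, hv ▸ dvd_zero p⟩
  have hza : z ∣ a * p := by
    refine (dvd_add (hzu.mul_left c) (hzv.mul_left (2 * d))).trans (dvd_of_eq ?_)
    rw [← hcd]; ring
  have hzb : z ∣ b * p := by
    refine (dvd_sub (hzu.mul_left d) (hzv.mul_left c)).trans (dvd_of_eq ?_)
    rw [← hcd]; ring
  have hzp : z ∣ p := by
    by_contra hzp
    exact hz.not_isUnit (hab.isUnit_of_dvd' ((hz.dvd_or_dvd hza).resolve_right hzp)
      ((hz.dvd_or_dvd hzb).resolve_right hzp))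
  have hzp' := hz.associated_of_dvd hp hzp
  exact hnot ⟨hzp'.dvd_iff_dvd_left.1 hzu, hzp'.dvd_iff_dvd_left.1 hzv⟩

theorem IsPrimitiveSqAddTwoSq.mul_of_prime {m p : ℤ} (hm : IsPrimitiveSqAddTwoSq m)
    (hp : IsPrimitiveSqAddTwoSq p) (hprime : Prime p) (hodd : Odd p) :
    IsPrimitiveSqAddTwoSq (m * p) := by
  obtain ⟨a, b, hab, rfl⟩ := hm
  obtain ⟨c, d, hcd, hp⟩ := hp
  by_contra hnot
  have h₁ := dvd_of_not_isCoprime_sq_add_two_mul_sq hab hprime hp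
    fun h => hnot ⟨_, _, h, by rw [← hp]; ring⟩
  have h₂ := dvd_of_not_isCoprime_sq_add_two_mul_sq (c := c) (d := -d) hab hprime
    (by rw [neg_sq, hp])
    fun h => hnot ⟨_, _, h, by rw [← hp]; ring⟩
  have hp2 : ¬p ∣ 2 := fun h => Int.not_even_iff_odd.2 hodd
    (even_iff_two_dvd.2 (hprime.associated_of_dvd Int.prime_two h).symm.dvd)
  have half (x : ℤ) (h : p ∣ 2 * x) : p ∣ x := (hprime.dvd_or_dvd h).resolve_left hp2
  have hac : p ∣ a * c := half _ ((dvd_add h₁.1 h₂.1).trans (dvd_of_eq (by ring)))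
  have hbd : p ∣ b * d := half _ (half _ ((dvd_sub h₁.1 h₂.1).trans (dvd_of_eq (by ring))))
  have had : p ∣ a * d := half _ ((dvd_sub h₁.2 h₂.2).trans (dvd_of_eq (by ring)))
  have hbc : p ∣ b * c := half _ (((dvd_add h₁.2 h₂.2).neg_right).trans (dvd_of_eq (by ring)))
  have hnab : ¬(p ∣ a ∧ p ∣ b) := fun h => hprime.not_isUnit (hab.isUnit_of_dvd' h.1 h.2)
  by_cases hc : p ∣ c
  · have hd : ¬p ∣ d := fun hd => hprime.not_isUnit (hcd.isUnit_of_dvd' hc hd)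
    exact hnab ⟨(hprime.dvd_or_dvd had).resolve_right hd, (hprime.dvd_or_dvd hbd).resolve_right hd⟩
  · exact hnab ⟨(hprime.dvd_or_dvd hac).resolve_right hc, (hprime.dvd_or_dvd hbc).resolve_right hc⟩

theorem IsPrimitiveSqAddTwoSq.two_mul {m : ℤ} (hm : IsPrimitiveSqAddTwoSq m) (hodd : Odd m) :
    IsPrimitiveSqAddTwoSq (2 * m) := by
  obtain ⟨a, b, hab, rfl⟩ := hm
  have ha : Odd a := by simpa [Int.odd_add, parity_simps] using hodd
  exact ⟨2 * b, a, (Int.isCoprime_two_left.2 ha).mul_left hab.symm, by ring⟩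

theorem isPrimitiveSqAddTwoSq_of_forall_prime_dvd {n : ℕ}
    (h : ∀ p : ℕ, p.Prime → p ∣ n → p % 8 = 1 ∨ p % 8 = 3) : IsPrimitiveSqAddTwoSq n := by
  induction n using UniqueFactorizationMonoid.induction_on_prime with
  | h₁ => simpa using h 2 Nat.prime_two (dvd_zero 2)
  | h₂ u hu => exact ⟨1, 0, isCoprime_one_left, by simp [Nat.isUnit_iff.1 hu]⟩
  | h₃ n p _ hp ih =>
    have hp := Nat.prime_iff.2 hp
    have h8 := h p hp (dvd_mul_right p n)
    push_cast
    rw [mul_comm]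
    exact (ih fun q hq hqn => h q hq (hqn.mul_left p)).mul_of_prime
      (isPrimitiveSqAddTwoSq_of_prime hp h8) (Nat.prime_iff_prime_int.1 hp)
      (Int.odd_coe_nat p |>.2 (Nat.odd_iff.2 (by omega)))

theorem primitively_represented_by_two_sq_add_sq_general (k : ℕ) (h4 : ¬ (4 ∣ k))
    (hp : ∀ p : ℕ, p.Prime → Odd p → p ∣ k → p % 8 = 1 ∨ p % 8 = 3) :
    ∃ x y : ℤ, IsCoprime x y ∧ (k : ℤ) = 2 * x ^ 2 + y ^ 2 := by
  obtain ⟨e, n, hn, rfl⟩ := Nat.exists_eq_two_pow_mul_odd (n := k) (by rintro rfl; simp at h4)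
  have hn_rep : IsPrimitiveSqAddTwoSq n := isPrimitiveSqAddTwoSq_of_forall_prime_dvd
    fun p hp' hpn => hp p hp' (hn.of_dvd_nat hpn) (hpn.mul_left _)
  have he : e = 0 ∨ e = 1 := by
    by_contra! he
    exact h4 (Dvd.dvd.mul_right (pow_dvd_pow 2 (by omega : 2 ≤ e)) n)
  obtain ⟨x, y, hxy, hrep⟩ : IsPrimitiveSqAddTwoSq (2 ^ e * n : ℕ) := by
    rcases he with rfl | rfl
    · simpa using hn_rep
    · simpa using hn_rep.two_mul (Int.odd_coe_nat n |>.2 hn)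
  exact ⟨y, x, hxy.symm, by rw [← hrep]; ring⟩

theorem primitively_represented_by_two_sq_add_sq (k : ℕ) (hk : 0 < k) (h4 : ¬ (4 ∣ k))
    (hp : ∀ p : ℕ, p.Prime → Odd p → p ∣ k → p % 8 = 1 ∨ p % 8 = 3) :
    ∃ x y : ℤ, IsCoprime x y ∧ (k : ℤ) = 2 * x ^ 2 + y ^ 2 :=
  primitively_represented_by_two_sq_add_sq_general k h4 hp
end

section
/- If a positive integer k is primitively represented by 2X² + Y² and has at least two distinct odd prime divisors (say ω'(k) ≥ 2, where ω'(k) counts odd prime divisors), then k admits at least two distinct positive primitive representations (x,y) with x, y > 0 by 2X² + Y². -/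
/-!
Work in the Euclidean domain `ℤ√(-2)`, where a primitive representation `k = 2x² + y²` is a
primitive element `z = y + x√-2` of norm `k`. An odd prime `p ∣ k` splits as `p = π π̄` with
`π ∣ z` but `π̄ ∤ z` (otherwise `p ∣ z`). Writing `z = πᵉu` with `π ∤ u`, the element `z' = π̄ᵉu`
is again primitive of norm `k`. It is not `±z`, since `π ∤ z'`, and not `±z̄`, since a prime `ρ`
over the second odd prime `q` divides both `z` and `z'` while `ρ̄ ∤ z`.
-/

theorem star_dvd_of_dvd_star {R : Type*} [CommMonoid R] [StarMul R] {a b : R} (h : a ∣ star b) :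
    star a ∣ b := by
  obtain ⟨c, hc⟩ := h
  exact ⟨star c, by rw [← star_star b, hc, star_mul, mul_comm]⟩

theorem Prime.star {R : Type*} [CommMonoidWithZero R] [StarMul R] {p : R} (hp : Prime p) :
    Prime (star p) := by
  rwa [← starMulAut_apply, MulEquiv.prime_iff]

namespace Zsqrtd

theorem natCast_eq_mul_star {d : ℤ} {π : ℤ√d} {p : ℕ} (hN : π.norm = p) :
    (p : ℤ√d) = π * star π := by
  rw [← norm_eq_mul_conj, hN, Int.cast_natCast]

theorem not_dvd_of_norm_ne {d : ℤ} {π ρ : ℤ√d} {p q : ℕ} (hp : p.Prime) (hq : q.Prime)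
    (hpq : p ≠ q) (hπ : π.norm = p) (hρ : ρ.norm = q) : ¬ρ ∣ π := fun h => by
  have : (q : ℤ) ∣ p := hρ ▸ hπ ▸ map_dvd normMonoidHom h
  exact hpq ((Nat.prime_dvd_prime_iff_eq hq hp).1 (Int.natCast_dvd_natCast.1 this)).symm

end Zsqrtd

namespace ZsqrtdNegTwo

open Zsqrtd

theorem norm_eq (z : ℤ√(-2)) : z.norm = z.re ^ 2 + 2 * z.im ^ 2 := by
  rw [norm_def]; ring

theorem natAbs_norm (z : ℤ√(-2)) : (z.norm.natAbs : ℤ) = z.norm :=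
  Int.natAbs_of_nonneg (norm_nonneg (by norm_num) z)

theorem natAbs_norm_pos {y : ℤ√(-2)} (hy : y ≠ 0) : 0 < y.norm.natAbs :=
  Int.natAbs_pos.2 ((norm_eq_zero_iff (by norm_num) y).not.2 hy)

-- Rounding `x * star y / N(y)` coordinatewise to the nearest integers leaves a remainder `r`
-- with `N(r) ≤ (1/4 + 2/4) N(y)`.
instance : Div (ℤ√(-2)) :=
  ⟨fun x y => ⟨(x * star y).re.bdiv y.norm.natAbs, (x * star y).im.bdiv y.norm.natAbs⟩⟩

instance : Mod (ℤ√(-2)) := ⟨fun x y => x - y * (x / y)⟩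

theorem mod_mul_star (x y : ℤ√(-2)) :
    x % y * star y = ⟨(x * star y).re.bmod y.norm.natAbs, (x * star y).im.bmod y.norm.natAbs⟩ := by
  have key : x % y * star y = x * star y - ((y.norm.natAbs : ℤ) : ℤ√(-2)) *
      ⟨(x * star y).re.bdiv y.norm.natAbs, (x * star y).im.bdiv y.norm.natAbs⟩ := by
    rw [natAbs_norm, norm_eq_mul_conj]
    change (x - y * ⟨_, _⟩) * star y = _
    ring
  rw [key, smul_val]
  ext <;> simp only [re_sub, im_sub]
  · linarith [Int.bdiv_add_bmod (x * star y).re y.norm.natAbs]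
  · linarith [Int.bdiv_add_bmod (x * star y).im y.norm.natAbs]

theorem sq_two_mul_bmod_le (a : ℤ) {n : ℕ} (hn : 0 < n) : (2 * a.bmod n) ^ 2 ≤ n ^ 2 := by
  have := Int.bmod_lt (x := a) hn
  have := Int.le_bmod (x := a) hn
  exact sq_le_sq' (by omega) (by omega)

theorem norm_mod_lt (x : ℤ√(-2)) {y : ℤ√(-2)} (hy : y ≠ 0) : (x % y).norm < y.norm := by
  have h : (x % y).norm * y.norm =
      (x * star y).re.bmod y.norm.natAbs ^ 2 + 2 * (x * star y).im.bmod y.norm.natAbs ^ 2 :=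
    calc (x % y).norm * y.norm = (x % y * star y).norm := by rw [norm_mul, norm_conj]
      _ = _ := by rw [mod_mul_star, norm_eq]
  have hN := natAbs_norm_pos hy
  have hyN := natAbs_norm y
  set N := y.norm.natAbs
  rw [← hyN] at h ⊢
  nlinarith [sq_two_mul_bmod_le (x * star y).re hN, sq_two_mul_bmod_le (x * star y).im hN,
    norm_nonneg (by norm_num) (x % y)]

theorem norm_le_norm_mul_left (x : ℤ√(-2)) {y : ℤ√(-2)} (hy : y ≠ 0) :
    x.norm.natAbs ≤ (x * y).norm.natAbs := by
  rw [norm_mul, Int.natAbs_mul]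
  exact Nat.le_mul_of_pos_right _ (natAbs_norm_pos hy)

instance : EuclideanDomain (ℤ√(-2)) where
  quotient := (· / ·)
  remainder := (· % ·)
  quotient_zero x := by ext <;> simp [HDiv.hDiv, Div.div]
  quotient_mul_add_remainder_eq x y := by simp [HMod.hMod, Mod.mod]
  r := InvImage (· < ·) fun z => z.norm.natAbs
  r_wellFounded := (measure fun z : ℤ√(-2) => z.norm.natAbs).wf
  remainder_lt x y hy := Int.natAbs_lt_natAbs_of_nonneg_of_lt
    (norm_nonneg (by norm_num) _) (norm_mod_lt x hy)
  mul_left_not_lt x y hy := not_lt_of_ge (norm_le_norm_mul_left x hy)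

theorem eq_one_or_eq_neg_one_of_isUnit {u : ℤ√(-2)} (h : IsUnit u) : u = 1 ∨ u = -1 := by
  have hN : u.re ^ 2 + 2 * u.im ^ 2 = 1 := by
    rw [← norm_eq]; exact (norm_eq_one_iff' (by norm_num) u).2 h
  have him : u.im = 0 := by nlinarith [sq_nonneg u.re, sq_nonneg u.im]
  have hre : u.re ^ 2 = 1 := by rw [him] at hN; linarith
  rcases sq_eq_one_iff.1 hre with hre | hre
  · exact Or.inl (Zsqrtd.ext hre him)
  · exact Or.inr (Zsqrtd.ext hre (by simp [him]))

theorem not_dvd_star {π : ℤ√(-2)} {p : ℕ} (hp : p.Prime) (hodd : Odd p) (hπ : Prime π)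
    (hN : π.norm = p) : ¬π ∣ star π := by
  intro h
  obtain ⟨w, hw⟩ := hπ.irreducible.associated_of_dvd hπ.star.irreducible h
  -- `star π = ±π` would make `p` a square or even.
  rcases eq_one_or_eq_neg_one_of_isUnit w.isUnit with hw1 | hw1 <;> rw [hw1] at hw
  · have him : π.im = 0 := by
      have := congrArg im hw
      rw [mul_one, im_star] at this
      omega
    exact (Nat.prime_iff_prime_int.1 hp).not_isSquare ⟨π.re, by rw [← hN, norm_eq, him]; ring⟩
  · have hre : π.re = 0 := by
      have := congrArg re hw
      rw [mul_neg_one, re_neg, re_star] at this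
      omega
    have : (p : ℤ) = 2 * π.im ^ 2 := by rw [← hN, norm_eq, hre]; ring
    obtain ⟨m, rfl⟩ := hodd
    omega

def IsPrimitive (z : ℤ√(-2)) : Prop :=
  IsCoprime z.re z.im

theorem isPrimitive_of_forall_prime_not_dvd {z : ℤ√(-2)}
    (h : ∀ ℓ : ℕ, ℓ.Prime → ¬(ℓ : ℤ√(-2)) ∣ z) : IsPrimitive z := by
  refine Int.isCoprime_iff_nat_coprime.2 (Nat.coprime_of_dvd fun ℓ hℓ hre him => h ℓ hℓ ?_)
  rw [← Int.cast_natCast, intCast_dvd]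
  exact ⟨Int.natCast_dvd.2 hre, Int.natCast_dvd.2 him⟩

namespace IsPrimitive

variable {z : ℤ√(-2)}

theorem ne_zero (hz : IsPrimitive z) : z ≠ 0 := by
  rintro rfl
  exact not_isCoprime_zero_zero hz

theorem eq_one_of_natCast_dvd (hz : IsPrimitive z) {n : ℕ} (h : (n : ℤ√(-2)) ∣ z) : n = 1 := by
  rw [← Int.cast_natCast, intCast_dvd] at h
  have := Int.isUnit_iff.1 (hz.isUnit_of_dvd' h.1 h.2)
  omega

theorem norm_dvd_two (hz : IsPrimitive z) (h : z.re = 0 ∨ z.im = 0) : z.norm ∣ 2 := by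
  rcases h with h | h
  · rw [IsPrimitive, h, isCoprime_zero_left, Int.isUnit_iff] at hz
    rcases hz with h' | h' <;> simp [norm_eq, h, h']
  · rw [IsPrimitive, h, isCoprime_zero_right, Int.isUnit_iff] at hz
    rcases hz with h' | h' <;> simp [norm_eq, h, h']

theorem re_ne_zero_and_im_ne_zero (hz : IsPrimitive z) {p : ℕ} (hp : p.Prime) (hodd : Odd p)
    (h : (p : ℤ) ∣ z.norm) : z.re ≠ 0 ∧ z.im ≠ 0 := by
  rw [← not_or]
  intro h0
  have : p ∣ 2 := Int.natCast_dvd_natCast.1 (h.trans (hz.norm_dvd_two h0))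
  rw [(Nat.prime_dvd_prime_iff_eq hp Nat.prime_two).1 this] at hodd
  exact Nat.not_odd_iff_even.2 even_two hodd

theorem exists_prime_dvd (hz : IsPrimitive z) {p : ℕ} (hp : p.Prime) (h : (p : ℤ) ∣ z.norm) :
    ∃ π : ℤ√(-2), Prime π ∧ π.norm = p ∧ π ∣ z := by
  have hpz : (p : ℤ√(-2)) ∣ z * star z := by
    rw [← norm_eq_mul_conj, ← Int.cast_natCast]
    exact Int.cast_dvd_cast _ _ h
  have hp_not_dvd : ¬(p : ℤ√(-2)) ∣ z := fun h => hp.one_lt.ne' (hz.eq_one_of_natCast_dvd h)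
  have hp_not_prime : ¬Prime (p : ℤ√(-2)) := fun hP =>
    (hP.dvd_or_dvd hpz).elim hp_not_dvd fun h => hp_not_dvd (by simpa using star_dvd_of_dvd_star h)
  obtain ⟨π, hπ, c, hc⟩ := WfDvdMonoid.exists_irreducible_factor (fun hu => hp_not_dvd hu.dvd)
    (by exact_mod_cast hp.ne_zero)
  have hc_not_unit : ¬IsUnit c := fun hu =>
    hp_not_prime (hc ▸ (associated_mul_unit_right π c hu).prime hπ.prime)
  have hπN : π.norm = p := by
    have : π.norm.natAbs * c.norm.natAbs = p ^ 2 := by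
      rw [← Int.natAbs_mul, ← norm_mul, ← hc, norm_natCast, Int.natAbs_mul,
        Int.natAbs_natCast, sq]
    rw [← natAbs_norm, ((hp.mul_eq_prime_sq_iff (mt norm_eq_one_iff.1 hπ.not_isUnit)
      (mt norm_eq_one_iff.1 hc_not_unit)).1 this).1]
  rcases hπ.prime.dvd_or_dvd ((dvd_mul_right π c).trans (hc ▸ hpz)) with h | h
  · exact ⟨π, hπ.prime, hπN, h⟩
  · exact ⟨star π, hπ.prime.star, by rwa [norm_conj], star_dvd_of_dvd_star h⟩

theorem star_not_dvd (hz : IsPrimitive z) {π : ℤ√(-2)} {p : ℕ} (hp : p.Prime) (hodd : Odd p)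
    (hπ : Prime π) (hN : π.norm = p) (hπz : π ∣ z) : ¬star π ∣ z := by
  obtain ⟨c, rfl⟩ := hπz
  intro hs
  have hπ' : ¬star π ∣ π := by
    simpa using not_dvd_star hp hodd hπ.star (by rwa [norm_conj])
  have hc : star π ∣ c := (hπ.star.dvd_or_dvd hs).resolve_left hπ'
  exact hp.one_lt.ne' (hz.eq_one_of_natCast_dvd (natCast_eq_mul_star hN ▸ mul_dvd_mul_left π hc))

-- The witness is `star π ^ e * u`, where `z = π ^ e * u` and `π ∤ u`.
theorem exists_swap_star (hz : IsPrimitive z) {π : ℤ√(-2)} {p : ℕ} (hp : p.Prime) (hodd : Odd p)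
    (hπ : Prime π) (hN : π.norm = p) :
    ∃ z', IsPrimitive z' ∧ z'.norm = z.norm ∧ ¬π ∣ z' ∧
      ∀ ρ, Prime ρ → ¬ρ ∣ π → ρ ∣ z → ρ ∣ z' := by
  obtain ⟨e, u, hπu, rfl⟩ := WfDvdMonoid.max_power_factor hz.ne_zero hπ.irreducible
  have hπz' : ¬π ∣ star π ^ e * u := fun h => (hπ.dvd_or_dvd h).elim
    (fun h => not_dvd_star hp hodd hπ hN (hπ.dvd_of_dvd_pow h)) hπu
  refine ⟨star π ^ e * u, isPrimitive_of_forall_prime_not_dvd fun ℓ hℓ hℓz => ?_, ?_, hπz',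
    fun ρ hρ hρπ hρz => ?_⟩
  · by_cases hℓp : ℓ = p
    · subst hℓp
      exact hπz' ((dvd_mul_right π (star π)).trans (natCast_eq_mul_star hN ▸ hℓz))
    · have hcop : IsCoprime (ℓ : ℤ√(-2)) (star π ^ e) := by
        have := ((Nat.coprime_primes hℓ hp).2 hℓp).cast (R := ℤ√(-2))
        rw [natCast_eq_mul_star hN] at this
        exact this.of_mul_right_right.pow_right
      exact hℓ.one_lt.ne' <| hz.eq_one_of_natCast_dvd <|
        (hcop.dvd_of_dvd_mul_left hℓz).trans (dvd_mul_left u _)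
  · rw [norm_mul, norm_mul, ← star_pow, norm_conj]
  · exact ((hρ.dvd_or_dvd hρz).resolve_left (mt hρ.dvd_of_dvd_pow hρπ)).trans (dvd_mul_left u _)

end IsPrimitive

theorem associated_or_associated_star_of_abs_eq {z w : ℤ√(-2)} (hre : |w.re| = |z.re|)
    (him : |w.im| = |z.im|) : Associated w z ∨ Associated w (star z) := by
  rcases abs_eq_abs.1 hre with hre | hre <;> rcases abs_eq_abs.1 him with him | him
  · exact Or.inl (.of_eq (Zsqrtd.ext hre him))
  · exact Or.inr (.of_eq (Zsqrtd.ext hre (by simp [him])))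
  · obtain rfl : w = -star z := by ext <;> simp [hre, him]
    exact Or.inr (Associated.refl _).neg_left
  · obtain rfl : w = -z := by ext <;> simp [hre, him]
    exact Or.inl (Associated.refl _).neg_left

end ZsqrtdNegTwo

open ZsqrtdNegTwo

theorem two_positive_primitive_representations (k : ℕ)
    (hrep : ∃ x y : ℤ, IsCoprime x y ∧ (k : ℤ) = 2 * x ^ 2 + y ^ 2)
    (homega : ∃ p q : ℕ, p.Prime ∧ q.Prime ∧ Odd p ∧ Odd q ∧ p ≠ q ∧ p ∣ k ∧ q ∣ k) :
    ∃ x y x' y' : ℤ, 0 < x ∧ 0 < y ∧ 0 < x' ∧ 0 < y' ∧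
      IsCoprime x y ∧ IsCoprime x' y' ∧
      (k : ℤ) = 2 * x ^ 2 + y ^ 2 ∧ (k : ℤ) = 2 * x' ^ 2 + y' ^ 2 ∧
      (x, y) ≠ (x', y') := by
  obtain ⟨x, y, hxy, hk⟩ := hrep
  obtain ⟨p, q, hp, hq, hpodd, hqodd, hpq, hpk, hqk⟩ := homega
  let z : ℤ√(-2) := ⟨y, x⟩
  have hz : IsPrimitive z := hxy.symm
  have hzN : z.norm = k := by rw [norm_eq, hk]; ring
  have hpz : (p : ℤ) ∣ z.norm := hzN ▸ Int.natCast_dvd_natCast.2 hpk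
  obtain ⟨π, hπ, hπN, hπz⟩ := hz.exists_prime_dvd hp hpz
  obtain ⟨ρ, hρ, hρN, hρz⟩ := hz.exists_prime_dvd hq (hzN ▸ Int.natCast_dvd_natCast.2 hqk)
  obtain ⟨z', hz', hz'N, hπz', hz'dvd⟩ := hz.exists_swap_star hp hpodd hπ hπN
  have hρz' : ρ ∣ z' := hz'dvd ρ hρ (Zsqrtd.not_dvd_of_norm_ne hp hq hpq hπN hρN) hρz
  obtain ⟨hre, him⟩ := hz.re_ne_zero_and_im_ne_zero hp hpodd hpz
  obtain ⟨hre', him'⟩ := hz'.re_ne_zero_and_im_ne_zero hp hpodd (hz'N ▸ hpz)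
  refine ⟨|z.im|, |z.re|, |z'.im|, |z'.re|, abs_pos.2 him, abs_pos.2 hre, abs_pos.2 him',
    abs_pos.2 hre', hz.symm.abs_abs, hz'.symm.abs_abs, ?_, ?_, fun h => ?_⟩
  · rw [sq_abs, sq_abs, ← hzN, norm_eq]; ring
  · rw [sq_abs, sq_abs, ← hzN, ← hz'N, norm_eq]; ring
  obtain ⟨him_eq, hre_eq⟩ := Prod.mk.inj h
  rcases associated_or_associated_star_of_abs_eq hre_eq.symm him_eq.symm with h | h
  · exact hπz' (h.dvd_iff_dvd_right.2 hπz)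
  · exact hz.star_not_dvd hq hqodd hρ hρN hρz (star_dvd_of_dvd_star (h.dvd_iff_dvd_right.1 hρz'))
end

section
/- A trigonal number c ≥ 6 is the sum of two smaller trigonal numbers if and only if 2c + 1 is not prime. -/
def IsTrigonal (c : ℕ) : Prop := ∃ n : ℕ, c = n * (n + 1)

set_option maxHeartbeats 2000000 in
/-- Key uniqueness-style lemma: if both Brahmagupta combinations of two
sum-of-two-squares representations give the canonical representation
`n^2 + (n+1)^2`, we get a contradiction. -/
private lemma key_combo (n A B X Y : ℤ) (hA : 0 ≤ A) (hB : 0 ≤ B) (hX : 0 ≤ X) (hY : 0 ≤ Y)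
    (hP : 2 ≤ A^2 + B^2) (hM : 2 ≤ X^2 + Y^2) (hAB : A ≠ B) (hXY : X ≠ Y) (hn0 : (0:ℤ) ≤ n)
    (h1 : (|A*X + B*Y| = n + 1 ∧ |A*Y - B*X| = n) ∨ (|A*X + B*Y| = n ∧ |A*Y - B*X| = n + 1))
    (h2 : (|A*X - B*Y| = n + 1 ∧ |A*Y + B*X| = n) ∨ (|A*X - B*Y| = n ∧ |A*Y + B*X| = n + 1)) :
    False := by
  have hn1 : (0:ℤ) ≤ n + 1 := by linarith
  have hpos1 : 0 ≤ A*X + B*Y := add_nonneg (mul_nonneg hA hX) (mul_nonneg hB hY)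
  have hpos2 : 0 ≤ A*Y + B*X := add_nonneg (mul_nonneg hA hY) (mul_nonneg hB hX)
  have hS1 : A*X + B*Y = n + 1 ∨ A*X + B*Y = n := by
    rcases h1 with ⟨h, _⟩ | ⟨h, _⟩
    · exact Or.inl (by rw [← abs_of_nonneg hpos1, h])
    · exact Or.inr (by rw [← abs_of_nonneg hpos1, h])
  have hS2 : A*Y + B*X = n + 1 ∨ A*Y + B*X = n := by
    rcases h2 with ⟨_, h⟩ | ⟨_, h⟩
    · exact Or.inr (by rw [← abs_of_nonneg hpos2, h])
    · exact Or.inl (by rw [← abs_of_nonneg hpos2, h])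
  have hu4 : A*Y - B*X = n ∨ A*Y - B*X = -n ∨ A*Y - B*X = n+1 ∨ A*Y - B*X = -(n+1) := by
    rcases h1 with ⟨_, h⟩ | ⟨_, h⟩
    · rcases (abs_eq hn0).mp h with h' | h'
      · exact Or.inl h'
      · exact Or.inr (Or.inl h')
    · rcases (abs_eq hn1).mp h with h' | h'
      · exact Or.inr (Or.inr (Or.inl h'))
      · exact Or.inr (Or.inr (Or.inr h'))
  have hw4 : A*X - B*Y = n ∨ A*X - B*Y = -n ∨ A*X - B*Y = n+1 ∨ A*X - B*Y = -(n+1) := by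
    rcases h2 with ⟨h, _⟩ | ⟨h, _⟩
    · rcases (abs_eq hn1).mp h with h' | h'
      · exact Or.inr (Or.inr (Or.inl h'))
      · exact Or.inr (Or.inr (Or.inr h'))
    · rcases (abs_eq hn0).mp h with h' | h'
      · exact Or.inl h'
      · exact Or.inr (Or.inl h')
  have hdiff : (A - B) * (X - Y) = (A*X + B*Y) - (A*Y + B*X) := by ring
  have h4 : (A-B)*(X-Y) = 1 ∨ (A-B)*(X-Y) = 0 ∨ (A-B)*(X-Y) = -1 := by
    rcases hS1 with h | h <;> rcases hS2 with h' | h' <;> rw [h, h'] at hdiff <;>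
      rw [hdiff] <;> omega
  have hABne : A - B ≠ 0 := sub_ne_zero.mpr hAB
  have hXYne : X - Y ≠ 0 := sub_ne_zero.mpr hXY
  have habs1 : |A - B| * |X - Y| = 1 := by
    rw [← abs_mul]
    rcases h4 with h | h | h
    · rw [h]; norm_num
    · exact absurd h (mul_ne_zero hABne hXYne)
    · rw [h]; norm_num
  have hABpm : A - B = 1 ∨ A - B = -1 :=
    (abs_eq (by norm_num)).mp (Int.eq_one_of_mul_eq_one_right (abs_nonneg _) habs1)
  have hXYpm : X - Y = 1 ∨ X - Y = -1 :=
    (abs_eq (by norm_num)).mp (Int.eq_one_of_mul_eq_one_left (abs_nonneg _) habs1)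
  have hApB : 2 ≤ A + B := by
    by_contra hcon
    push_neg at hcon
    have hA1 : A ≤ 1 := by linarith
    have hB1 : B ≤ 1 := by linarith
    nlinarith [mul_le_mul_of_nonneg_left hA1 hA, mul_le_mul_of_nonneg_left hB1 hB]
  have hXpY : 2 ≤ X + Y := by
    by_contra hcon
    push_neg at hcon
    have hX1 : X ≤ 1 := by linarith
    have hY1 : Y ≤ 1 := by linarith
    nlinarith [mul_le_mul_of_nonneg_left hX1 hX, mul_le_mul_of_nonneg_left hY1 hY]
  have f1 : (A - B) * (X + Y) = (A*Y - B*X) + (A*X - B*Y) := by ring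
  have f2 : (A + B) * (X - Y) = (A*X - B*Y) - (A*Y - B*X) := by ring
  have g1 : X + Y = (A*Y - B*X) + (A*X - B*Y) ∨ X + Y = -((A*Y - B*X) + (A*X - B*Y)) := by
    rcases hABpm with h | h
    · left; linear_combination f1 - (X+Y) * h
    · right; linear_combination (X+Y) * h - f1
  have g2 : A + B = (A*X - B*Y) - (A*Y - B*X) ∨ A + B = -((A*X - B*Y) - (A*Y - B*X)) := by
    rcases hXYpm with h | h
    · left; linear_combination f2 - (A+B) * h
    · right; linear_combination (A+B) * h - f2
  rcases hu4 with h | h | h | h <;> rcases hw4 with h' | h' | h' | h' <;>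
    rcases g1 with g | g <;> rcases g2 with g' | g' <;> linarith

/-- From a non-canonical representation of `n^2+(n+1)^2` as a sum of two squares,
produce a decomposition of the pronic number `n*(n+1)`. -/
private lemma rep_to_decomp (n x y : ℕ) (hn : 2 ≤ n) (hyx : y ≤ x)
    (hrep : x^2 + y^2 = n^2 + (n+1)^2) (hne : ¬(x = n + 1 ∧ y = n)) :
    ∃ p q : ℕ, p*(p+1) + q*(q+1) = n*(n+1) ∧ p < n ∧ q < n := by
  have hx2 : x ^ 2 % 2 = x % 2 := by
    rw [Nat.pow_mod]; rcases Nat.mod_two_eq_zero_or_one x with h | h <;> rw [h] <;> norm_num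
  have hy2 : y ^ 2 % 2 = y % 2 := by
    rw [Nat.pow_mod]; rcases Nat.mod_two_eq_zero_or_one y with h | h <;> rw [h] <;> norm_num
  have hn2 : n ^ 2 % 2 = n % 2 := by
    rw [Nat.pow_mod]; rcases Nat.mod_two_eq_zero_or_one n with h | h <;> rw [h] <;> norm_num
  have hn12 : (n+1) ^ 2 % 2 = (n+1) % 2 := by
    rw [Nat.pow_mod]; rcases Nat.mod_two_eq_zero_or_one (n+1) with h | h <;> rw [h] <;> norm_num
  have hparode : (x + y) % 2 = 1 := by
    have hsum : (x^2 + y^2) % 2 = 1 := by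
      rw [hrep, Nat.add_mod, hn2, hn12]; omega
    rw [Nat.add_mod, hx2, hy2] at hsum
    omega
  have hxy_ne : x ≠ y := by intro h; subst h; omega
  have hyx' : y < x := lt_of_le_of_ne hyx (Ne.symm hxy_ne)
  have hrepZ : (x:ℤ)^2 + (y:ℤ)^2 = (n:ℤ)^2 + ((n:ℤ)+1)^2 := by exact_mod_cast hrep
  have hxne1 : x ≠ y + 1 := by
    intro hx1
    subst hx1
    have h1 : y ≤ n := by
      by_contra hgt; push_neg at hgt
      have hgt' : (n:ℤ) + 1 ≤ (y:ℤ) := by exact_mod_cast hgt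
      nlinarith [hrepZ]
    have h2 : n ≤ y := by
      by_contra hgt; push_neg at hgt
      have hgt' : (y:ℤ) + 1 ≤ (n:ℤ) := by exact_mod_cast hgt
      nlinarith [hrepZ]
    exact hne ⟨by omega, by omega⟩
  have hxy2 : y + 2 ≤ x := by omega
  have hsum2n : x + y ≤ 2*n := by
    by_contra hcon
    push_neg at hcon
    have h1 : (y:ℤ) + 2 ≤ (x:ℤ) := by exact_mod_cast hxy2
    have h2 : 2*(n:ℤ) + 1 ≤ (x:ℤ) + (y:ℤ) := by exact_mod_cast hcon
    nlinarith [sq_nonneg ((x:ℤ) - (y:ℤ) - 2), sq_nonneg ((x:ℤ) + (y:ℤ) - 2*(n:ℤ) - 1)]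
  obtain ⟨t, ht⟩ : ∃ t, x + y = 2*t + 1 := ⟨(x+y)/2, by omega⟩
  have hty : y ≤ t := by omega
  have htZ : (x:ℤ) + (y:ℤ) = 2*(t:ℤ) + 1 := by exact_mod_cast ht
  refine ⟨t, t - y, ?_, by omega, by omega⟩
  zify [hty]
  refine mul_left_cancel₀ (two_ne_zero' ℤ) ?_
  linear_combination hrepZ - ((x:ℤ) + 2*(t:ℤ) + 1 - (y:ℤ)) * htZ

/-- Core of the forward direction, over ℤ. -/
private lemma fwd' (nz xz yz Nz : ℤ) (hn : 2 ≤ nz) (hy : 0 ≤ yz) (hx1 : yz + 1 ≤ xz)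
    (hxub : xz ≤ 2*nz - 1) (hyub : yz ≤ nz - 1) (hxy : xz^2 + yz^2 = Nz)
    (hNz : Nz = 2*(nz*(nz+1))+1) (hpr : Prime Nz) : False := by
  have hNpos : 0 < Nz := by rw [hNz]; nlinarith
  have hK2pos : 0 < (nz+1)*xz - nz*yz := by
    nlinarith [mul_le_mul_of_nonneg_left hx1 (by linarith : (0:ℤ) ≤ nz+1)]
  have hK1pos : 0 < (nz+1)*xz + nz*yz := by
    nlinarith [mul_nonneg (by linarith : (0:ℤ) ≤ nz) hy]
  have hid : ((nz+1)*xz + nz*yz)^2 + ((nz+1)*yz - nz*xz)^2 = Nz^2 := by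
    linear_combination (2*nz^2+2*nz+1) * hxy - Nz * hNz
  have hK1leN : (nz+1)*xz + nz*yz ≤ Nz := by
    nlinarith [hid, sq_nonneg ((nz+1)*yz - nz*xz), hK1pos, hNpos]
  have hdvd : Nz ∣ ((nz+1)*xz + nz*yz) * ((nz+1)*xz - nz*yz) :=
    ⟨xz^2 - nz^2, by linear_combination (-nz^2) * hxy - xz^2 * hNz⟩
  have hK1N : (nz+1)*xz + nz*yz = Nz := by
    rcases hpr.dvd_or_dvd hdvd with h | h
    · exact le_antisymm hK1leN (Int.le_of_dvd hK1pos h)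
    · have h2 := Int.le_of_dvd hK2pos h
      have h3 : (nz+1)*xz - nz*yz ≤ (nz+1)*xz + nz*yz := by
        nlinarith [mul_nonneg (by linarith : (0:ℤ) ≤ nz) hy]
      exact le_antisymm hK1leN (by linarith)
  have h0 : ((nz+1)*yz - nz*xz)^2 = 0 := by
    linear_combination hid - ((nz+1)*xz + nz*yz + Nz) * hK1N
  have heq : (nz+1)*yz = nz*xz := by
    have h := pow_eq_zero_iff (by norm_num : (2:ℕ) ≠ 0) |>.mp h0
    linarith [h]
  have hcop : IsCoprime (nz+1) nz := ⟨1, -1, by ring⟩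
  have hdx : (nz+1) ∣ xz := hcop.dvd_of_dvd_mul_left ⟨yz, heq.symm⟩
  obtain ⟨k, hk⟩ := hdx
  have hk1 : 1 ≤ k := by nlinarith
  have hk2 : k ≤ 1 := by nlinarith
  have hxzval : xz = nz + 1 := by
    have hk' : k = 1 := le_antisymm hk2 hk1
    rw [hk', mul_one] at hk; linarith [hk]
  have hyzval : yz = nz := by
    have h2 : (nz+1)*yz = (nz+1)*nz := by rw [heq, hxzval]; ring
    have := mul_left_cancel₀ (by omega : nz+1 ≠ (0:ℤ)) h2
    linarith [this]
  linarith

/-- Forward direction: a decomposition forces `2c+1` to be non-prime. -/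
private lemma fwd (n p q : ℕ) (hn : 2 ≤ n) (hqp : q ≤ p) (hpn : p < n) (hqn : q < n)
    (hsum : p*(p+1) + q*(q+1) = n*(n+1)) (hpr : Nat.Prime (2*(n*(n+1))+1)) : False := by
  have hprZ : Prime ((2:ℤ)*((n:ℤ)*((n:ℤ)+1))+1) := by
    have h := Nat.prime_iff_prime_int.mp hpr
    have e : ((2*(n*(n+1))+1 : ℕ) : ℤ) = 2*((n:ℤ)*((n:ℤ)+1))+1 := by push_cast; ring
    rwa [e] at h
  have hsumZ : (p:ℤ)*((p:ℤ)+1) + (q:ℤ)*((q:ℤ)+1) = (n:ℤ)*((n:ℤ)+1) := by exact_mod_cast hsum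
  have hq' : (q:ℤ) ≤ (p:ℤ) := by exact_mod_cast hqp
  have hp' : (p:ℤ) + 1 ≤ (n:ℤ) := by exact_mod_cast hpn
  have hq'' : (q:ℤ) + 1 ≤ (n:ℤ) := by exact_mod_cast hqn
  have hq0 : (0:ℤ) ≤ (q:ℤ) := Int.natCast_nonneg q
  refine fwd' (n:ℤ) ((p:ℤ)+(q:ℤ)+1) ((p:ℤ)-(q:ℤ)) (2*((n:ℤ)*((n:ℤ)+1))+1)
    (by exact_mod_cast hn) (by linarith) (by linarith) (by linarith) (by linarith)
    (by linear_combination 2*hsumZ) rfl hprZ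

theorem trigonal_a_plus_b (c : ℕ) (hc : IsTrigonal c) (h6 : 6 ≤ c) :
    (∃ a b : ℕ, IsTrigonal a ∧ IsTrigonal b ∧ a < c ∧ b < c ∧ c = a + b)
      ↔ ¬ Nat.Prime (2 * c + 1) := by
  obtain ⟨n, hcn⟩ := hc
  have hn2 : 2 ≤ n := by
    by_contra h
    push_neg at h
    interval_cases n <;> omega
  constructor
  · rintro ⟨a, b, ⟨p, rfl⟩, ⟨q, rfl⟩, ha, hb, hab⟩ hpr
    rw [hcn] at ha hb hab hpr
    have hpn : p < n := by
      by_contra hcon; push_neg at hcon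
      exact absurd ha (not_lt.mpr (Nat.mul_le_mul hcon (Nat.succ_le_succ hcon)))
    have hqn : q < n := by
      by_contra hcon; push_neg at hcon
      exact absurd hb (not_lt.mpr (Nat.mul_le_mul hcon (Nat.succ_le_succ hcon)))
    rcases le_total q p with h | h
    · exact fwd n p q hn2 h hpn hqn (by linarith) hpr
    · exact fwd n q p hn2 h hqn hpn (by linarith) hpr
  · intro hnp
    have hNrep : 2*c+1 = n^2+(n+1)^2 := by rw [hcn]; ring
    have hcop : Nat.Coprime n (n+1) := Nat.coprime_self_add_right.mpr (Nat.coprime_one_right n)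
    have hsqneg : IsSquare (-1 : ZMod (2*c+1)) :=
      ZMod.isSquare_neg_one_of_eq_sq_add_sq_of_coprime hNrep hcop
    have hN1 : 2*c+1 ≠ 1 := by omega
    obtain ⟨P, hPp, hPd⟩ := Nat.exists_prime_and_dvd hN1
    obtain ⟨M, hPM⟩ := hPd
    have hodd : Odd (2*c+1) := by rw [Nat.odd_iff]; omega
    rw [hPM] at hodd
    obtain ⟨hPodd, hModd⟩ := Nat.odd_mul.mp hodd
    have hM1 : M ≠ 1 := by
      rintro rfl
      rw [Nat.mul_one] at hPM
      exact hnp (by rw [hPM]; exact hPp)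
    have hM0 : M ≠ 0 := by
      rintro rfl
      rw [Nat.mul_zero] at hPM
      omega
    have hM2 : 2 ≤ M := by omega
    have hP2 : 2 ≤ P := hPp.two_le
    have hsqP : IsSquare (-1 : ZMod P) :=
      ZMod.isSquare_neg_one_of_dvd ⟨M, hPM⟩ hsqneg
    have hsqM : IsSquare (-1 : ZMod M) :=
      ZMod.isSquare_neg_one_of_dvd ⟨P, by rw [hPM, Nat.mul_comm]⟩ hsqneg
    obtain ⟨a, b, hPab⟩ := Nat.eq_sq_add_sq_of_isSquare_mod_neg_one hsqP
    obtain ⟨s, t, hMst⟩ := Nat.eq_sq_add_sq_of_isSquare_mod_neg_one hsqM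
    have hab_ne : a ≠ b := by
      rintro rfl
      exact (Nat.not_odd_iff_even.mpr ⟨a^2, hPab⟩) hPodd
    have hst_ne : s ≠ t := by
      rintro rfl
      exact (Nat.not_odd_iff_even.mpr ⟨s^2, hMst⟩) hModd
    have hPabZ : (a:ℤ)^2 + (b:ℤ)^2 = (P:ℤ) := by exact_mod_cast hPab.symm
    have hMstZ : (s:ℤ)^2 + (t:ℤ)^2 = (M:ℤ) := by exact_mod_cast hMst.symm
    have hNZ : (P:ℤ)*(M:ℤ) = 2*(c:ℤ)+1 := by exact_mod_cast hPM.symm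
    have hnc : (c:ℤ) = (n:ℤ)*((n:ℤ)+1) := by exact_mod_cast hcn
    have hsqabs : ∀ z : ℤ, ((z.natAbs : ℤ))^2 = z^2 := fun z => by
      rw [← Int.abs_eq_natAbs, sq_abs]
    have hrep2 : ∃ x y : ℕ, x^2+y^2 = n^2+(n+1)^2 ∧ ¬(x = n+1 ∧ y = n) ∧ ¬(x = n ∧ y = n+1) := by
      by_contra hcontra
      push_neg at hcontra
      have Hd : ∀ x y : ℕ, x^2+y^2 = n^2+(n+1)^2 →
          (x = n+1 ∧ y = n) ∨ (x = n ∧ y = n+1) := by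
        intro x y hr
        by_cases h1 : x = n+1 ∧ y = n
        · exact Or.inl h1
        · exact Or.inr (hcontra x y hr (fun hx hy => h1 ⟨hx, hy⟩))
      have hZ1 : ((((a:ℤ)*(s:ℤ) + (b:ℤ)*(t:ℤ)).natAbs : ℤ))^2
          + ((((a:ℤ)*(t:ℤ) - (b:ℤ)*(s:ℤ)).natAbs : ℤ))^2 = ((n:ℤ))^2 + ((n:ℤ)+1)^2 := by
        rw [hsqabs, hsqabs]
        linear_combination ((s:ℤ)^2+(t:ℤ)^2) * hPabZ + (P:ℤ) * hMstZ + hNZ + 2*hnc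
      have hZ2 : ((((a:ℤ)*(s:ℤ) - (b:ℤ)*(t:ℤ)).natAbs : ℤ))^2
          + ((((a:ℤ)*(t:ℤ) + (b:ℤ)*(s:ℤ)).natAbs : ℤ))^2 = ((n:ℤ))^2 + ((n:ℤ)+1)^2 := by
        rw [hsqabs, hsqabs]
        linear_combination ((s:ℤ)^2+(t:ℤ)^2) * hPabZ + (P:ℤ) * hMstZ + hNZ + 2*hnc
      have hrepN1 : (((a:ℤ)*(s:ℤ) + (b:ℤ)*(t:ℤ)).natAbs)^2
          + (((a:ℤ)*(t:ℤ) - (b:ℤ)*(s:ℤ)).natAbs)^2 = n^2+(n+1)^2 := by exact_mod_cast hZ1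
      have hrepN2 : (((a:ℤ)*(s:ℤ) - (b:ℤ)*(t:ℤ)).natAbs)^2
          + (((a:ℤ)*(t:ℤ) + (b:ℤ)*(s:ℤ)).natAbs)^2 = n^2+(n+1)^2 := by exact_mod_cast hZ2
      have k1 := Hd _ _ hrepN1
      have k2 := Hd _ _ hrepN2
      have h1 : (|(a:ℤ)*(s:ℤ) + (b:ℤ)*(t:ℤ)| = (n:ℤ) + 1 ∧ |(a:ℤ)*(t:ℤ) - (b:ℤ)*(s:ℤ)| = (n:ℤ))
          ∨ (|(a:ℤ)*(s:ℤ) + (b:ℤ)*(t:ℤ)| = (n:ℤ) ∧ |(a:ℤ)*(t:ℤ) - (b:ℤ)*(s:ℤ)| = (n:ℤ) + 1) := by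
        rcases k1 with ⟨hu, hv⟩ | ⟨hu, hv⟩
        · left
          constructor
          · rw [Int.abs_eq_natAbs, hu]; push_cast; ring
          · rw [Int.abs_eq_natAbs, hv]
        · right
          constructor
          · rw [Int.abs_eq_natAbs, hu]
          · rw [Int.abs_eq_natAbs, hv]; push_cast; ring
      have h2 : (|(a:ℤ)*(s:ℤ) - (b:ℤ)*(t:ℤ)| = (n:ℤ) + 1 ∧ |(a:ℤ)*(t:ℤ) + (b:ℤ)*(s:ℤ)| = (n:ℤ))
          ∨ (|(a:ℤ)*(s:ℤ) - (b:ℤ)*(t:ℤ)| = (n:ℤ) ∧ |(a:ℤ)*(t:ℤ) + (b:ℤ)*(s:ℤ)| = (n:ℤ) + 1) := by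
        rcases k2 with ⟨hu, hv⟩ | ⟨hu, hv⟩
        · left
          constructor
          · rw [Int.abs_eq_natAbs, hu]; push_cast; ring
          · rw [Int.abs_eq_natAbs, hv]
        · right
          constructor
          · rw [Int.abs_eq_natAbs, hu]
          · rw [Int.abs_eq_natAbs, hv]; push_cast; ring
      exact key_combo (n:ℤ) (a:ℤ) (b:ℤ) (s:ℤ) (t:ℤ)
        (Int.natCast_nonneg a) (Int.natCast_nonneg b) (Int.natCast_nonneg s) (Int.natCast_nonneg t)
        (by rw [hPabZ]; exact_mod_cast hP2) (by rw [hMstZ]; exact_mod_cast hM2)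
        (by exact_mod_cast hab_ne) (by exact_mod_cast hst_ne)
        (Int.natCast_nonneg n) h1 h2
    obtain ⟨x, y, hxyrep, hne1, hne2⟩ := hrep2
    have final : ∃ p q : ℕ, p*(p+1) + q*(q+1) = n*(n+1) ∧ p < n ∧ q < n := by
      rcases le_total y x with hyx | hxy'
      · exact rep_to_decomp n x y hn2 hyx hxyrep hne1
      · refine rep_to_decomp n y x hn2 hxy' (by linarith) ?_
        exact fun h => hne2 ⟨h.2, h.1⟩
    obtain ⟨p, q, hpq, hp, hq⟩ := final
    have hplt : p*(p+1) < n*(n+1) := by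
      have h1 : p + 1 ≤ n := hp
      calc p*(p+1) ≤ p*n := Nat.mul_le_mul_left p h1
        _ < n*(n+1) := by nlinarith
    have hqlt : q*(q+1) < n*(n+1) := by
      have h1 : q + 1 ≤ n := hq
      calc q*(q+1) ≤ q*n := Nat.mul_le_mul_left q h1
        _ < n*(n+1) := by nlinarith
    exact ⟨p*(p+1), q*(q+1), ⟨p, rfl⟩, ⟨q, rfl⟩, by rw [hcn]; exact hplt,
      by rw [hcn]; exact hqlt, by rw [hcn]; omega⟩
end

section
/- A trigonal number c ≥ 6 can be written as c = 2a + b with trigonal numbers a, b < c if and only if 4c + 3 is not prime. -/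
theorem Nat.sq_mod_four_le_one (n : ℕ) : n ^ 2 % 4 ≤ 1 := by
  rcases Nat.even_or_odd' n with ⟨k, rfl | rfl⟩ <;> ring_nf <;> omega

theorem isTrigonal_iff_exists_four_mul_add_one_eq_sq {a : ℕ} :
    IsTrigonal a ↔ ∃ u : ℕ, 4 * a + 1 = u ^ 2 := by
  constructor
  · rintro ⟨n, rfl⟩
    exact ⟨2 * n + 1, by ring⟩
  · rintro ⟨u, hu⟩
    rcases Nat.even_or_odd' u with ⟨n, rfl | rfl⟩
    · ring_nf at hu; omega
    · exact ⟨n, by ring_nf at hu ⊢; omega⟩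

theorem exists_trigonal_two_mul_add_iff (c : ℕ) :
    (∃ a b : ℕ, IsTrigonal a ∧ IsTrigonal b ∧ a < c ∧ b < c ∧ c = 2 * a + b) ↔
      ∃ u v : ℕ, 4 * c + 3 = u ^ 2 + 2 * v ^ 2 ∧ v ≠ 1 := by
  simp only [isTrigonal_iff_exists_four_mul_add_one_eq_sq]
  constructor
  · rintro ⟨a, b, ⟨v, hv⟩, ⟨u, hu⟩, -, hbc, rfl⟩
    refine ⟨u, v, by omega, ?_⟩
    rintro rfl
    omega
  · rintro ⟨u, v, huv, hv⟩
    have hv1 : v ^ 2 ≠ 1 := by simpa [Nat.pow_eq_one] using hv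
    have := Nat.sq_mod_four_le_one u
    have := Nat.sq_mod_four_le_one v
    exact ⟨v ^ 2 / 4, u ^ 2 / 4, ⟨v, by omega⟩, ⟨u, by omega⟩, by omega, by omega, by omega⟩

/-- Thue's lemma. -/
theorem Int.exists_abs_le_sqrt_dvd_sub_mul (n : ℕ) [NeZero n] (t : ℤ) :
    ∃ x y : ℤ, (x ≠ 0 ∨ y ≠ 0) ∧ |x| ≤ n.sqrt ∧ |y| ≤ n.sqrt ∧ (n : ℤ) ∣ x - t * y := by
  set s := n.sqrt
  have hcard : (Finset.univ : Finset (ZMod n)).card <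
      (Finset.range (s + 1) ×ˢ Finset.range (s + 1)).card := by
    simpa [Finset.card_univ, ZMod.card, ← sq] using Nat.lt_succ_sqrt' n
  obtain ⟨⟨i, j⟩, hij, ⟨i', j'⟩, hij', hne, heq⟩ :=
    Finset.exists_ne_map_eq_of_card_lt_of_maps_to hcard
      (f := fun p : ℕ × ℕ => ((p.1 : ℤ) - t * p.2 : ZMod n)) (fun _ _ => Finset.mem_univ _)
  simp only [Finset.mem_product, Finset.mem_range] at hij hij'
  refine ⟨i - i', j - j', ?_, ?_, ?_, ?_⟩
  · by_contra! h
    exact hne (Prod.ext (by omega) (by omega))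
  · rw [abs_le]; constructor <;> omega
  · rw [abs_le]; constructor <;> omega
  · rw [← ZMod.intCast_zmod_eq_zero_iff_dvd]
    push_cast at heq ⊢
    linear_combination heq

theorem Nat.Prime.sqrt_sq_lt {p : ℕ} (hp : p.Prime) : p.sqrt ^ 2 < p :=
  (Nat.sqrt_le' p).lt_of_ne fun h => hp.prime.irreducible.not_isSquare ⟨p.sqrt, by rw [← sq, h]⟩

theorem Nat.Prime.exists_eq_sq_add_two_mul_sq {p : ℕ} (hp : p.Prime) {t : ℤ}
    (hdvd : (p : ℤ) ∣ t ^ 2 + 2) : ∃ x y : ℤ, (p : ℤ) = x ^ 2 + 2 * y ^ 2 := by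
  have : NeZero p := ⟨hp.ne_zero⟩
  obtain ⟨x, y, hxy, hx, hy, hxty⟩ := Int.exists_abs_le_sqrt_dvd_sub_mul p t
  have hs : (p.sqrt : ℤ) ^ 2 < p := by exact_mod_cast hp.sqrt_sq_lt
  have hx2 : x ^ 2 < p := (sq_le_sq' (abs_le.1 hx).1 (abs_le.1 hx).2).trans_lt hs
  have hy2 : y ^ 2 < p := (sq_le_sq' (abs_le.1 hy).1 (abs_le.1 hy).2).trans_lt hs
  have hpos : 0 < x ^ 2 + 2 * y ^ 2 := by
    rcases hxy with h | h <;> positivity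
  obtain ⟨k, hk⟩ : (p : ℤ) ∣ x ^ 2 + 2 * y ^ 2 := by
    obtain ⟨a, ha⟩ := hxty
    obtain ⟨b, hb⟩ := hdvd
    exact ⟨a * (x + t * y) + y ^ 2 * b, by linear_combination (x + t * y) * ha + y ^ 2 * hb⟩
  have hk1 : 0 < k := pos_of_mul_pos_right (hk ▸ hpos) (by positivity)
  have hk2 : k < 3 := lt_of_mul_lt_mul_left (by linarith) (by positivity : (0 : ℤ) ≤ p)
  interval_cases k
  · exact ⟨x, y, by linarith⟩
  · obtain ⟨w, rfl⟩ : Even x := by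
      rw [← Int.even_pow' two_ne_zero]; exact ⟨p - y ^ 2, by linarith⟩
    exact ⟨y, w, by linarith⟩

namespace Prime

variable {p x y u v : ℤ}

theorem dvd_or_dvd_of_dvd_sq_add_two_mul_sq (hp : Prime p) (hpxy : p = x ^ 2 + 2 * y ^ 2)
    (hdvd : p ∣ u ^ 2 + 2 * v ^ 2) : p ∣ u * y - v * x ∨ p ∣ u * y + v * x := by
  apply hp.dvd_or_dvd
  obtain ⟨k, hk⟩ := hdvd
  exact ⟨y ^ 2 * k - v ^ 2, by linear_combination y ^ 2 * hk + v ^ 2 * hpxy⟩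

theorem exists_sq_add_two_mul_sq_of_dvd_mul_sub (hp : Prime p) (hpxy : p = x ^ 2 + 2 * y ^ 2)
    (hdvd : p ∣ u ^ 2 + 2 * v ^ 2) (h : p ∣ u * y - v * x) :
    ∃ a b : ℤ, u ^ 2 + 2 * v ^ 2 = p * (a ^ 2 + 2 * b ^ 2) := by
  have hmul : (u ^ 2 + 2 * v ^ 2) * p = (u * x + 2 * v * y) ^ 2 + 2 * (u * y - v * x) ^ 2 := by
    rw [hpxy]; ring
  obtain ⟨b, hb⟩ := h
  obtain ⟨a, ha⟩ : p ∣ u * x + 2 * v * y := by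
    apply hp.dvd_of_dvd_pow (n := 2)
    obtain ⟨k, hk⟩ := hdvd
    exact ⟨k * p - 2 * p * b ^ 2,
      by linear_combination -hmul + p * hk - 2 * (u * y - v * x + p * b) * hb⟩
  refine ⟨a, b, mul_right_cancel₀ hp.ne_zero ?_⟩
  rw [hmul, ha, hb]; ring

theorem exists_sq_add_two_mul_sq_of_dvd (hp : Prime p) (hpxy : p = x ^ 2 + 2 * y ^ 2)
    (hdvd : p ∣ u ^ 2 + 2 * v ^ 2) : ∃ a b : ℤ, u ^ 2 + 2 * v ^ 2 = p * (a ^ 2 + 2 * b ^ 2) := by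
  rcases hp.dvd_or_dvd_of_dvd_sq_add_two_mul_sq hpxy hdvd with h | h
  · exact hp.exists_sq_add_two_mul_sq_of_dvd_mul_sub hpxy hdvd h
  · simpa using hp.exists_sq_add_two_mul_sq_of_dvd_mul_sub (v := -v) hpxy (by simpa using hdvd)
      (by simpa [sub_eq_add_neg] using h)

theorem sq_eq_sq_of_eq_sq_add_two_mul_sq_of_dvd_mul_sub (hp : Prime p)
    (hpxy : p = x ^ 2 + 2 * y ^ 2) (hpuv : p = u ^ 2 + 2 * v ^ 2) (h : p ∣ u * y - v * x) : v ^ 2 = y ^ 2 := by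
  have hsq : p ^ 2 = (u * x + 2 * v * y) ^ 2 + 2 * (u * y - v * x) ^ 2 := by
    nth_rw 1 [sq, hpxy, hpuv]; ring
  obtain ⟨k, hk⟩ := h
  have hk0 : k = 0 := by
    by_contra hk0
    have : 1 ≤ k ^ 2 := by have := sq_pos_of_ne_zero hk0; omega
    rw [hk, mul_pow] at hsq
    nlinarith [sq_nonneg (u * x + 2 * v * y), sq_pos_of_ne_zero hp.ne_zero,
      mul_le_mul_of_nonneg_left this (sq_nonneg p)]
  subst hk0
  have : p * (y ^ 2 - v ^ 2) = 0 := by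
    linear_combination y ^ 2 * hpuv - v ^ 2 * hpxy + (u * y + v * x) * hk
  linarith [(mul_eq_zero.1 this).resolve_left hp.ne_zero]

theorem sq_eq_sq_of_eq_sq_add_two_mul_sq (hp : Prime p) (hpxy : p = x ^ 2 + 2 * y ^ 2)
    (hpuv : p = u ^ 2 + 2 * v ^ 2) : v ^ 2 = y ^ 2 := by
  rcases hp.dvd_or_dvd_of_dvd_sq_add_two_mul_sq hpxy (dvd_of_eq hpuv) with h | h
  · exact hp.sq_eq_sq_of_eq_sq_add_two_mul_sq_of_dvd_mul_sub hpxy hpuv h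
  · simpa using hp.sq_eq_sq_of_eq_sq_add_two_mul_sq_of_dvd_mul_sub (v := -v) hpxy
      (by simpa using hpuv) (by simpa [sub_eq_add_neg] using h)

end Prime

theorem exists_mul_eq_sq_add_two_mul_sq_of_two_lt {x y a b : ℤ} (hxy : 2 < x ^ 2 + 2 * y ^ 2)
    (hab : 2 < a ^ 2 + 2 * b ^ 2) :
    ∃ u v : ℤ, (x ^ 2 + 2 * y ^ 2) * (a ^ 2 + 2 * b ^ 2) = u ^ 2 + 2 * v ^ 2 ∧ v ^ 2 ≠ 1 := by
  by_contra! h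
  have h₁ := h (x * a - 2 * y * b) (x * b + y * a) (by ring)
  have h₂ := h (x * a + 2 * y * b) (x * b - y * a) (by ring)
  have hsum : 2 * (x ^ 2 * b ^ 2 + y ^ 2 * a ^ 2) = 2 * 1 := by linear_combination h₁ + h₂
  have hprod : 4 * (x * b * (y * a)) = 4 * 0 := by linear_combination h₁ - h₂
  replace hsum := mul_left_cancel₀ two_ne_zero hsum
  rcases mul_eq_zero.1 (mul_left_cancel₀ four_ne_zero hprod) with h0 | h0
  · have hya : y ^ 2 * a ^ 2 = 1 := by linear_combination hsum - x * b * h0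
    have hy := Int.eq_one_of_mul_eq_one_right (sq_nonneg _) hya
    have ha := Int.eq_one_of_mul_eq_one_left (sq_nonneg _) hya
    rcases mul_eq_zero.1 h0 with rfl | rfl <;> linarith
  · have hxb : x ^ 2 * b ^ 2 = 1 := by linear_combination hsum - y * a * h0
    have hx := Int.eq_one_of_mul_eq_one_right (sq_nonneg _) hxb
    have hb := Int.eq_one_of_mul_eq_one_left (sq_nonneg _) hxb
    rcases mul_eq_zero.1 h0 with rfl | rfl <;> linarith

theorem exists_eq_sq_add_two_mul_sq_of_not_prime {n : ℕ} {t : ℤ} (hn : (n : ℤ) = t ^ 2 + 2)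
    (hodd : Odd n) (hnp : ¬n.Prime) : ∃ u v : ℤ, (n : ℤ) = u ^ 2 + 2 * v ^ 2 ∧ v ^ 2 ≠ 1 := by
  have hn1 : n ≠ 1 := by rintro rfl; push_cast at hn; nlinarith [sq_nonneg t]
  obtain ⟨q, hq, m, rfl⟩ := Nat.exists_prime_and_dvd hn1
  push_cast at hn
  obtain ⟨x, y, hqxy⟩ := hq.exists_eq_sq_add_two_mul_sq (t := t) ⟨m, hn.symm⟩
  obtain ⟨a, b, hab⟩ := (Nat.prime_iff_prime_int.mp hq).exists_sq_add_two_mul_sq_of_dvd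
    (u := t) (v := 1) hqxy ⟨m, by linear_combination -hn⟩
  have hmab : (m : ℤ) = a ^ 2 + 2 * b ^ 2 := by
    refine mul_left_cancel₀ (by exact_mod_cast hq.ne_zero : (q : ℤ) ≠ 0) ?_
    linear_combination hn + hab
  have hq2 : 2 < q := by
    have := hq.two_le
    have : q ≠ 2 := by rintro rfl; exact Nat.not_even_iff_odd.2 hodd (even_two_mul m)
    omega
  have hm2 : 2 < m := by
    have : m ≠ 1 := by rintro rfl; exact hnp (by simpa using hq)
    have := Nat.odd_iff.1 (Nat.odd_mul.1 hodd).2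
    omega
  obtain ⟨u, v, huv, hv⟩ := exists_mul_eq_sq_add_two_mul_sq_of_two_lt
    (hqxy ▸ (by exact_mod_cast hq2 : (2 : ℤ) < q)) (hmab ▸ (by exact_mod_cast hm2 : (2 : ℤ) < m))
  exact ⟨u, v, by push_cast; rw [hqxy, hmab, huv], hv⟩

theorem trigonal_two_a_plus_b_general (c : ℕ) (hc : IsTrigonal c) :
    (∃ a b : ℕ, IsTrigonal a ∧ IsTrigonal b ∧ a < c ∧ b < c ∧ c = 2 * a + b)
      ↔ ¬ Nat.Prime (4 * c + 3) := by
  obtain ⟨n, rfl⟩ := hc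
  have hN : ((4 * (n * (n + 1)) + 3 : ℕ) : ℤ) = (2 * n + 1) ^ 2 + 2 := by push_cast; ring
  rw [exists_trigonal_two_mul_add_iff]
  constructor
  · rintro ⟨u, v, huv, hv⟩ hp
    have hv1 : (v : ℤ) ^ 2 = 1 ^ 2 :=
      (Nat.prime_iff_prime_int.mp hp).sq_eq_sq_of_eq_sq_add_two_mul_sq (x := 2 * n + 1) (u := u)
        (by rw [hN]; ring) (by exact_mod_cast huv)
    exact hv (Nat.pow_left_injective two_ne_zero (by exact_mod_cast hv1))
  · intro hnp
    obtain ⟨u, v, huv, hv⟩ :=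
      exists_eq_sq_add_two_mul_sq_of_not_prime hN ⟨2 * (n * (n + 1)) + 1, by ring⟩ hnp
    refine ⟨u.natAbs, v.natAbs, by zify; simpa [sq_abs] using huv, ?_⟩
    intro hv1
    exact hv (by rw [← Int.natAbs_sq, hv1]; norm_num)

theorem trigonal_two_a_plus_b (c : ℕ) (hc : IsTrigonal c) (h6 : 6 ≤ c) :
    (∃ a b : ℕ, IsTrigonal a ∧ IsTrigonal b ∧ a < c ∧ b < c ∧ c = 2 * a + b)
      ↔ ¬ Nat.Prime (4 * c + 3) :=
  trigonal_two_a_plus_b_general c hc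
end

section
/- Every trigonal number c ≥ 6 is the sum of at most three smaller trigonal numbers. -/
theorem trigonal_sum_of_at_most_three (c : ℕ) (hc : IsTrigonal c) (h6 : 6 ≤ c) :
    (∃ a b : ℕ, IsTrigonal a ∧ IsTrigonal b ∧ a < c ∧ b < c ∧ c = a + b) ∨
    (∃ a b d : ℕ, IsTrigonal a ∧ IsTrigonal b ∧ IsTrigonal d ∧
      a < c ∧ b < c ∧ d < c ∧ c = a + b + d) := by
  obtain ⟨n, rfl⟩ := hc
  have h2 : 2 ≤ n := by by_contra h; interval_cases n <;> omega
  obtain ⟨a, ha | ha | ha⟩ : ∃ a, n = 3*a ∨ n = 3*a+1 ∨ n = 3*a+2 := ⟨n/3, by omega⟩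
  · -- n = 3a, a ≥ 1; write a = b+1
    obtain ⟨b, rfl⟩ : ∃ b, a = b + 1 := ⟨a - 1, by omega⟩
    refine Or.inr ⟨b*(b+1), (2*(b+1))*(2*(b+1)+1), (2*(b+1))*(2*(b+1)+1),
      ⟨b, rfl⟩, ⟨2*(b+1), rfl⟩, ⟨2*(b+1), rfl⟩, ?_, ?_, ?_, ?_⟩ <;> subst ha <;> nlinarith [sq_nonneg b]
  · refine Or.inr ⟨a*(a+1), (2*a)*(2*a+1), (2*a+1)*(2*a+2),
      ⟨a, rfl⟩, ⟨2*a, rfl⟩, ⟨2*a+1, rfl⟩, ?_, ?_, ?_, ?_⟩ <;> subst ha <;>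
      nlinarith [sq_nonneg a]
  · refine Or.inr ⟨(a+1)*(a+2), (2*a+1)*(2*a+2), (2*a+1)*(2*a+2),
      ⟨a+1, rfl⟩, ⟨2*a+1, rfl⟩, ⟨2*a+1, rfl⟩, ?_, ?_, ?_, ?_⟩ <;> subst ha <;>
      nlinarith [sq_nonneg a]
end

section
/- An almost-square c ≥ 3 (i.e., c = n² - 1 for some integer n ≥ 1) is the sum of two smaller almost-squares if and only if c + 2 is neither a prime nor twice a prime. -/
def IsAlmostSquare (c : ℕ) : Prop := ∃ n : ℕ, 1 ≤ n ∧ c = n ^ 2 - 1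

/-- A prime (cast from ℕ) is not a square of an integer. -/
lemma prime_not_sq {p : ℕ} (hp : p.Prime) {t : ℤ} (h : (p:ℤ) = t^2) : False := by
  have h1 : (t.natAbs : ℤ)^2 = (p:ℤ) := by rw [← Int.natAbs_sq t] at h; exact_mod_cast h.symm
  have h2 : t.natAbs ^ 2 = p := by exact_mod_cast h1
  rcases (Nat.Prime.eq_one_or_self_of_dvd hp t.natAbs ⟨t.natAbs, by rw [← h2]; ring⟩) with h3 | h3
  · rw [h3] at h2; simp at h2; exact hp.one_lt.ne' h2.symm
  · rw [h3] at h2; nlinarith [hp.one_lt]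

/-- n^2 + 1 is not a perfect square for n ≥ 1. -/
lemma sq_ne_sq_add_one {y n : ℤ} (hn : 1 ≤ n) (h : y^2 = n^2 + 1) : False := by
  have ha : |y|^2 = n^2 + 1 := by rw [sq_abs]; exact h
  have h0 : (0:ℤ) ≤ |y| := abs_nonneg y
  have h2 : n < |y| := by nlinarith
  have h3 : n + 1 ≤ |y| := h2
  nlinarith

lemma sq_uniq_aux {q u v s t : ℤ} (hq : Prime q) (h1 : u^2+v^2 = q) (h2 : s^2+t^2 = q)
    (hd : q ∣ u*t - v*s) : u^2 = s^2 ∨ u^2 = t^2 := by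
  obtain ⟨k, hk⟩ := hd
  have hq0 : q ≠ 0 := hq.ne_zero
  have hq2 : (0:ℤ) < q^2 := lt_of_le_of_ne (sq_nonneg q) (Ne.symm (pow_ne_zero 2 hq0))
  have hsum : (u*s + v*t)^2 = q^2*(1 - k^2) := by
    have expand : (u*s+v*t)^2 + (u*t - v*s)^2 = (u^2+v^2)*(s^2+t^2) := by ring
    rw [hk, h1, h2] at expand
    linear_combination expand
  have hknn : 0 ≤ 1 - k^2 := by
    by_contra hcon
    push_neg at hcon
    have := mul_neg_of_pos_of_neg hq2 hcon
    nlinarith [sq_nonneg (u*s+v*t)]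
  have hk1 : -1 ≤ k := by nlinarith [sq_nonneg (k+1)]
  have hk2 : k ≤ 1 := by nlinarith [sq_nonneg (k-1)]
  interval_cases k
  · have h0 : u*s + v*t = 0 := by
      have : (u*s+v*t)^2 = 0 := by rw [hsum]; ring
      exact pow_eq_zero_iff (by norm_num) |>.mp this
    right
    have : u^2 * q = t^2 * q := by linear_combination (-u^2)*h2 + t^2*h1 + (u*s - v*t)*h0
    exact mul_right_cancel₀ hq0 this
  · left
    have : u^2 * q = s^2 * q := by linear_combination (-u^2)*h2 + s^2*h1 + (u*t+v*s)*hk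
    exact mul_right_cancel₀ hq0 this
  · have h0 : u*s + v*t = 0 := by
      have : (u*s+v*t)^2 = 0 := by rw [hsum]; ring
      exact pow_eq_zero_iff (by norm_num) |>.mp this
    right
    have : u^2 * q = t^2 * q := by linear_combination (-u^2)*h2 + t^2*h1 + (u*s - v*t)*h0
    exact mul_right_cancel₀ hq0 this

/-- Uniqueness of the representation of a prime as a sum of two squares. -/
lemma sq_uniq_s10 {q u v s t : ℤ} (hq : Prime q) (h1 : u^2+v^2 = q) (h2 : s^2+t^2 = q) :
    u^2 = s^2 ∨ u^2 = t^2 := by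
  have hd : q ∣ (u*t - v*s) * (u*t + v*s) := ⟨t^2 - v^2, by linear_combination t^2*h1 - v^2*h2⟩
  rcases hq.dvd_mul.mp hd with h | h
  · exact sq_uniq_aux hq h1 h2 h
  · refine sq_uniq_aux hq (v := -v) (by linear_combination h1) h2 ?_
    have : u*t - (-v)*s = u*t + v*s := by ring
    rw [this]; exact h

lemma sq_mod_four (a : ℕ) : (a % 2 = 0 ∧ a^2 % 4 = 0) ∨ (a % 2 = 1 ∧ a^2 % 4 = 1) := by
  rcases Nat.even_or_odd a with ⟨k, hk⟩ | ⟨k, hk⟩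
  · left
    refine ⟨by omega, ?_⟩
    have h1 : a^2 = 4*(k*k) := by rw [hk]; ring
    rw [h1]; exact Nat.mul_mod_right 4 _
  · right
    refine ⟨by omega, ?_⟩
    have h1 : a^2 = 4*(k*k+k) + 1 := by rw [hk]; ring
    rw [h1, Nat.mul_add_mod]

/-- Forward direction core. -/
lemma forward_core (n A B : ℕ) (hA : 1 ≤ A) (hB : 1 ≤ B) (hAn : A < n) (hBn : B < n)
    (hsum : A^2 + B^2 = n^2 + 1)
    (h : Nat.Prime (n^2+1) ∨ ∃ p : ℕ, p.Prime ∧ n^2+1 = 2*p) : False := by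
  have hA2lt : A^2 < n^2 := Nat.pow_lt_pow_left hAn (by norm_num)
  have hB2lt : B^2 < n^2 := Nat.pow_lt_pow_left hBn (by norm_num)
  rcases h with hm | ⟨q, hq, hmq⟩
  · -- n^2 + 1 is prime
    have hqz : Prime ((n^2+1 : ℕ) : ℤ) := Nat.prime_iff_prime_int.mp hm
    have h1 : (A:ℤ)^2 + (B:ℤ)^2 = ((n^2+1 : ℕ) : ℤ) := by exact_mod_cast hsum
    have h2 : (n:ℤ)^2 + 1^2 = ((n^2+1 : ℕ) : ℤ) := by push_cast; ring
    rcases sq_uniq_s10 hqz h1 h2 with h3 | h3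
    · have : A^2 = n^2 := by exact_mod_cast h3
      omega
    · have hA1 : A^2 = 1 := by exact_mod_cast h3
      omega
  · -- n^2 + 1 = 2q with q prime
    have hAB : A % 2 = 1 ∧ B % 2 = 1 ∧ n % 2 = 1 := by
      rcases sq_mod_four n with ⟨h1, h2⟩ | ⟨h1, h2⟩ <;>
        rcases sq_mod_four A with ⟨hA1, hA2⟩ | ⟨hA1, hA2⟩ <;>
          rcases sq_mod_four B with ⟨hB1, hB2⟩ | ⟨hB1, hB2⟩ <;> omega
    obtain ⟨hA1', hB1', hn1'⟩ := hAB
    obtain ⟨i, hi⟩ : ∃ i, A = 2*i+1 := ⟨A/2, by omega⟩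
    obtain ⟨j, hj⟩ : ∃ j, B = 2*j+1 := ⟨B/2, by omega⟩
    obtain ⟨r, hr⟩ : ∃ r, n = 2*r+1 := ⟨n/2, by omega⟩
    have hqz : Prime ((q : ℕ) : ℤ) := Nat.prime_iff_prime_int.mp hq
    have hz : (A:ℤ)^2 + (B:ℤ)^2 = 2*(q:ℤ) := by
      have : A^2 + B^2 = 2*q := by omega
      exact_mod_cast this
    have hAz : (A:ℤ) = 2*(i:ℤ)+1 := by exact_mod_cast hi
    have hBz : (B:ℤ) = 2*(j:ℤ)+1 := by exact_mod_cast hj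
    have hnz : (n:ℤ) = 2*(r:ℤ)+1 := by exact_mod_cast hr
    have hmz : (n:ℤ)^2 + 1 = 2*(q:ℤ) := by exact_mod_cast hmq
    have hq1 : ((i:ℤ)+(j:ℤ)+1)^2 + ((i:ℤ)-(j:ℤ))^2 = (q:ℤ) := by
      have h2 : 2*(((i:ℤ)+(j:ℤ)+1)^2 + ((i:ℤ)-(j:ℤ))^2) = 2*(q:ℤ) := by
        linear_combination hz - ((A:ℤ)+2*(i:ℤ)+1)*hAz - ((B:ℤ)+2*(j:ℤ)+1)*hBz
      exact mul_left_cancel₀ two_ne_zero h2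
    have hq2 : ((r:ℤ)+1)^2 + (r:ℤ)^2 = (q:ℤ) := by
      have h2 : 2*(((r:ℤ)+1)^2 + (r:ℤ)^2) = 2*(q:ℤ) := by
        linear_combination hmz - ((n:ℤ)+2*(r:ℤ)+1)*hnz
      exact mul_left_cancel₀ two_ne_zero h2
    have hA_UV : (A:ℤ) = ((i:ℤ)+(j:ℤ)+1) + ((i:ℤ)-(j:ℤ)) := by rw [hAz]; ring
    set U : ℤ := (i:ℤ)+(j:ℤ)+1
    set V : ℤ := (i:ℤ)-(j:ℤ)
    have hUV0 : (U*V - ((r:ℤ)+1)*(r:ℤ))*(U*V + ((r:ℤ)+1)*(r:ℤ)) = 0 := by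
      rcases sq_uniq_s10 hqz hq1 hq2 with h3 | h3
      · have hV2 : V^2 = (r:ℤ)^2 := by linarith
        linear_combination V^2 * h3 + ((r:ℤ)+1)^2 * hV2
      · have hV2 : V^2 = ((r:ℤ)+1)^2 := by linarith
        linear_combination V^2 * h3 + (r:ℤ)^2 * hV2
    have hUV2 : U^2 + V^2 = ((r:ℤ)+1)^2 + (r:ℤ)^2 := by linarith
    have hAn2 : (A:ℤ)^2 = (n:ℤ)^2 ∨ (A:ℤ)^2 = 1 := by
      rcases mul_eq_zero.mp hUV0 with h4 | h4
      · left
        linear_combination ((A:ℤ)+U+V)*hA_UV + hUV2 + 2*h4 - ((n:ℤ)+2*(r:ℤ)+1)*hnz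
      · right
        linear_combination ((A:ℤ)+U+V)*hA_UV + hUV2 + 2*h4
    rcases hAn2 with h4 | h4
    · have : A^2 = n^2 := by exact_mod_cast h4
      omega
    · have hA1 : A^2 = 1 := by exact_mod_cast h4
      omega

theorem almostSquare_a_plus_b (c : ℕ) (hc : IsAlmostSquare c) (h3 : 3 ≤ c) :
    (∃ a b : ℕ, IsAlmostSquare a ∧ IsAlmostSquare b ∧ a < c ∧ b < c ∧ c = a + b)
      ↔ ¬ (Nat.Prime (c + 2) ∨ ∃ p : ℕ, p.Prime ∧ c + 2 = 2 * p) := by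
  obtain ⟨n, hn1, hcn⟩ := hc
  have hn2sq : 1 ≤ n^2 := Nat.one_le_pow _ _ hn1
  have hm : c + 2 = n^2 + 1 := by omega
  have hn2 : 2 ≤ n := by
    by_contra hcon
    push_neg at hcon
    interval_cases n <;> omega
  constructor
  · rintro ⟨a, b, ⟨A, hA1, hA2⟩, ⟨B, hB1, hB2⟩, hac, hbc, hcab⟩ h
    have hA2sq : 1 ≤ A^2 := Nat.one_le_pow _ _ hA1
    have hB2sq : 1 ≤ B^2 := Nat.one_le_pow _ _ hB1
    have hsum : A^2 + B^2 = n^2 + 1 := by omega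
    have hAn : A < n := by
      have h5 : A^2 < n^2 := by omega
      exact lt_of_pow_lt_pow_left₀ 2 (Nat.zero_le n) h5
    have hBn : B < n := by
      have h5 : B^2 < n^2 := by omega
      exact lt_of_pow_lt_pow_left₀ 2 (Nat.zero_le n) h5
    rw [hm] at h
    exact forward_core n A B hA1 hB1 hAn hBn hsum h
  · intro h
    push_neg at h
    obtain ⟨hnp, hn2p⟩ := h
    rw [hm] at hnp hn2p
    -- find an odd prime p dividing n^2+1
    obtain ⟨p, hp, hp2, hpd⟩ : ∃ p : ℕ, p.Prime ∧ p ≠ 2 ∧ p ∣ n^2 + 1 := by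
      rcases sq_mod_four n with ⟨h1, h2⟩ | ⟨h1, h2⟩
      · -- n even, n^2+1 odd
        refine ⟨(n^2+1).minFac, Nat.minFac_prime (by omega), ?_, Nat.minFac_dvd _⟩
        intro hcon
        have hd2 := Nat.minFac_dvd (n^2+1)
        rw [hcon] at hd2
        omega
      · -- n odd, n^2+1 = 2k with k odd
        obtain ⟨r, hr⟩ : ∃ r, n = 2*r+1 := ⟨n/2, by omega⟩
        have hk : n^2 + 1 = 2*(2*(r*r+r)+1) := by rw [hr]; ring
        have hr1 : 1 ≤ r := by
          by_contra hcon
          push_neg at hcon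
          interval_cases r <;> omega
        have hk1 : 2*(r*r+r)+1 ≠ 1 := by nlinarith
        obtain ⟨p, hp, hpd⟩ := Nat.exists_prime_and_dvd hk1
        refine ⟨p, hp, ?_, hpd.trans ⟨2, by omega⟩⟩
        intro hcon
        rw [hcon] at hpd
        obtain ⟨d, hd⟩ := hpd
        omega
    obtain ⟨e, hpe⟩ : ∃ e, n^2 + 1 = p * e := ⟨(n^2+1)/p, (Nat.mul_div_cancel' hpd).symm⟩
    have hppos : 0 < p := hp.pos
    have he3 : 3 ≤ e := by
      have he0 : e ≠ 0 := by intro hcon; rw [hcon] at hpe; omega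
      have he1 : e ≠ 1 := by
        intro hcon; rw [hcon, mul_one] at hpe
        exact hnp (hpe ▸ hp)
      have he2 : e ≠ 2 := by
        intro hcon; rw [hcon] at hpe
        exact hn2p p hp (by omega)
      omega
    -- p ≡ 1 mod 4
    haveI : Fact p.Prime := ⟨hp⟩
    have hp4 : p % 4 ≠ 3 := by
      apply ZMod.exists_sq_eq_neg_one_iff.mp
      have h0 : ((n^2+1 : ℕ) : ZMod p) = 0 := by
        rw [ZMod.natCast_eq_zero_iff]; exact hpd
      push_cast at h0
      exact ⟨(n : ZMod p), by linear_combination -h0⟩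
    obtain ⟨s₀, t₀, hst⟩ := Nat.Prime.sq_add_sq (p := p) hp4
    -- move to ℤ
    have hPz : Prime ((p:ℕ) : ℤ) := Nat.prime_iff_prime_int.mp hp
    have hP0 : ((p:ℤ)) ≠ 0 := hPz.ne_zero
    have hPE : (p:ℤ) * (e:ℤ) = (n:ℤ)^2 + 1 := by exact_mod_cast hpe.symm
    have hE3 : (3:ℤ) ≤ (e:ℤ) := by exact_mod_cast he3
    have hE0 : (e:ℤ) ≠ 0 := by omega
    have hN2 : (2:ℤ) ≤ (n:ℤ) := by exact_mod_cast hn2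
    have hT : ((s₀:ℤ))^2 + ((t₀:ℤ))^2 = (p:ℤ) := by exact_mod_cast hst
    -- choose sign of s so that p ∣ n*t₀ - s
    obtain ⟨s, hsP, hsd⟩ : ∃ s : ℤ, s^2 + (t₀:ℤ)^2 = (p:ℤ) ∧ (p:ℤ) ∣ (n:ℤ)*(t₀:ℤ) - s := by
      have hd : (p:ℤ) ∣ ((n:ℤ)*(t₀:ℤ) - (s₀:ℤ)) * ((n:ℤ)*(t₀:ℤ) + (s₀:ℤ)) :=
        ⟨(t₀:ℤ)^2*(e:ℤ) - 1, by linear_combination (-(t₀:ℤ)^2) * hPE - hT⟩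
      rcases hPz.dvd_mul.mp hd with h4 | h4
      · exact ⟨(s₀:ℤ), hT, h4⟩
      · refine ⟨-(s₀:ℤ), by linear_combination hT, ?_⟩
        have h5 : (n:ℤ)*(t₀:ℤ) - (-(s₀:ℤ)) = (n:ℤ)*(t₀:ℤ) + (s₀:ℤ) := by ring
        rw [h5]; exact h4
    obtain ⟨B, hB⟩ : ∃ B, s - (n:ℤ)*(t₀:ℤ) = (p:ℤ)*B := by
      obtain ⟨B, hB⟩ := hsd
      exact ⟨-B, by linear_combination -hB⟩
    have hA : (n:ℤ)*s + (t₀:ℤ) = (p:ℤ)*((n:ℤ)*B + (t₀:ℤ)*(e:ℤ)) := by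
      linear_combination (n:ℤ)*hB - (t₀:ℤ)*hPE
    set A : ℤ := (n:ℤ)*B + (t₀:ℤ)*(e:ℤ) with hA_def
    have he : A^2 + B^2 = (e:ℤ) := by
      have hP20 : ((p:ℤ))^2 ≠ 0 := pow_ne_zero 2 hP0
      have key : (p:ℤ)^2 * (A^2 + B^2) = (p:ℤ)^2 * (e:ℤ) := by
        have e1 : ((p:ℤ)*A)^2 + ((p:ℤ)*B)^2 = (p:ℤ)^2*(A^2+B^2) := by ring
        rw [← hA, ← hB] at e1
        linear_combination -e1 - (s^2+(t₀:ℤ)^2) * hPE + ((e:ℤ)*(p:ℤ)) * hsP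
      exact mul_left_cancel₀ hP20 key
    have hn' : s*A - (t₀:ℤ)*B = (n:ℤ) := by
      have h5 : (p:ℤ)*(s*A - (t₀:ℤ)*B) = (p:ℤ)*(n:ℤ) := by
        linear_combination (-s)*hA + (t₀:ℤ)*hB + (n:ℤ)*hsP
      exact mul_left_cancel₀ hP0 h5
    have h1' : s*B + (t₀:ℤ)*A = 1 := by
      have h5 : (p:ℤ)*(s*B + (t₀:ℤ)*A) = (p:ℤ)*1 := by
        linear_combination (-(t₀:ℤ))*hA + (-s)*hB + hsP
      exact mul_left_cancel₀ hP0 h5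
    set x : ℤ := s*A + (t₀:ℤ)*B with hx_def
    set y : ℤ := s*B - (t₀:ℤ)*A with hy_def
    have hrep : x^2 + y^2 = (n:ℤ)^2 + 1 := by
      rw [hx_def, hy_def]
      linear_combination (s^2+(t₀:ℤ)^2)*he + (e:ℤ)*hsP + hPE
    have hid1 : x*(n:ℤ) + y = (s^2 - (t₀:ℤ)^2)*(e:ℤ) := by
      rw [hx_def, hy_def]
      linear_combination (-(s*A+(t₀:ℤ)*B))*hn' + (-(s*B - (t₀:ℤ)*A))*h1' + (s^2 - (t₀:ℤ)^2)*he
    have hid2 : x - y*(n:ℤ) = 2*s*(t₀:ℤ)*(e:ℤ) := by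
      rw [hx_def, hy_def]
      linear_combination (s*B - (t₀:ℤ)*A)*hn' + (-(s*A+(t₀:ℤ)*B))*h1' + 2*s*(t₀:ℤ)*he
    -- nontriviality
    have hx0 : x ≠ 0 := by
      intro hcon
      rw [hcon] at hrep
      exact sq_ne_sq_add_one (y := y) (n := (n:ℤ)) (by exact_mod_cast hn1) (by linarith)
    have hy0 : y ≠ 0 := by
      intro hcon
      rw [hcon] at hrep
      exact sq_ne_sq_add_one (y := x) (n := (n:ℤ)) (by exact_mod_cast hn1) (by linarith)
    have hEub : ¬ ((e:ℤ) ∣ 2) := by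
      intro hdvd
      have := Int.le_of_dvd (by norm_num) hdvd
      omega
    have hxn : x^2 ≠ (n:ℤ)^2 := by
      intro hxx
      have hy1 : y^2 = 1 := by linarith
      have hyc : y = 1 ∨ y = -1 := by
        rcases mul_eq_zero.mp (show (y-1)*(y+1) = 0 by linear_combination hy1) with h4 | h4
        · left; linarith
        · right; linarith
      have hxc : x = (n:ℤ) ∨ x = -(n:ℤ) := by
        rcases mul_eq_zero.mp (show (x-(n:ℤ))*(x+(n:ℤ)) = 0 by linear_combination hxx)
          with h4 | h4
        · left; linarith
        · right; linarith
      rcases hxc with hx | hx <;> rcases hyc with hy | hy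
      · -- x = n, y = 1
        rw [hx, hy] at hid1
        have h5 : ((p:ℤ) - s^2 + (t₀:ℤ)^2) * (e:ℤ) = 0 := by linear_combination hPE + hid1
        have h6 : (t₀:ℤ)^2 * (e:ℤ) = 0 := by
          have h6' : 2*((t₀:ℤ)^2 * (e:ℤ)) = 0 := by linear_combination h5 + (e:ℤ)*hsP
          linarith
        rcases mul_eq_zero.mp h6 with h7 | h7
        · have hT0 : (t₀:ℤ) = 0 := pow_eq_zero_iff (by norm_num) |>.mp h7
          exact prime_not_sq hp (show (p:ℤ) = s^2 by linear_combination -hsP + (t₀:ℤ)*hT0)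
        · exact hE0 h7
      · -- x = n, y = -1
        rw [hx, hy] at hid1
        have h5 : ((p:ℤ) - s^2 + (t₀:ℤ)^2) * (e:ℤ) = 2 := by linear_combination hPE + hid1
        have h6 : 2 = (e:ℤ) * (2*(t₀:ℤ)^2) := by linear_combination -h5 - (e:ℤ)*hsP
        exact hEub ⟨_, h6⟩
      · -- x = -n, y = 1
        rw [hx, hy] at hid1
        have h5 : (s^2 - (t₀:ℤ)^2 + (p:ℤ)) * (e:ℤ) = 2 := by linear_combination hPE - hid1
        have h6 : 2 = (e:ℤ) * (2*s^2) := by linear_combination -h5 - (e:ℤ)*hsP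
        exact hEub ⟨_, h6⟩
      · -- x = -n, y = -1
        rw [hx, hy] at hid1
        have h5 : (s^2 - (t₀:ℤ)^2 + (p:ℤ)) * (e:ℤ) = 0 := by linear_combination hPE - hid1
        have h6 : s^2 * (e:ℤ) = 0 := by
          have h6' : 2*(s^2 * (e:ℤ)) = 0 := by linear_combination h5 + (e:ℤ)*hsP
          linarith
        rcases mul_eq_zero.mp h6 with h7 | h7
        · have hS0 : s = 0 := pow_eq_zero_iff (by norm_num) |>.mp h7
          exact prime_not_sq hp (show (p:ℤ) = (t₀:ℤ)^2 by linear_combination -hsP + s*hS0)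
        · exact hE0 h7
    have hyn : y^2 ≠ (n:ℤ)^2 := by
      intro hyy
      have hx1 : x^2 = 1 := by linarith
      have hxc : x = 1 ∨ x = -1 := by
        rcases mul_eq_zero.mp (show (x-1)*(x+1) = 0 by linear_combination hx1) with h4 | h4
        · left; linarith
        · right; linarith
      have hyc : y = (n:ℤ) ∨ y = -(n:ℤ) := by
        rcases mul_eq_zero.mp (show (y-(n:ℤ))*(y+(n:ℤ)) = 0 by linear_combination hyy)
          with h4 | h4
        · left; linarith
        · right; linarith
      have hps : ¬ (s^2 - (t₀:ℤ)^2) * (e:ℤ) = 0 := by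
        intro h5
        rcases mul_eq_zero.mp h5 with h6 | h6
        · -- s^2 = t₀^2 forces p = 2 t₀^2, even, contradiction with p ≠ 2
          have hPT : (p:ℤ) = 2*(t₀:ℤ)^2 := by linear_combination -hsP + h6
          have hdvd : (2:ℤ) ∣ (p:ℤ) := ⟨(t₀:ℤ)^2, hPT⟩
          have hdvd' : (2:ℕ) ∣ p := by exact_mod_cast hdvd
          rcases (Nat.Prime.eq_one_or_self_of_dvd hp 2 hdvd') with h7 | h7
          · omega
          · exact hp2 h7.symm
        · exact hE0 h6
      rcases hxc with hx | hx <;> rcases hyc with hy | hy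
      · -- x = 1, y = n
        rw [hx, hy] at hid2
        have h6 : 2 = (e:ℤ) * (2*s*(t₀:ℤ) + (p:ℤ)) := by linear_combination hid2 - hPE
        exact hEub ⟨_, h6⟩
      · -- x = 1, y = -n
        rw [hx, hy] at hid1
        exact hps (by linear_combination -hid1)
      · -- x = -1, y = n
        rw [hx, hy] at hid1
        exact hps (by linear_combination -hid1)
      · -- x = -1, y = -n
        rw [hx, hy] at hid2
        have h6 : 2 = (e:ℤ) * ((p:ℤ) - 2*s*(t₀:ℤ)) := by linear_combination -hid2 - hPE
        exact hEub ⟨_, h6⟩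
    -- construct the representation
    set X := x.natAbs with hX_def
    set Y := y.natAbs with hY_def
    have hXz : ((X:ℕ):ℤ)^2 = x^2 := by rw [hX_def, Int.natAbs_sq]
    have hYz : ((Y:ℕ):ℤ)^2 = y^2 := by rw [hY_def, Int.natAbs_sq]
    have hXY : X^2 + Y^2 = n^2 + 1 := by
      have h5 : ((X:ℕ):ℤ)^2 + ((Y:ℕ):ℤ)^2 = ((n:ℕ):ℤ)^2 + 1 := by rw [hXz, hYz]; exact hrep
      exact_mod_cast h5
    have hX1 : 1 ≤ X := Int.natAbs_pos.mpr hx0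
    have hY1 : 1 ≤ Y := Int.natAbs_pos.mpr hy0
    have hX2sq : 1 ≤ X^2 := Nat.one_le_pow _ _ hX1
    have hY2sq : 1 ≤ Y^2 := Nat.one_le_pow _ _ hY1
    have hXn2 : X^2 ≠ n^2 := by
      intro hcon
      apply hxn
      rw [← hXz]
      exact_mod_cast hcon
    have hYn2 : Y^2 ≠ n^2 := by
      intro hcon
      apply hyn
      rw [← hYz]
      exact_mod_cast hcon
    refine ⟨X^2 - 1, Y^2 - 1, ⟨X, hX1, rfl⟩, ⟨Y, hY1, rfl⟩, by omega, by omega, by omega⟩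
end

section
/- An almost-square c ≥ 3 can be written as c = 2a + b with almost-squares a, b < c if and only if c + 3 is neither a prime, nor twice a prime, nor twice the square of a prime. -/
/-!
With `c = n² - 1`, `a = x² - 1`, `b = y² - 1` the equation `c = 2a + b` reads
`n² + 2 = 2x² + y²`, and `a, b < c` just says `x ≥ 2`: we need a representation of
`N = n² + 2` by `2x² + y²` other than the obvious one `2·1² + n²`.

If `N` is `p`, `2p` or `2p²`, then `N` (or `N / 2 = 1 + 2(n/2)²`) is an odd prime power `q^k`
with two representations `a² + 2b² = c² + 2d² = q^k`. Then `q^k ∣ (ad - bc)(ad + bc)`, and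
`q` cannot divide both factors, so `q^k` divides one; since
`(ac ± 2bd)² + 2(ad ∓ bc)² = q^(2k)`, that factor vanishes, which forces the two
representations to agree.

Otherwise the odd number `M = N` (or `N / 2`) has a prime factor `p` with `M ≠ p, p²`, and
`M = c² + 2d²` with `c, d` coprime. Thue's lemma writes `p = a² + 2b²`, and in `ℤ[√-2]`
`c + d√-2 = (a + b√-2)(Y - X√-2)`; replacing the second factor by its conjugate gives a
different representation of `M`.
-/

theorem sq_ne_natCast_of_prime {p : ℕ} (hp : p.Prime) (x : ℤ) : x ^ 2 ≠ p := fun h =>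
  (Nat.prime_iff_prime_int.mp hp).not_isSquare ⟨x, by rw [← h, sq]⟩

theorem exists_sq_le_dvd_mul_sub_mul (p : ℕ) [NeZero p] (u v : ℤ) :
    ∃ x y : ℤ, (x, y) ≠ (0, 0) ∧ x ^ 2 ≤ p ∧ y ^ 2 ≤ p ∧
      (p : ℤ) ∣ x * v - y * u := by
  set m := Nat.sqrt p
  let f : ℕ × ℕ → ZMod p := fun ij => ((ij.1 * v - ij.2 * u : ℤ) : ZMod p)
  have hcard : (Finset.univ : Finset (ZMod p)).card <
      (Finset.range (m + 1) ×ˢ Finset.range (m + 1)).card := by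
    simpa [ZMod.card] using Nat.lt_succ_sqrt p
  obtain ⟨⟨i, j⟩, hij, ⟨i', j'⟩, hij', hne, heq⟩ :=
    Finset.exists_ne_map_eq_of_card_lt_of_maps_to hcard (f := f) (by simp [Set.MapsTo])
  simp only [Finset.mem_product, Finset.mem_range] at hij hij'
  have hm : (m : ℤ) ^ 2 ≤ p := by exact_mod_cast Nat.sqrt_le' p
  have hsq : ∀ a b : ℕ, a < m + 1 → b < m + 1 → ((a : ℤ) - b) ^ 2 ≤ p :=
    fun a b ha hb => (sq_le_sq' (by omega) (by omega)).trans hm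
  refine ⟨i - i', j - j', ?_, hsq _ _ hij.1 hij'.1, hsq _ _ hij.2 hij'.2, ?_⟩
  · intro h
    simp only [Prod.mk.injEq, sub_eq_zero, Nat.cast_inj] at h
    exact hne (Prod.ext h.1 h.2)
  · rw [← ZMod.intCast_zmod_eq_zero_iff_dvd]
    simp only [f] at heq
    push_cast at heq ⊢
    linear_combination heq

theorem exists_sq_add_two_sq_eq_of_dvd {p : ℕ} (hp : p.Prime) {u v : ℤ}
    (hdvd : (p : ℤ) ∣ u ^ 2 + 2 * v ^ 2) (huv : IsCoprime u v) :
    ∃ a b : ℤ, a ^ 2 + 2 * b ^ 2 = p := by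
  have : NeZero p := ⟨hp.ne_zero⟩
  have hpZ : Prime (p : ℤ) := Nat.prime_iff_prime_int.mp hp
  have hv : ¬ (p : ℤ) ∣ v := fun hv =>
    hpZ.not_isUnit <| huv.isUnit_of_dvd'
      (hpZ.dvd_of_dvd_pow <| (dvd_add_left (hv.pow two_ne_zero |>.mul_left 2)).mp hdvd) hv
  obtain ⟨x, y, hxy, hx, hy, hxyuv⟩ := exists_sq_le_dvd_mul_sub_mul p u v
  -- `x ≡ (u / v) y`, and `u / v` is a square root of `-2` modulo `p`
  have hmul : (p : ℤ) ∣ v ^ 2 * (x ^ 2 + 2 * y ^ 2) := by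
    rw [show v ^ 2 * (x ^ 2 + 2 * y ^ 2) =
      (x * v - y * u) * (x * v + y * u) + y ^ 2 * (u ^ 2 + 2 * v ^ 2) by ring]
    exact dvd_add (hxyuv.mul_right _) (hdvd.mul_left _)
  obtain ⟨k, hk⟩ := (hpZ.dvd_or_dvd hmul).resolve_left fun h => hv (hpZ.dvd_of_dvd_pow h)
  have hpos : 0 < x ^ 2 + 2 * y ^ 2 := by
    rcases eq_or_ne x 0 with rfl | hx0
    · have : y ≠ 0 := by simpa using hxy
      positivity
    · positivity
  have hp0 : (0 : ℤ) < p := by exact_mod_cast hp.pos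
  have hk0 : 0 < k := pos_of_mul_pos_right (hk ▸ hpos) hp0.le
  have hk3 : k < 3 := by nlinarith [lt_of_le_of_ne hx (sq_ne_natCast_of_prime hp x)]
  interval_cases k
  · exact ⟨x, y, by linarith⟩
  · obtain ⟨w, rfl⟩ := ((Int.even_pow (m := x) (n := 2)).mp ⟨p - y ^ 2, by linarith⟩).1
    exact ⟨y, w, by linarith⟩

theorem exists_eq_mul_of_prime_dvd {p : ℕ} (hp : p.Prime) {a b c d : ℤ}
    (hab : a ^ 2 + 2 * b ^ 2 = p) (hdvd : (p : ℤ) ∣ c ^ 2 + 2 * d ^ 2) :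
    ∃ a' Y X : ℤ, a' ^ 2 + 2 * b ^ 2 = p ∧ c = a' * Y + 2 * b * X ∧ d = b * Y - a' * X := by
  have hpZ : Prime (p : ℤ) := Nat.prime_iff_prime_int.mp hp
  have hp0 : (p : ℤ) ≠ 0 := hpZ.ne_zero
  have hb : ¬ (p : ℤ) ∣ b := by
    rintro ⟨t, rfl⟩
    rcases eq_or_ne t 0 with rfl | ht
    · exact sq_ne_natCast_of_prime hp a (by simpa using hab)
    · have : (1 : ℤ) ≤ t ^ 2 := by have := sq_pos_of_ne_zero ht; omega
      have hp2 : (2 : ℤ) ≤ p := by exact_mod_cast hp.two_le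
      nlinarith [sq_nonneg a, mul_le_mul_of_nonneg_left this (sq_nonneg (p : ℤ))]
  obtain ⟨K, hK⟩ := hdvd
  have hprod : (p : ℤ) ∣ (c * b - d * a) * (c * b + d * a) :=
    ⟨b ^ 2 * K - d ^ 2, by linear_combination b ^ 2 * hK - d ^ 2 * hab⟩
  obtain ⟨a', ha', X, hX⟩ : ∃ a', a' ^ 2 = a ^ 2 ∧ (p : ℤ) ∣ c * b - d * a' := by
    rcases hpZ.dvd_or_dvd hprod with h | h
    · exact ⟨a, rfl, h⟩
    · exact ⟨-a, by ring, by simpa using h⟩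
  have hab' : a' ^ 2 + 2 * b ^ 2 = p := ha' ▸ hab
  obtain ⟨Y, hY⟩ : (p : ℤ) ∣ c * a' + 2 * d * b := by
    refine (hpZ.dvd_or_dvd (b := b) ⟨a' * X + d, ?_⟩).resolve_right hb
    linear_combination a' * hX + d * hab'
  refine ⟨a', Y, X, hab', mul_left_cancel₀ hp0 ?_, mul_left_cancel₀ hp0 ?_⟩
  · linear_combination -c * hab' + a' * hY + 2 * b * hX
  · linear_combination -d * hab' + b * hY - a' * hX

theorem sq_add_two_sq_eq_of_isCoprime_of_add_eq_zero {p : ℕ} (hp : p.Prime) {a b X Y : ℤ}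
    (hab : a ^ 2 + 2 * b ^ 2 = p) (hcop : IsCoprime (a * Y + 2 * b * X) (b * Y - a * X))
    (hS : b * Y + a * X = 0) : Y ^ 2 + 2 * X ^ 2 = p := by
  have hpZ : Prime (p : ℤ) := Nat.prime_iff_prime_int.mp hp
  have hR : (p : ℤ) * (Y ^ 2 + 2 * X ^ 2) = (a * Y - 2 * b * X) ^ 2 := by
    linear_combination -(Y ^ 2 + 2 * X ^ 2) * hab + 2 * (b * Y + a * X) * hS
  obtain ⟨t, ht⟩ := hpZ.dvd_of_dvd_pow (Dvd.intro _ hR)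
  have hYt : Y = a * t := mul_left_cancel₀ hpZ.ne_zero <| by
    linear_combination -Y * hab + 2 * b * hS + a * ht
  have hXt : X = -(b * t) := mul_left_cancel₀ hpZ.ne_zero <| by
    linear_combination -X * hab + a * hS - b * ht
  have ht1 : t ^ 2 = 1 := Int.isUnit_sq <| hcop.isUnit_of_dvd'
    ⟨a ^ 2 - 2 * b ^ 2, by rw [hYt, hXt]; ring⟩ ⟨2 * a * b, by rw [hYt, hXt]; ring⟩
  rw [hYt, hXt]
  linear_combination t ^ 2 * hab + (p : ℤ) * ht1

theorem exists_sq_add_two_sq_ne {M p c d : ℕ} (hp : p.Prime) (hpM : p ∣ M) (hMp : M ≠ p)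
    (hMp2 : M ≠ p ^ 2) (hM : Odd M) (hcd : M = c ^ 2 + 2 * d ^ 2) (hcop : c.Coprime d) :
    ∃ R S : ℕ, M = R ^ 2 + 2 * S ^ 2 ∧ 0 < R ∧ 0 < S ∧ R ≠ c := by
  have hMZ : (M : ℤ) = c ^ 2 + 2 * d ^ 2 := by exact_mod_cast hcd
  have hpMZ : (p : ℤ) ∣ c ^ 2 + 2 * d ^ 2 := hMZ ▸ Int.natCast_dvd_natCast.mpr hpM
  have hcopZ : IsCoprime (c : ℤ) d := Nat.isCoprime_iff_coprime.mpr hcop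
  have hodd : ∀ t : ℤ, (M : ℤ) ≠ 2 * t := fun t ht =>
    hM.not_two_dvd_nat (Int.natCast_dvd_natCast.mp ⟨t, ht⟩)
  obtain ⟨a, b, hab⟩ := exists_sq_add_two_sq_eq_of_dvd hp hpMZ hcopZ
  obtain ⟨a, Y, X, hab, hc, hd⟩ := exists_eq_mul_of_prime_dvd hp hab hpMZ
  rw [hc, hd] at hcopZ
  have hMpK : (M : ℤ) = p * (Y ^ 2 + 2 * X ^ 2) := by rw [hMZ, hc, hd, ← hab]; ring
  have ha : a ≠ 0 := by
    rintro rfl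
    exact hodd (b ^ 2 * (Y ^ 2 + 2 * X ^ 2)) (by rw [hMpK, ← hab]; ring)
  have hb : b ≠ 0 := by
    rintro rfl
    exact sq_ne_natCast_of_prime hp a (by simpa using hab)
  have hY : Y ≠ 0 := by
    rintro rfl
    exact hodd (p * X ^ 2) (by rw [hMpK]; ring)
  have hX : X ≠ 0 := by
    rintro rfl
    have hY1 := Int.isUnit_sq <| hcopZ.isUnit_of_dvd' (x := Y) ⟨a, by ring⟩ ⟨b, by ring⟩
    exact hMp (by exact_mod_cast (by rw [hMpK, hY1]; ring : (M : ℤ) = p))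
  -- `c + d√-2 = (a + b√-2)(Y - X√-2)` and `R + S√-2 = (a + b√-2)(Y + X√-2)`
  set R := a * Y - 2 * b * X
  set S := b * Y + a * X
  have hRS : (M : ℤ) = R ^ 2 + 2 * S ^ 2 := by rw [hMpK, ← hab]; ring
  have hR : R ≠ 0 := fun h => hodd (S ^ 2) (by rw [hRS, h]; ring)
  have hS : S ≠ 0 := fun h => hMp2 <| by
    have := sq_add_two_sq_eq_of_isCoprime_of_add_eq_zero hp hab hcopZ h
    exact_mod_cast (by rw [hMpK, this]; ring : (M : ℤ) = p ^ 2)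
  have hRc : R ^ 2 ≠ c ^ 2 := by
    have : (c : ℤ) ^ 2 - R ^ 2 = 8 * a * b * X * Y := by rw [hc]; ring
    intro h
    rw [h, sub_self] at this
    exact (by simp [ha, hb, hX, hY] : 8 * a * b * X * Y ≠ 0) this.symm
  refine ⟨R.natAbs, S.natAbs, ?_, Int.natAbs_pos.mpr hR, Int.natAbs_pos.mpr hS, ?_⟩
  · zify
    rw [sq_abs, sq_abs, hRS]
  · intro h
    apply hRc
    rw [← Int.natAbs_sq R, h]

theorem pow_dvd_sub_or_pow_dvd_add {q k : ℕ} (hq : q.Prime) (hq2 : q ≠ 2) {a b c d : ℤ}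
    (hb : ¬ (q : ℤ) ∣ b) (hd : ¬ (q : ℤ) ∣ d) (hab : a ^ 2 + 2 * b ^ 2 = q ^ k)
    (hcd : c ^ 2 + 2 * d ^ 2 = q ^ k) :
    (q : ℤ) ^ k ∣ a * d - b * c ∨ (q : ℤ) ^ k ∣ a * d + b * c := by
  have hqZ : Prime (q : ℤ) := Nat.prime_iff_prime_int.mp hq
  have hk : k ≠ 0 := by
    rintro rfl
    have : b ^ 2 = 0 := by nlinarith [sq_nonneg a, sq_nonneg b]
    exact hb (pow_eq_zero_iff two_ne_zero |>.mp this ▸ dvd_zero _)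
  have hprod : (q : ℤ) ^ k ∣ (a * d - b * c) * (a * d + b * c) :=
    ⟨d ^ 2 - b ^ 2, by linear_combination d ^ 2 * hab - b ^ 2 * hcd⟩
  have h2q : ¬ (q : ℤ) ∣ 2 := fun h =>
    hq2 ((Nat.prime_dvd_prime_iff_eq hq Nat.prime_two).mp (Int.natCast_dvd_natCast.mp h))
  have hboth : ¬ ((q : ℤ) ∣ a * d - b * c ∧ (q : ℤ) ∣ a * d + b * c) := by
    rintro ⟨h₁, h₂⟩
    have hqad : (q : ℤ) ∣ 2 * (a * d) :=
      (by ring : (a * d - b * c) + (a * d + b * c) = 2 * (a * d)) ▸ dvd_add h₁ h₂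
    rcases hqZ.dvd_or_dvd ((hqZ.dvd_or_dvd hqad).resolve_left h2q) with hqa | hqd
    · have : (q : ℤ) ∣ 2 * b ^ 2 := by
        rw [show 2 * b ^ 2 = q ^ k - a ^ 2 by linarith]
        exact dvd_sub (dvd_pow_self _ hk) (hqa.pow two_ne_zero)
      exact hb (hqZ.dvd_of_dvd_pow ((hqZ.dvd_or_dvd this).resolve_left h2q))
    · exact hd hqd
  by_cases h : (q : ℤ) ∣ a * d - b * c
  · exact .inl (hqZ.pow_dvd_of_dvd_mul_right k (fun h' => hboth ⟨h, h'⟩) hprod)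
  · exact .inr (hqZ.pow_dvd_of_dvd_mul_left k h hprod)

theorem eq_of_sq_add_two_sq_eq_prime_pow {q k a b c d : ℕ} (hq : q.Prime) (hq2 : q ≠ 2)
    (ha : 0 < a) (hb : ¬ q ∣ b) (hd : ¬ q ∣ d) (hab : a ^ 2 + 2 * b ^ 2 = q ^ k)
    (hcd : c ^ 2 + 2 * d ^ 2 = q ^ k) : a = c ∧ b = d := by
  have hd0 : 0 < d := Nat.pos_of_ne_zero fun h => hd (h ▸ dvd_zero q)
  have habZ : (a : ℤ) ^ 2 + 2 * b ^ 2 = q ^ k := by exact_mod_cast hab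
  have hcdZ : (c : ℤ) ^ 2 + 2 * d ^ 2 = q ^ k := by exact_mod_cast hcd
  have hq0 : (0 : ℤ) < q ^ k := pow_pos (by exact_mod_cast hq.pos) k
  -- `(a² + 2b²)(c² + 2d²) = (ac ± 2bd)² + 2(ad ∓ bc)²`, so `|ad ∓ bc| < q ^ k`
  have hsmall :
      ∀ x y : ℤ, (q : ℤ) ^ k ∣ x → y ^ 2 + 2 * x ^ 2 = ((q : ℤ) ^ k) ^ 2 → x = 0 :=
    fun x y hx hxy => Int.eq_zero_of_abs_lt_dvd hx (abs_lt_of_sq_lt_sq (by nlinarith) hq0.le)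
  rcases pow_dvd_sub_or_pow_dvd_add hq hq2 (mt Int.natCast_dvd_natCast.mp hb)
    (mt Int.natCast_dvd_natCast.mp hd) habZ hcdZ with h | h
  · have had := hsmall _ (a * c + 2 * b * d) h
      (by linear_combination ((c : ℤ) ^ 2 + 2 * d ^ 2) * habZ + (q : ℤ) ^ k * hcdZ)
    have hbd : b ^ 2 = d ^ 2 := by
      have : ((b : ℤ) ^ 2 - d ^ 2) * q ^ k = 0 := by
        linear_combination -b ^ 2 * hcdZ + d ^ 2 * habZ - (a * d + b * c) * had
      exact_mod_cast sub_eq_zero.mp ((mul_eq_zero.mp this).resolve_right hq0.ne')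
    obtain rfl := Nat.pow_left_injective two_ne_zero hbd
    refine ⟨Nat.eq_of_mul_eq_mul_right hd0 ?_, rfl⟩
    exact_mod_cast (by linear_combination had : (a : ℤ) * b = c * b)
  · have had := hsmall _ (a * c - 2 * b * d) h
      (by linear_combination ((c : ℤ) ^ 2 + 2 * d ^ 2) * habZ + (q : ℤ) ^ k * hcdZ)
    have : (0 : ℤ) < a * d := by exact_mod_cast Nat.mul_pos ha hd0
    have : (0 : ℤ) ≤ b * c := by positivity
    linarith

def IsExceptional (N : ℕ) : Prop :=
  N.Prime ∨ (∃ p : ℕ, p.Prime ∧ N = 2 * p) ∨ ∃ p : ℕ, p.Prime ∧ N = 2 * p ^ 2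

theorem exists_halves_of_eq_two_mul {n x y M : ℕ} (h : n ^ 2 + 2 = 2 * x ^ 2 + y ^ 2)
    (hM : n ^ 2 + 2 = 2 * M) :
    ∃ m z : ℕ, n = 2 * m ∧ y = 2 * z ∧ M = 1 + 2 * m ^ 2 ∧ M = x ^ 2 + 2 * z ^ 2 := by
  obtain ⟨m, rfl⟩ : Even n := (Nat.even_pow' two_ne_zero).mp ⟨M - 1, by omega⟩
  obtain ⟨z, rfl⟩ : Even y := (Nat.even_pow' two_ne_zero).mp ⟨M - x ^ 2, by omega⟩
  refine ⟨m, z, by ring, by ring, ?_, ?_⟩ <;> nlinarith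

theorem not_isExceptional_of_eq {n x y : ℕ} (hx : 2 ≤ x) (hy : 1 ≤ y)
    (h : n ^ 2 + 2 = 2 * x ^ 2 + y ^ 2) : ¬ IsExceptional (n ^ 2 + 2) := by
  have hx2 : 4 ≤ x ^ 2 := by nlinarith
  rintro (hN | hN)
  · have hn : 0 < n := by
      rcases Nat.eq_zero_or_pos n with rfl | hn
      · nlinarith
      · exact hn
    have := eq_of_sq_add_two_sq_eq_prime_pow (k := 1) (c := y) (d := x) hN (by nlinarith) hn
      (Nat.Prime.not_dvd_one hN) (Nat.not_dvd_of_pos_of_lt (by omega) (by nlinarith))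
      (by ring) (by rw [h]; ring)
    omega
  · obtain ⟨p, k, hp, hk1, hk2, hM⟩ :
        ∃ p k, p.Prime ∧ 1 ≤ k ∧ k ≤ 2 ∧ n ^ 2 + 2 = 2 * p ^ k := by
      rcases hN with ⟨p, hp, hN⟩ | ⟨p, hp, hN⟩
      exacts [⟨p, 1, hp, le_rfl, by norm_num, by rw [hN, pow_one]⟩,
        ⟨p, 2, hp, by norm_num, le_rfl, hN⟩]
    obtain ⟨m, z, rfl, rfl, hm, hz⟩ := exists_halves_of_eq_two_mul h hM
    have hpk : p ^ k ≤ p ^ 2 := Nat.pow_le_pow_right hp.pos hk2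
    have hmp : m < p := by nlinarith
    have := eq_of_sq_add_two_sq_eq_prime_pow hp ?_ one_pos
      (Nat.not_dvd_of_pos_of_lt (by nlinarith) hmp)
      (Nat.not_dvd_of_pos_of_lt (by omega) (by nlinarith)) hm.symm hz.symm
    · omega
    · rintro rfl
      have : 2 ∣ 2 ^ k := dvd_pow_self 2 (by omega)
      omega

theorem exists_eq_of_not_isExceptional {n : ℕ} (h : ¬ IsExceptional (n ^ 2 + 2)) :
    ∃ x y : ℕ, 2 ≤ x ∧ 1 ≤ y ∧ n ^ 2 + 2 = 2 * x ^ 2 + y ^ 2 := by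
  simp only [IsExceptional, not_or, not_exists, not_and] at h
  obtain ⟨hprime, htwice, htwiceSq⟩ := h
  rcases Nat.even_or_odd n with ⟨m, rfl⟩ | hn
  · have hN : (m + m) ^ 2 + 2 = 2 * (1 + 2 * m ^ 2) := by ring
    have hM1 : 1 + 2 * m ^ 2 ≠ 1 := fun h => hprime (by rw [hN, h]; norm_num)
    have hp := Nat.minFac_prime hM1
    obtain ⟨R, S, hRS, hR, hS, hR1⟩ := exists_sq_add_two_sq_ne hp (Nat.minFac_dvd _)
      (fun h => htwice _ hp (by rw [hN, ← h])) (fun h => htwiceSq _ hp (by rw [hN, ← h]))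
      ⟨m ^ 2, by ring⟩ (by ring) (Nat.coprime_one_left m)
    exact ⟨R, 2 * S, by omega, by omega, by rw [hN, hRS]; ring⟩
  · have hn0 : 0 < n := hn.pos
    have hp := Nat.minFac_prime (n := n ^ 2 + 2) (by omega)
    have hsq : n ^ 2 + 2 ≠ (n ^ 2 + 2).minFac ^ 2 := by
      intro h
      rcases le_or_gt (n ^ 2 + 2).minFac n with hle | hlt
      · nlinarith [Nat.pow_le_pow_left hle 2]
      · nlinarith [Nat.pow_le_pow_left hlt 2]
    obtain ⟨R, S, hRS, hR, hS, hRn⟩ := exists_sq_add_two_sq_ne hp (Nat.minFac_dvd _)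
      (fun h => hprime (h ▸ hp)) hsq (hn.pow.add_even even_two)
      (by ring) (Nat.coprime_one_right n)
    refine ⟨S, R, ?_, hR, by rw [hRS]; ring⟩
    by_contra! hS1
    obtain rfl : S = 1 := by omega
    rw [one_pow] at hRS
    exact hRn (Nat.pow_left_injective two_ne_zero (show R ^ 2 = n ^ 2 by omega))

theorem exists_almostSquare_iff (n : ℕ) (hn : 1 ≤ n) :
    (∃ a b : ℕ, IsAlmostSquare a ∧ IsAlmostSquare b ∧ a < n ^ 2 - 1 ∧ b < n ^ 2 - 1 ∧
      n ^ 2 - 1 = 2 * a + b) ↔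
    ∃ x y : ℕ, 2 ≤ x ∧ 1 ≤ y ∧ n ^ 2 + 2 = 2 * x ^ 2 + y ^ 2 := by
  have hn2 : 1 ≤ n ^ 2 := Nat.one_le_pow _ _ hn
  constructor
  · rintro ⟨-, -, ⟨x, hx, rfl⟩, ⟨y, hy, rfl⟩, -, hb, h⟩
    have hx2 : 1 ≤ x ^ 2 := Nat.one_le_pow _ _ hx
    have hy2 : 1 ≤ y ^ 2 := Nat.one_le_pow _ _ hy
    refine ⟨x, y, ?_, hy, by omega⟩
    by_contra! hx1
    obtain rfl : x = 1 := by omega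
    omega
  · rintro ⟨x, y, hx, hy, h⟩
    have hx2 : 4 ≤ x ^ 2 := by nlinarith
    have hy2 : 1 ≤ y ^ 2 := Nat.one_le_pow _ _ hy
    exact ⟨x ^ 2 - 1, y ^ 2 - 1, ⟨x, by omega, rfl⟩, ⟨y, hy, rfl⟩,
      by omega, by omega, by omega⟩

theorem almostSquare_two_a_plus_b_general (c : ℕ) (hc : IsAlmostSquare c) :
    (∃ a b : ℕ, IsAlmostSquare a ∧ IsAlmostSquare b ∧ a < c ∧ b < c ∧ c = 2 * a + b)
      ↔ ¬ (Nat.Prime (c + 3) ∨ (∃ p : ℕ, p.Prime ∧ c + 3 = 2 * p) ∨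
            (∃ p : ℕ, p.Prime ∧ c + 3 = 2 * p ^ 2)) := by
  obtain ⟨n, hn, rfl⟩ := hc
  have hc3 : n ^ 2 - 1 + 3 = n ^ 2 + 2 := by have := Nat.one_le_pow 2 n hn; omega
  rw [exists_almostSquare_iff n hn, hc3]
  exact ⟨fun ⟨x, y, hx, hy, h⟩ => not_isExceptional_of_eq hx hy h,
    exists_eq_of_not_isExceptional⟩

theorem almostSquare_two_a_plus_b (c : ℕ) (hc : IsAlmostSquare c) (h3 : 3 ≤ c) :
    (∃ a b : ℕ, IsAlmostSquare a ∧ IsAlmostSquare b ∧ a < c ∧ b < c ∧ c = 2 * a + b)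
      ↔ ¬ (Nat.Prime (c + 3) ∨ (∃ p : ℕ, p.Prime ∧ c + 3 = 2 * p) ∨
            (∃ p : ℕ, p.Prime ∧ c + 3 = 2 * p ^ 2)) :=
  almostSquare_two_a_plus_b_general c hc
end

section
/- Every almost-square c ≥ 24 is the sum of at most three smaller almost-squares. -/
lemma helper3 (n p q s : ℕ) (hp : 1 ≤ p) (hq : 1 ≤ q) (hs : 1 ≤ s)
    (hpn : p < n) (hqn : q < n) (hsn : s < n)
    (key : p ^ 2 + q ^ 2 + s ^ 2 = n ^ 2 + 2) :
    (∃ a b : ℕ, IsAlmostSquare a ∧ IsAlmostSquare b ∧ a < n ^ 2 - 1 ∧ b < n ^ 2 - 1 ∧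
      n ^ 2 - 1 = a + b) ∨
    (∃ a b d : ℕ, IsAlmostSquare a ∧ IsAlmostSquare b ∧ IsAlmostSquare d ∧
      a < n ^ 2 - 1 ∧ b < n ^ 2 - 1 ∧ d < n ^ 2 - 1 ∧ n ^ 2 - 1 = a + b + d) := by
  right
  have hp2 : 1 ≤ p ^ 2 := Nat.one_le_pow _ _ hp
  have hq2 : 1 ≤ q ^ 2 := Nat.one_le_pow _ _ hq
  have hs2 : 1 ≤ s ^ 2 := Nat.one_le_pow _ _ hs
  have hpn2 : p ^ 2 < n ^ 2 := Nat.pow_lt_pow_left hpn (by norm_num)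
  have hqn2 : q ^ 2 < n ^ 2 := Nat.pow_lt_pow_left hqn (by norm_num)
  have hsn2 : s ^ 2 < n ^ 2 := Nat.pow_lt_pow_left hsn (by norm_num)
  exact ⟨p ^ 2 - 1, q ^ 2 - 1, s ^ 2 - 1, ⟨p, hp, rfl⟩, ⟨q, hq, rfl⟩, ⟨s, hs, rfl⟩,
    by omega, by omega, by omega, by omega⟩

theorem almostSquare_sum_of_at_most_three (c : ℕ) (hc : IsAlmostSquare c) (h24 : 24 ≤ c) :
    (∃ a b : ℕ, IsAlmostSquare a ∧ IsAlmostSquare b ∧ a < c ∧ b < c ∧ c = a + b) ∨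
    (∃ a b d : ℕ, IsAlmostSquare a ∧ IsAlmostSquare b ∧ IsAlmostSquare d ∧
      a < c ∧ b < c ∧ d < c ∧ c = a + b + d) := by
  obtain ⟨n, hn1, rfl⟩ := hc
  have hn5 : 5 ≤ n := by
    by_contra h
    interval_cases n <;> simp_all
  have hmod : n % 3 = 0 ∨ n % 3 = 1 ∨ n % 3 = 2 := by omega
  rcases hmod with h | h | h
  · -- n = 3j + 6
    obtain ⟨j, rfl⟩ : ∃ j, n = 3 * j + 6 := ⟨n / 3 - 2, by omega⟩
    exact helper3 _ (j + 2) (2 * j + 5) (2 * j + 3) (by omega) (by omega) (by omega)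
      (by omega) (by omega) (by omega) (by ring)
  · -- n = 3j + 7
    obtain ⟨j, rfl⟩ : ∃ j, n = 3 * j + 7 := ⟨n / 3 - 2, by omega⟩
    exact helper3 _ (j + 1) (2 * j + 5) (2 * j + 5) (by omega) (by omega) (by omega)
      (by omega) (by omega) (by omega) (by ring)
  · -- n = 3j + 5
    obtain ⟨j, rfl⟩ : ∃ j, n = 3 * j + 5 := ⟨n / 3 - 1, by omega⟩
    exact helper3 _ (j + 3) (2 * j + 3) (2 * j + 3) (by omega) (by omega) (by omega)
      (by omega) (by omega) (by omega) (by ring)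
end

section
/- Let t(n) = ⌊(n+1)²/4⌋ denote the n-th quarter-square. Every quarter-square c = t(n) with c > 1 can be written as c = 2a + b where a and b are quarter-squares strictly smaller than c. -/
def quarterSquare (n : ℕ) : ℕ := (n + 1) ^ 2 / 4

theorem quarterSquare_two_a_plus_b (n : ℕ) (h : 1 < quarterSquare n) :
    ∃ a b : ℕ, (∃ m, a = quarterSquare m) ∧ (∃ k, b = quarterSquare k) ∧
      a < quarterSquare n ∧ b < quarterSquare n ∧ quarterSquare n = 2 * a + b := by
  obtain ⟨j, r, hr, rfl⟩ : ∃ j r, r < 3 ∧ n = 3 * j + r :=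
    ⟨n / 3, n % 3, Nat.mod_lt _ (by norm_num), by omega⟩
  interval_cases r
  · -- n = 3j
    rcases j with _ | _ | i
    · simp [quarterSquare] at h
    · exact ⟨2, 0, ⟨2, rfl⟩, ⟨0, rfl⟩, by decide, by decide, by decide⟩
    · have e1 : (2 * (i + 2) + 1) ^ 2 = ((i + 2) * (i + 3)) * 4 + 1 := by ring
      have e2 : (3 * (i + 1 + 1) + 0 + 1) ^ 2 = (i + 1) ^ 2 + (2 * ((i + 2) * (i + 3))) * 4 := by
        ring
      have key : quarterSquare (3 * (i + 1 + 1) + 0) =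
          2 * quarterSquare (2 * (i + 2)) + quarterSquare i := by
        simp only [quarterSquare]; rw [e1, e2]; omega
      have hs1 : 0 < (i + 2) * (i + 3) := by positivity
      have ha : 1 ≤ quarterSquare (2 * (i + 2)) := by
        simp only [quarterSquare]; rw [e1]; omega
      exact ⟨_, _, ⟨_, rfl⟩, ⟨_, rfl⟩, by omega, by omega, key⟩
  · -- n = 3j + 1
    rcases j with _ | i
    · simp [quarterSquare] at h
    · have e1 : (2 * (i + 1) + 1) ^ 2 = ((i + 1) * (i + 2)) * 4 + 1 := by ring
      have e2 : (3 * (i + 1) + 1 + 1) ^ 2 = (i + 2 + 1) ^ 2 + (2 * ((i + 1) * (i + 2))) * 4 := by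
        ring
      have key : quarterSquare (3 * (i + 1) + 1) =
          2 * quarterSquare (2 * (i + 1)) + quarterSquare (i + 2) := by
        simp only [quarterSquare]; rw [e1, e2]; omega
      have hs1 : 0 < (i + 1) * (i + 2) := by positivity
      have ha : 1 ≤ quarterSquare (2 * (i + 1)) := by
        simp only [quarterSquare]; rw [e1]; omega
      exact ⟨_, _, ⟨_, rfl⟩, ⟨_, rfl⟩, by omega, by omega, key⟩
  · -- n = 3j + 2
    have e1 : (2 * j + 1 + 1) ^ 2 = ((j + 1) ^ 2) * 4 := by ring
    have e2 : (3 * j + 2 + 1) ^ 2 = (j + 1) ^ 2 + (2 * ((j + 1) ^ 2)) * 4 := by ring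
    have hs1 : 0 < (j + 1) ^ 2 := by positivity
    have key : quarterSquare (3 * j + 2) =
        2 * quarterSquare (2 * j + 1) + quarterSquare j := by
      simp only [quarterSquare]; rw [e1, e2]; omega
    have ha : 1 ≤ quarterSquare (2 * j + 1) := by
      simp only [quarterSquare]; rw [e1]; omega
    exact ⟨_, _, ⟨_, rfl⟩, ⟨_, rfl⟩, by omega, by omega, key⟩
end

section
/- For an odd prime p and integer e ≥ 1, the number of squares in ℤ/p^eℤ (including 0) equals p^e/2 - p^(e-1)/2 + (p^(e-1) - p^((e+1) mod 2))/(2(p+1)) + 1. -/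
/-!
The units of `ZMod (p ^ e)` form a cyclic group of even order `φ (p ^ e)`, so exactly half of
them are squares. A non-unit square is `(p * y) ^ 2 = p ^ 2 * y ^ 2`, and multiplication by `p ^ 2`
identifies the squares of `ZMod (p ^ (e - 2))` with these. Writing `S n` for the number of
squares in `ZMod n`, this gives `2 * S (p ^ (e + 2)) = φ (p ^ (e + 2)) + 2 * S (p ^ e)`, and
the formula follows by induction from `S 1 = 1` and `2 * S p = p + 1`.
-/

open Set
open scoped Nat

lemma IsCyclic.two_mul_card_range_powMonoidHom_two {G : Type*} [CommGroup G] [IsCyclic G]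
    [Finite G] (h : Even (Nat.card G)) :
    2 * Nat.card (powMonoidHom 2 : G →* G).range = Nat.card G := by
  have h2 := even_iff_two_dvd.mp h
  rw [IsCyclic.card_powMonoidHom_range, Nat.gcd_eq_right h2, Nat.mul_div_cancel' h2]

lemma range_sq_inter_isUnit (M : Type*) [CommMonoid M] :
    range (fun x : M => x ^ 2) ∩ {c | IsUnit c}
      = Units.val '' ((powMonoidHom 2 : Mˣ →* Mˣ).range : Set Mˣ) := by
  ext c
  simp only [mem_inter_iff, mem_range, mem_image, SetLike.mem_coe, MonoidHom.mem_range,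
    powMonoidHom_apply]
  constructor
  · rintro ⟨⟨x, rfl⟩, hc⟩
    have hx : IsUnit x := (isUnit_pow_iff two_ne_zero).mp hc
    exact ⟨hx.unit ^ 2, ⟨hx.unit, rfl⟩, by simp⟩
  · rintro ⟨_, ⟨u, rfl⟩, rfl⟩
    exact ⟨⟨u, by simp⟩, (u ^ 2).isUnit⟩

lemma ncard_range_sq_inter_isUnit (M : Type*) [CommMonoid M] :
    (range (fun x : M => x ^ 2) ∩ {c | IsUnit c}).ncard
      = Nat.card (powMonoidHom 2 : Mˣ →* Mˣ).range := by
  rw [range_sq_inter_isUnit, ncard_image_of_injective _ Units.val_injective,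
    ← Nat.card_coe_set_eq]
  rfl

namespace ZMod

lemma natCast_mul_cast_cast (a n : ℕ) [NeZero a] [NeZero n] (x : ZMod (a * n)) :
    (a : ZMod (a * n)) * ((x.cast : ZMod n).cast : ZMod (a * n)) = a * x := by
  rw [cast_eq_val (x.cast : ZMod n), cast_eq_val x, val_natCast, ← Nat.cast_mul,
    ← Nat.mul_mod_mul_left, natCast_mod, Nat.cast_mul, natCast_val, cast_id]

lemma val_natCast_mul_cast (a n : ℕ) [NeZero a] [NeZero n] (y : ZMod n) :
    ((a : ZMod (a * n)) * (y.cast : ZMod (a * n))).val = a * y.val := by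
  rw [cast_eq_val, ← Nat.cast_mul, val_natCast_of_lt]
  exact Nat.mul_lt_mul_of_pos_left y.val_lt (Nat.pos_of_ne_zero (NeZero.ne a))

lemma natCast_mul_cast_injective (a n : ℕ) [NeZero a] [NeZero n] :
    Function.Injective fun y : ZMod n => (a : ZMod (a * n)) * (y.cast : ZMod (a * n)) := by
  intro y y' h
  have := congrArg val h
  simp only [val_natCast_mul_cast] at this
  exact val_injective n (Nat.eq_of_mul_eq_mul_left (Nat.pos_of_ne_zero (NeZero.ne a)) this)

lemma ncard_range_natCast_mul_sq (a n : ℕ) [NeZero a] [NeZero n] :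
    (range fun y : ZMod (a * n) => (a : ZMod (a * n)) * y ^ 2).ncard
      = (range fun z : ZMod n => z ^ 2).ncard := by
  let π := castHom (dvd_mul_left n a) (ZMod n)
  have h : (fun y : ZMod (a * n) => (a : ZMod (a * n)) * y ^ 2)
      = (fun z : ZMod n => (a : ZMod (a * n)) * (z.cast : ZMod (a * n))) ∘ (· ^ 2) ∘ π := by
    funext y
    rw [Function.comp_apply, Function.comp_apply, ← map_pow, castHom_apply,
      natCast_mul_cast_cast]
  rw [h, range_comp, range_comp, (ringHom_surjective π).range_eq, image_univ,
    ncard_image_of_injective _ (natCast_mul_cast_injective a n)]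

variable {p k : ℕ} (hp : p.Prime)
include hp

lemma not_isUnit_prime_pow_iff (hk : k ≠ 0) (x : ZMod (p ^ k)) :
    ¬IsUnit x ↔ ∃ y, x = p * y := by
  have : NeZero (p ^ k) := ⟨pow_ne_zero k hp.ne_zero⟩
  constructor
  · intro hx
    rw [← natCast_zmod_val x, isUnit_iff_coprime,
      Nat.coprime_pow_right_iff (Nat.pos_of_ne_zero hk), Nat.coprime_comm,
      hp.coprime_iff_not_dvd, not_not] at hx
    obtain ⟨t, ht⟩ := hx
    exact ⟨t, by rw [← natCast_zmod_val x, ht, Nat.cast_mul]⟩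
  · rintro ⟨y, rfl⟩ hx
    have hpu := isUnit_of_mul_isUnit_left hx
    rw [isUnit_iff_coprime, Nat.coprime_pow_right_iff (Nat.pos_of_ne_zero hk),
      Nat.coprime_self] at hpu
    exact hp.ne_one hpu

lemma range_sq_diff_isUnit_prime_pow (hk : k ≠ 0) :
    range (fun x : ZMod (p ^ k) => x ^ 2) \ {c | IsUnit c}
      = range fun y : ZMod (p ^ k) => ((p ^ 2 : ℕ) : ZMod (p ^ k)) * y ^ 2 := by
  ext c
  simp only [mem_sdiff, mem_range, mem_ofPred_eq]
  constructor
  · rintro ⟨⟨x, rfl⟩, hc⟩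
    obtain ⟨y, rfl⟩ := (not_isUnit_prime_pow_iff hp hk x).mp
      (mt (isUnit_pow_iff two_ne_zero).mpr hc)
    exact ⟨y, by push_cast; ring⟩
  · rintro ⟨y, rfl⟩
    rw [show ((p ^ 2 : ℕ) : ZMod (p ^ k)) * y ^ 2 = (p * y) ^ 2 by push_cast; ring,
      isUnit_pow_iff two_ne_zero, not_isUnit_prime_pow_iff hp hk]
    exact ⟨⟨p * y, rfl⟩, y, rfl⟩

lemma two_mul_ncard_range_sq_prime_pow (hodd : Odd p) (hk : k ≠ 0) :
    2 * (range fun x : ZMod (p ^ k) => x ^ 2).ncard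
      = φ (p ^ k)
        + 2 * (range fun y : ZMod (p ^ k) => ((p ^ 2 : ℕ) : ZMod (p ^ k)) * y ^ 2).ncard := by
  have : NeZero (p ^ k) := ⟨pow_ne_zero k hp.ne_zero⟩
  have hp2 : p ≠ 2 := hodd.ne_two_of_dvd_nat dvd_rfl
  have : IsCyclic (ZMod (p ^ k))ˣ := isCyclic_units_of_prime_pow p hp hp2 k
  have hcard : Nat.card (ZMod (p ^ k))ˣ = φ (p ^ k) := by
    rw [Nat.card_eq_fintype_card, card_units_eq_totient]
  have h2 : 2 < p ^ k := (hp.two_le.lt_of_ne' hp2).trans_le (Nat.le_self_pow hk p)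
  rw [← ncard_inter_add_ncard_sdiff_eq_ncard _ {c | IsUnit c},
    range_sq_diff_isUnit_prime_pow hp hk, ncard_range_sq_inter_isUnit, mul_add,
    IsCyclic.two_mul_card_range_powMonoidHom_two (hcard ▸ Nat.totient_even h2), hcard]

lemma two_mul_ncard_range_sq_prime (hodd : Odd p) :
    2 * (range fun x : ZMod p => x ^ 2).ncard = p + 1 := by
  have h := two_mul_ncard_range_sq_prime_pow hp hodd one_ne_zero
  rw [pow_one] at h
  simp only [Nat.cast_pow, natCast_self, zero_pow two_ne_zero, zero_mul, range_const,
    ncard_singleton, Nat.totient_prime hp] at h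
  have := hp.one_le
  omega

lemma two_mul_ncard_range_sq_prime_pow_add_two (hodd : Odd p) (m : ℕ) :
    2 * (range fun x : ZMod (p ^ (m + 2)) => x ^ 2).ncard
      = φ (p ^ (m + 2)) + 2 * (range fun x : ZMod (p ^ m) => x ^ 2).ncard := by
  have : NeZero (p ^ m) := ⟨pow_ne_zero m hp.ne_zero⟩
  have : NeZero (p ^ 2) := ⟨pow_ne_zero 2 hp.ne_zero⟩
  have h := two_mul_ncard_range_sq_prime_pow hp hodd (k := m + 2) (by omega)
  rw [show p ^ (m + 2) = p ^ 2 * p ^ m by ring] at h ⊢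
  rwa [ncard_range_natCast_mul_sq] at h

lemma ncard_range_sq_prime_pow_succ (hodd : Odd p) (k : ℕ) :
    ((range fun x : ZMod (p ^ (k + 1)) => x ^ 2).ncard : ℚ)
      = ((p : ℚ) ^ (k + 1) - p ^ k) / 2 + ((p : ℚ) ^ k - p ^ (k % 2)) / (2 * (p + 1)) + 1 := by
  induction k using Nat.twoStepInduction with
  | zero =>
    have h : (2 * (range fun x : ZMod p => x ^ 2).ncard : ℚ) = p + 1 := by
      exact_mod_cast two_mul_ncard_range_sq_prime hp hodd
    rw [zero_add, pow_one]
    norm_num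
    linarith
  | one =>
    have h := two_mul_ncard_range_sq_prime_pow_add_two hp hodd 0
    have h1 : (range fun x : ZMod 1 => x ^ 2).ncard = 1 := by
      simpa using ⟨(0 : ZMod 1), fun _ => Subsingleton.elim _ _⟩
    rw [show 0 + 2 = 1 + 1 from rfl, Nat.totient_prime_pow_succ hp, pow_zero, h1] at h
    have hq := congrArg (Nat.cast : ℕ → ℚ) h
    push_cast [Nat.cast_sub hp.one_le] at hq
    norm_num
    linear_combination hq / 2
  | more k ih _ =>
    have h := two_mul_ncard_range_sq_prime_pow_add_two hp hodd (k + 1)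
    rw [show k + 1 + 2 = k + 2 + 1 by ring, Nat.totient_prime_pow_succ hp] at h
    have hq := congrArg (Nat.cast : ℕ → ℚ) h
    push_cast [Nat.cast_sub hp.one_le] at hq
    rw [ih] at hq
    rw [Nat.add_mod_right]
    have key : ((p : ℚ) ^ (k + 2) - p ^ (k % 2)) / (2 * (p + 1))
        = ((p : ℚ) ^ k - p ^ (k % 2)) / (2 * (p + 1)) + ((p : ℚ) ^ (k + 1) - p ^ k) / 2 := by
      field_simp
      ring
    rw [key]
    linear_combination hq / 2

end ZMod

theorem count_squares_mod_odd_prime_power (p e : ℕ) (hp : p.Prime) (hodd : Odd p)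
    (he : 1 ≤ e) :
    (Nat.card {c : ZMod (p ^ e) // ∃ x : ZMod (p ^ e), x ^ 2 = c} : ℚ)
      = (p : ℚ) ^ e / 2 - (p : ℚ) ^ (e - 1) / 2
        + ((p : ℚ) ^ (e - 1) - (p : ℚ) ^ ((e + 1) % 2)) / (2 * ((p : ℚ) + 1)) + 1 := by
  obtain ⟨k, rfl⟩ : ∃ k, e = k + 1 := ⟨e - 1, by omega⟩
  rw [show Nat.card {c : ZMod (p ^ (k + 1)) // ∃ x : ZMod (p ^ (k + 1)), x ^ 2 = c}
    = (range fun x : ZMod (p ^ (k + 1)) => x ^ 2).ncard from Nat.card_coe_set_eq _,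
    ZMod.ncard_range_sq_prime_pow_succ hp hodd, Nat.add_sub_cancel,
    show (k + 1 + 1) % 2 = k % 2 by omega]
  ring
end

section
/- For every e ≥ 1, the map x ↦ x(3x-1)/2 induces a bijection on ℤ/3^eℤ (where division by 2 denotes multiplication by the inverse of 2 modulo 3^e). -/
/-! Modulo a power of 3 the number 3 is nilpotent, so for any x, y the factor 3(x + y) - 1 in
x(3x - 1) - y(3y - 1) = (x - y)(3(x + y) - 1) is a unit. Hence x ↦ x(3x - 1) is injective, and
on a finite ring bijective; multiplying by the unit 2⁻¹ keeps it so. -/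

theorem injective_mul_three_mul_sub_one {R : Type*} [CommRing R] (h3 : IsNilpotent (3 : R)) :
    Function.Injective fun x : R => x * (3 * x - 1) := by
  intro x y hxy
  have hunit : IsUnit (3 * (x + y) - 1) :=
    ((Commute.all _ _).isNilpotent_mul_right h3).isUnit_sub_one
  have hfactor : (x - y) * (3 * (x + y) - 1) = 0 := by linear_combination hxy
  exact sub_eq_zero.mp (hunit.mul_left_eq_zero.mp hfactor)

theorem ZMod.isNilpotent_three_pow (e : ℕ) : IsNilpotent (3 : ZMod (3 ^ e)) :=
  ⟨e, by exact_mod_cast ZMod.natCast_self (3 ^ e)⟩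

theorem ZMod.isUnit_inv_two_three_pow (e : ℕ) : IsUnit (2 : ZMod (3 ^ e))⁻¹ := by
  have h2 : IsUnit (2 : ZMod (3 ^ e)) := by
    exact_mod_cast (ZMod.isUnit_iff_coprime 2 (3 ^ e)).mpr (Nat.Coprime.pow_right e (by norm_num))
  exact .of_mul_eq_one _ (ZMod.inv_mul_of_unit _ h2)

theorem pentagonal_map_bijective_mod_three_pow_general (e : ℕ) :
    Function.Bijective (fun x : ZMod (3 ^ e) => x * (3 * x - 1) * (2 : ZMod (3 ^ e))⁻¹) :=
  Finite.injective_iff_bijective.mp <|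
    (ZMod.isUnit_inv_two_three_pow e).mul_left_injective.comp
      (injective_mul_three_mul_sub_one (ZMod.isNilpotent_three_pow e))

theorem pentagonal_map_bijective_mod_three_pow (e : ℕ) (he : 1 ≤ e) :
    Function.Bijective (fun x : ZMod (3 ^ e) => x * (3 * x - 1) * (2 : ZMod (3 ^ e))⁻¹) :=
  pentagonal_map_bijective_mod_three_pow_general e
end
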